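/- arXiv:1703.03381 — 8 statements merged into one kernel-verified Lean document; each statement's English description precedes it below -/
import Mathlib

section
/- Suppose that for i = 1, …, k we have a_i ∈ ℕ and b_i ∈ ℤ. Then there exist positive integers m and ℓ such that the following holds for every tuple c = (c_1, …, c_k) ∈ ℂ^k and every real number q ≥ 2: if the function h : ℕ → ℂ, h(w) = ∑_{i=1}^k c_i · w^{a_i} · q^{b_i·w}, is bounded on ℕ, then sup_{w ∈ ℕ} |h(w)| ≤ m · max_{0 ≤ w ≤ ℓ} |h(w)|. -/
open Polynomial in
noncomputable def RepL (q : ℝ) : List (ℤ × ℕ) → (ℕ → ℂ) → Prop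
  | [], h => ∀ w, h w = 0
  | e :: L, h => ∃ p : ℂ[X], p.degree < (e.2 : ℕ∞) ∧ ∃ g, RepL q L g ∧
      ∀ w : ℕ, h w = p.eval (w : ℂ) * ((q ^ (e.1 * (w : ℤ)) : ℝ) : ℂ) + g w

open Polynomial

lemma deg_taylor_sub {p : ℂ[X]} {d : ℕ} (hp : p.degree < ((d+1 : ℕ) : ℕ∞)) :
    (taylor 1 p - p).degree < (d : ℕ∞) := by
  rcases eq_or_ne p.natDegree 0 with h0 | h0
  · obtain ⟨c, rfl⟩ := natDegree_eq_zero.mp h0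
    simp [taylor_C]
    exact WithBot.bot_lt_coe d
  · have hpne : p ≠ 0 := fun h => h0 (by simp [h])
    have htne : taylor 1 p ≠ 0 := by
      intro h
      exact hpne (taylor_injective 1 (by simpa using h))
    have hdeq : (taylor 1 p).degree = p.degree := by
      rw [degree_eq_natDegree htne, degree_eq_natDegree hpne, natDegree_taylor]
    have hlc : (taylor 1 p).leadingCoeff = p.leadingCoeff := by
      rw [taylor_apply,
        leadingCoeff_comp (by rw [natDegree_X_add_C]; exact one_ne_zero),
        leadingCoeff_X_add_C, one_pow, mul_one]
    have hlt : (taylor 1 p - p).degree < p.degree :=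
      hdeq ▸ degree_sub_lt hdeq htne hlc
    refine lt_of_lt_of_le hlt ?_
    rw [degree_eq_natDegree hpne] at hp ⊢
    exact Nat.cast_le.mpr (Nat.lt_succ_iff.mp (Nat.cast_lt.mp hp))

lemma repL_shift {q : ℝ} (hq : 0 < q) (y z : ℂ) :
    ∀ L g, RepL q L g → RepL q L (fun w => y * g (w+1) - z * g w) := by
  intro L
  induction L with
  | nil =>
    intro g hg w
    have hg' : ∀ w, g w = 0 := hg
    simp [hg']
  | cons e L ih =>
    rintro g ⟨p, hpd, g', hg', hrep⟩
    refine ⟨(y * ((q ^ e.1 : ℝ) : ℂ)) • taylor 1 p - z • p, ?_, fun w => y * g' (w+1) - z * g' w,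
      ih g' hg', ?_⟩
    · apply lt_of_le_of_lt (degree_sub_le _ _)
      apply max_lt
      · apply lt_of_le_of_lt (degree_smul_le _ _)
        calc (taylor 1 p).degree ≤ p.degree := by
              rcases eq_or_ne p 0 with rfl | hp
              · simp
              · have htne : taylor 1 p ≠ 0 := fun h => hp (taylor_injective 1 (by simpa using h))
                rw [degree_eq_natDegree htne, degree_eq_natDegree hp, natDegree_taylor]
          _ < ((e.2 : ℕ) : WithBot ℕ) := hpd
      · exact lt_of_le_of_lt (degree_smul_le _ _) hpd
    · intro w
      have hz : (q : ℝ) ≠ 0 := ne_of_gt hq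
      have hqp : (q ^ (e.1 * (((w+1 : ℕ)) : ℤ)) : ℝ) = (q ^ e.1 : ℝ) * q ^ (e.1 * (w : ℤ)) := by
        push_cast
        rw [mul_add, mul_one, zpow_add₀ hz, mul_comm]
      have h1 := hrep (w + 1)
      rw [hqp] at h1
      show y * g (w+1) - z * g w = _
      rw [h1, hrep w]
      have hcast : (((w+1 : ℕ)) : ℂ) = (w : ℂ) + 1 := by push_cast; ring
      rw [hcast]
      simp only [eval_sub, eval_smul, taylor_eval, smul_eq_mul, Complex.ofReal_mul]
      ring

lemma repL_head {q : ℝ} (hq : 0 < q) {b : ℤ} {d : ℕ} {L : List (ℤ × ℕ)} {h : ℕ → ℂ}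
    (y z : ℂ) (hyz : y * ((q ^ b : ℝ) : ℂ) = z)
    (hrep : RepL q ((b, d+1) :: L) h) :
    RepL q ((b, d) :: L) (fun w => y * h (w+1) - z * h w) := by
  obtain ⟨p, hpd, g, hg, heq⟩ := hrep
  refine ⟨z • (taylor 1 p - p), ?_, fun w => y * g (w+1) - z * g w, repL_shift hq y z L g hg, ?_⟩
  · exact lt_of_le_of_lt (degree_smul_le _ _) (deg_taylor_sub hpd)
  · intro w
    have hz : (q : ℝ) ≠ 0 := ne_of_gt hq
    have hqp : (q ^ (b * (((w+1 : ℕ)) : ℤ)) : ℝ) = (q ^ b : ℝ) * q ^ (b * (w : ℤ)) := by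
      push_cast
      rw [mul_add, mul_one, zpow_add₀ hz, mul_comm]
    have h1 := heq (w + 1)
    rw [hqp] at h1
    show y * h (w+1) - z * h w = _
    rw [h1, heq w]
    have hcast : (((w+1 : ℕ)) : ℂ) = (w : ℂ) + 1 := by push_cast; ring
    rw [hcast]
    simp only [eval_sub, eval_smul, taylor_eval, smul_eq_mul, Complex.ofReal_mul]
    rw [← hyz]
    ring

noncomputable def Hm (h : ℕ → ℂ) (ℓ : ℕ) : ℝ :=
  (Finset.range (ℓ+1)).sup' (by simp) (fun w => ‖h w‖)

lemma abs_le_Hm {h : ℕ → ℂ} {ℓ w : ℕ} (hw : w ≤ ℓ) : ‖h w‖ ≤ Hm h ℓ := by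
  unfold Hm
  exact Finset.le_sup' (fun w => ‖h w‖) (Finset.mem_range.mpr (Nat.lt_succ_of_le hw))

lemma Hm_nonneg (h : ℕ → ℂ) (ℓ : ℕ) : 0 ≤ Hm h ℓ :=
  le_trans (norm_nonneg (h 0)) (abs_le_Hm (Nat.zero_le _))

lemma Hm_mono {h : ℕ → ℂ} {ℓ ℓ' : ℕ} (hl : ℓ ≤ ℓ') : Hm h ℓ ≤ Hm h ℓ' := by
  apply Finset.sup'_le
  intro w hw
  exact abs_le_Hm (Nat.lt_succ_iff.mp (Finset.mem_range.mp hw) |>.trans hl)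

lemma Hm_congr {h g : ℕ → ℂ} (hhg : ∀ w, h w = g w) (ℓ : ℕ) : Hm h ℓ = Hm g ℓ := by
  unfold Hm
  congr 1
  ext w
  rw [hhg]

/-- small-root recursion bound -/
lemma rec_bound_small {x : ℝ} (hx0 : 0 ≤ x) (hx : x ≤ 1/2) {u e : ℕ → ℂ} {K : ℝ}
    (hK : 0 ≤ K)
    (hrec : ∀ w, u (w+1) = x * u w + e w)
    (he : ∀ w, ‖e w‖ ≤ K * (3/4 : ℝ)^w) :
    ∀ w, ‖u w‖ ≤ (‖u 0‖ + 4*K) * (3/4 : ℝ)^w := by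
  intro w
  induction w with
  | zero => simp; nlinarith [norm_nonneg (u 0)]
  | succ w ih =>
    rw [hrec w]
    calc ‖(x : ℂ) * u w + e w‖
        ≤ ‖(x:ℂ) * u w‖ + ‖e w‖ := norm_add_le _ _
      _ ≤ x * ((‖u 0‖ + 4*K) * (3/4)^w) + K * (3/4)^w := by
          rw [norm_mul, Complex.norm_real, Real.norm_eq_abs, abs_of_nonneg hx0]
          linarith [mul_le_mul_of_nonneg_left ih hx0, he w]
      _ ≤ (‖u 0‖ + 4*K) * (3/4)^(w+1) := by
          have h1 : (0:ℝ) ≤ (3/4:ℝ)^w := by positivity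
          have h2 := norm_nonneg (u 0)
          rw [pow_succ]
          nlinarith [mul_nonneg h2 h1, mul_nonneg hK h1]

open Filter Topology in
/-- big-root recursion bound -/
lemma rec_bound_big {x : ℝ} (hx : 2 ≤ x) {u e : ℕ → ℂ} {K C : ℝ} (hK : 0 ≤ K)
    (hb : ∀ w, ‖u w‖ ≤ C)
    (hrec : ∀ w, u (w+1) = x * (u w + e w))
    (he : ∀ w, ‖e w‖ ≤ K * (3/4 : ℝ)^w) :
    ∀ w, ‖u w‖ ≤ 2*K * (3/4 : ℝ)^w := by
  have hC : 0 ≤ C := le_trans (norm_nonneg _) (hb 0)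
  have hx0 : (0:ℝ) < x := by linarith
  have hxc : ((x:ℝ) : ℂ) ≠ 0 := by
    simpa using ne_of_gt hx0
  have hxinv : x⁻¹ ≤ 1/2 := by
    rw [inv_le_comm₀ (by linarith) (by norm_num)]
    linarith
  have hxinv0 : 0 ≤ x⁻¹ := by positivity
  have key : ∀ t w, ‖u w‖ ≤ (1/2:ℝ)^t * C + 2*K*(3/4:ℝ)^w := by
    intro t
    induction t with
    | zero =>
      intro w
      have : (0:ℝ) ≤ 2*K*(3/4:ℝ)^w := by positivity
      simpa using le_trans (hb w) (by linarith)
    | succ t ih =>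
      intro w
      have hu : u w = (x⁻¹ : ℝ) * u (w+1) - e w := by
        have := hrec w
        field_simp [hxc] at this ⊢
        rw [this]; push_cast; field_simp; ring
      rw [hu]
      calc ‖(x⁻¹ : ℝ) * u (w+1) - e w‖
          ≤ ‖((x⁻¹:ℝ) : ℂ) * u (w+1)‖ + ‖e w‖ :=
            norm_sub_le _ _
        _ ≤ x⁻¹ * ((1/2)^t * C + 2*K*(3/4)^(w+1)) + K * (3/4)^w := by
            rw [norm_mul, Complex.norm_real, Real.norm_eq_abs, abs_of_nonneg hxinv0]
            have := mul_le_mul_of_nonneg_left (ih (w+1)) hxinv0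
            linarith [he w]
        _ ≤ (1/2) * ((1/2)^t * C + 2*K*(3/4)^(w+1)) + K * (3/4)^w := by
            have hA : (0:ℝ) ≤ (1/2:ℝ)^t * C + 2*K*(3/4:ℝ)^(w+1) := by positivity
            linarith [mul_le_mul_of_nonneg_right hxinv hA]
        _ = (1/2)^(t+1) * C + K*(3/4)^(w+1) + K * (3/4)^w := by ring
        _ ≤ (1/2)^(t+1) * C + 2*K*(3/4)^w := by
            have hp : (3/4:ℝ)^(w+1) ≤ (3/4:ℝ)^w :=
              pow_le_pow_of_le_one (by norm_num) (by norm_num) (Nat.le_succ w)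
            nlinarith [mul_le_mul_of_nonneg_left hp hK]
  intro w
  have hlim : Tendsto (fun t : ℕ => (1/2:ℝ)^t * C + 2*K*(3/4:ℝ)^w) atTop
      (𝓝 (0 * C + 2*K*(3/4:ℝ)^w)) := by
    exact ((tendsto_pow_atTop_nhds_zero_of_lt_one (by norm_num) (by norm_num)).mul_const C).add_const _
  have := ge_of_tendsto hlim (Filter.Eventually.of_forall (fun t => key t w))
  linarith

lemma geom_sum_34 (K : ℝ) (hK : 0 ≤ K) (w : ℕ) :
    ∑ j ∈ Finset.range w, K * (3/4:ℝ)^j ≤ 4*K := by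
  have hs : Summable (fun j : ℕ => (3/4:ℝ)^j) :=
    summable_geometric_of_lt_one (by norm_num) (by norm_num)
  have h1 : ∑ j ∈ Finset.range w, (3/4:ℝ)^j ≤ ∑' j : ℕ, (3/4:ℝ)^j :=
    Summable.sum_le_tsum _ (fun i _ => by positivity) hs
  rw [tsum_geometric_of_lt_one (by norm_num) (by norm_num)] at h1
  norm_num at h1
  rw [← Finset.mul_sum]
  nlinarith

lemma sum_bound_one {h ht : ℕ → ℂ} {γt : ℂ} {K C : ℝ} (hK : 0 ≤ K)
    (hb : ∀ w, ‖h w‖ ≤ C)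
    (hrec : ∀ w, ht w = h (w+1) - h w)
    (he : ∀ w, ‖ht w - γt‖ ≤ K * (3/4:ℝ)^w) :
    ∃ γ : ℂ, ∀ w, ‖h w - γ‖ ≤ 4*K * (3/4:ℝ)^w := by
  have hsub : ∀ w, ∑ j ∈ Finset.range w, ht j = h w - h 0 := by
    intro w
    rw [← Finset.sum_range_sub h w]
    exact Finset.sum_congr rfl (fun j _ => hrec j)
  have hC : 0 ≤ C := le_trans (norm_nonneg _) (hb 0)
  have habs_sum : ∀ w, ‖∑ j ∈ Finset.range w, (ht j - γt)‖ ≤ 4*K := by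
    intro w
    refine le_trans (norm_sum_le _ _) ?_
    refine le_trans (Finset.sum_le_sum (fun j _ => he j)) (geom_sum_34 K hK w)
  have hwbound : ∀ w : ℕ, (w:ℝ) * ‖γt‖ ≤ 2*C + 4*K := by
    intro w
    have h1 : (w:ℂ) * γt = (h w - h 0) - ∑ j ∈ Finset.range w, (ht j - γt) := by
      rw [Finset.sum_sub_distrib, hsub w, Finset.sum_const, Finset.card_range]
      simp [nsmul_eq_mul]
    calc (w:ℝ) * ‖γt‖ = ‖(w:ℂ) * γt‖ := by
          rw [norm_mul]; simp
      _ = ‖(h w - h 0) - ∑ j ∈ Finset.range w, (ht j - γt)‖ := by rw [h1]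
      _ ≤ ‖h w - h 0‖ + ‖∑ j ∈ Finset.range w, (ht j - γt)‖ :=
          norm_sub_le _ _
      _ ≤ (‖h w‖ + ‖h 0‖) + 4*K :=
          add_le_add (norm_sub_le _ _) (habs_sum w)
      _ ≤ 2*C + 4*K := by linarith [hb w, hb 0]
  have hγt : γt = 0 := by
    by_contra hne
    have hpos : 0 < ‖γt‖ := norm_pos_iff.mpr hne
    obtain ⟨n, hn⟩ := exists_nat_gt ((2*C + 4*K)/‖γt‖)
    rw [div_lt_iff₀ hpos] at hn
    linarith [hwbound n]
  have he' : ∀ w, ‖ht w‖ ≤ K * (3/4:ℝ)^w := by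
    intro w
    have := he w
    rwa [hγt, sub_zero] at this
  have hgeo : Summable (fun j : ℕ => K * (3/4:ℝ)^j) :=
    (summable_geometric_of_lt_one (by norm_num) (by norm_num)).mul_left K
  have hnorm : Summable (fun w => ‖ht w‖) := by
    apply Summable.of_nonneg_of_le (fun w => norm_nonneg _) (fun w => ?_) hgeo
    exact he' w
  have hsum : Summable ht := Summable.of_norm hnorm
  refine ⟨h 0 + ∑' j, ht j, fun w => ?_⟩
  have hsplit := Summable.sum_add_tsum_nat_add w hsum
  have heq : h w - (h 0 + ∑' j, ht j) = -∑' i, ht (i+w) := by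
    rw [← hsplit, hsub w]; ring
  rw [heq, norm_neg]
  have hnormtail : Summable (fun i => ‖ht (i+w)‖) := by
    exact (summable_nat_add_iff w).mpr hnorm
  calc ‖∑' i, ht (i+w)‖ ≤ ∑' i, ‖ht (i+w)‖ := by
        exact norm_tsum_le_tsum_norm hnormtail
    _ ≤ ∑' i : ℕ, K*(3/4:ℝ)^(i+w) := by
        apply Summable.tsum_le_tsum _ hnormtail ((summable_nat_add_iff w).mpr hgeo)
        intro i
        exact he' (i+w)
    _ = (K*(3/4:ℝ)^w) * ∑' i : ℕ, (3/4:ℝ)^i := by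
        rw [← tsum_mul_left]
        apply tsum_congr
        intro i
        rw [pow_add]
        ring
    _ = 4*K*(3/4:ℝ)^w := by
        rw [tsum_geometric_of_lt_one (by norm_num) (by norm_num)]
        norm_num
        ring

lemma repL_congr {q : ℝ} {L : List (ℤ × ℕ)} {h g : ℕ → ℂ} (e : ∀ w, h w = g w) :
    RepL q L h → RepL q L g := by
  cases L with
  | nil => intro H w; rw [← e]; exact H w
  | cons hd tl =>
    rintro ⟨p, hp, g', hg', hw⟩
    exact ⟨p, hp, g', hg', fun w => by rw [← e w]; exact hw w⟩

lemma zpow_le_half {q : ℝ} (hq : 2 ≤ q) {b : ℤ} (hb : b < 0) : q ^ b ≤ 1/2 := by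
  have hq1 : (1:ℝ) ≤ q := by linarith
  have h1 : q ^ b ≤ q ^ (-1 : ℤ) := zpow_le_zpow_right₀ hq1 (by omega)
  have h2 : q ^ (-1 : ℤ) = q⁻¹ := zpow_neg_one q
  have : q⁻¹ ≤ 1/2 := by
    rw [inv_le_comm₀ (by linarith) (by norm_num)]
    linarith
  linarith [h1, h2 ▸ h1]

lemma two_le_zpow {q : ℝ} (hq : 2 ≤ q) {b : ℤ} (hb : 0 < b) : 2 ≤ q ^ b := by
  have hq1 : (1:ℝ) ≤ q := by linarith
  have h1 : q ^ (1 : ℤ) ≤ q ^ b := zpow_le_zpow_right₀ hq1 (by omega)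
  rw [zpow_one] at h1
  linarith

set_option maxHeartbeats 2000000 in
lemma mainL : ∀ (n : ℕ) (L : List (ℤ × ℕ)), (L.map Prod.snd).sum + L.length ≤ n →
    ∃ m ℓ : ℕ, 0 < m ∧ 0 < ℓ ∧ ∀ q : ℝ, 2 ≤ q → ∀ h : ℕ → ℂ, RepL q L h →
      (∃ C, ∀ w, ‖h w‖ ≤ C) →
      ∃ γ : ℂ, ∀ w : ℕ, ‖h w - γ‖ ≤ (m : ℝ) * Hm h ℓ * (3/4 : ℝ) ^ w := by
  intro n
  induction n with
  | zero =>
    intro L hL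
    have hL0 : L = [] := by
      cases L with
      | nil => rfl
      | cons hd tl => simp at hL
    subst hL0
    refine ⟨1, 1, by norm_num, by norm_num, fun q hq h hrep _ => ⟨0, fun w => ?_⟩⟩
    rw [hrep w]
    simp only [sub_zero, norm_zero]
    have := Hm_nonneg h 1
    positivity
  | succ n ih =>
    intro L hL
    match L with
    | [] =>
      refine ⟨1, 1, by norm_num, by norm_num, fun q hq h hrep _ => ⟨0, fun w => ?_⟩⟩
      rw [hrep w]
      simp only [sub_zero, norm_zero]
      have := Hm_nonneg h 1
      positivity
    | (b, 0) :: L' =>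
      have hmeas : (L'.map Prod.snd).sum + L'.length ≤ n := by
        simp at hL; omega
      obtain ⟨m, ℓ, hm, hℓ, hforall⟩ := ih L' hmeas
      refine ⟨m, ℓ, hm, hℓ, ?_⟩
      intro q hq h hrep hbd
      obtain ⟨p, hpd, g, hg, heq⟩ := hrep
      have hp0 : p = 0 := by
        rw [← Polynomial.degree_eq_bot]
        exact Nat.WithBot.lt_zero_iff.mp (by exact_mod_cast hpd)
      have hhg : ∀ w, h w = g w := by
        intro w
        rw [heq w, hp0]
        simp
      obtain ⟨γ, hγ⟩ := hforall q hq g hg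
        ⟨hbd.choose, fun w => (hhg w) ▸ hbd.choose_spec w⟩
      refine ⟨γ, fun w => ?_⟩
      rw [hhg w, Hm_congr hhg ℓ]
      exact hγ w
    | (b, d+1) :: L' =>
      have hmeas : (((b, d) :: L').map Prod.snd).sum + ((b, d) :: L').length ≤ n := by
        simp at hL ⊢; omega
      obtain ⟨m', ℓ', hm', hℓ', hforall⟩ := ih ((b, d) :: L') hmeas
      refine ⟨12*m' + 5, ℓ' + 1, by omega, by omega, ?_⟩
      intro q hq h hrep hbd
      obtain ⟨C, hC⟩ := hbd
      have hq0 : (0:ℝ) < q := by linarith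
      have hC0 : 0 ≤ C := le_trans (norm_nonneg _) (hC 0)
      set x : ℝ := q ^ b with hxdef
      have hx0 : 0 < x := zpow_pos hq0 b
      set H : ℝ := Hm h (ℓ' + 1) with hHdef
      have hH0 : 0 ≤ H := Hm_nonneg h (ℓ'+1)
      rcases lt_trichotomy b 0 with hb | hb | hb
      · -- small root: x ≤ 1/2
        have hxle : x ≤ 1/2 := zpow_le_half hq hb
        set ht : ℕ → ℂ := fun w => h (w+1) - (x : ℂ) * h w with htdef
        have hrepH : RepL q ((b, d) :: L') ht := by
          apply repL_congr (h := fun w => 1 * h (w+1) - (x:ℂ) * h w)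
          · intro w; simp [htdef]
          · exact repL_head hq0 1 (x:ℂ) (one_mul _) hrep
        have htbd : ∀ w, ‖ht w‖ ≤ C + x * C := by
          intro w
          calc ‖ht w‖ ≤ ‖h (w+1)‖ + ‖(x:ℂ) * h w‖ :=
                norm_sub_le _ _
            _ ≤ C + x * C := by
                rw [norm_mul, Complex.norm_real, Real.norm_eq_abs, abs_of_nonneg (le_of_lt hx0)]
                have := mul_le_mul_of_nonneg_left (hC w) (le_of_lt hx0)
                linarith [hC (w+1)]
        obtain ⟨γt, hγt⟩ := hforall q hq ht hrepH ⟨C + x * C, htbd⟩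
        set K : ℝ := m' * Hm ht ℓ' with hKdef
        have hK0 : 0 ≤ K := mul_nonneg (Nat.cast_nonneg _) (Hm_nonneg _ _)
        have hKH : K ≤ 2 * m' * H := by
          have : Hm ht ℓ' ≤ 2 * H := by
            apply Finset.sup'_le
            intro w hw
            have hwl : w ≤ ℓ' := Nat.lt_succ_iff.mp (Finset.mem_range.mp hw)
            calc ‖ht w‖
                ≤ ‖h (w+1)‖ + ‖(x:ℂ) * h w‖ :=
                  norm_sub_le _ _
              _ ≤ H + 1 * H := by
                  rw [norm_mul, Complex.norm_real, Real.norm_eq_abs, abs_of_nonneg (le_of_lt hx0)]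
                  have h1 : ‖h (w+1)‖ ≤ H := abs_le_Hm (by omega)
                  have h2 : ‖h w‖ ≤ H := abs_le_Hm (by omega)
                  nlinarith
              _ = 2 * H := by ring
          calc K ≤ m' * (2 * H) := by
                apply mul_le_mul_of_nonneg_left this (Nat.cast_nonneg _)
            _ = 2 * m' * H := by ring
        have hxne : (1 : ℂ) - (x:ℂ) ≠ 0 := by
          have : ((1 - x : ℝ) : ℂ) ≠ 0 := by
            simp only [ne_eq, Complex.ofReal_eq_zero]
            intro hh; rw [sub_eq_zero] at hh; linarith
          push_cast at this
          convert this using 1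
        set γ : ℂ := γt / (1 - (x:ℂ)) with hγdef
        have hγrec : γt = γ - (x:ℂ) * γ := by
          field_simp [hγdef]
          rw [hγdef]; field_simp
        refine ⟨γ, fun w => ?_⟩
        have hurec : ∀ w, (h (w+1) - γ) = (x:ℂ) * (h w - γ) + (ht w - γt) := by
          intro w
          rw [hγrec]
          simp only [htdef]
          ring
        have hbound := rec_bound_small (u := fun w => h w - γ) (e := fun w => ht w - γt)
          (le_of_lt hx0) hxle hK0 hurec (fun w => hγt w) w
        have habsγ : ‖γ‖ ≤ 2 * ‖γt‖ := by
          rw [hγdef, norm_div]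
          have habs1x : ‖1 - (x:ℂ)‖ = 1 - x := by
            have : (1 : ℂ) - (x:ℂ) = ((1 - x : ℝ) : ℂ) := by push_cast; ring
            rw [this, Complex.norm_real, Real.norm_eq_abs, abs_of_nonneg (by linarith)]
          rw [habs1x, div_le_iff₀ (by linarith)]
          nlinarith [norm_nonneg γt]
        have habsγt : ‖γt‖ ≤ 2 * H + K := by
          have h1 := hγt 0
          simp only [pow_zero, mul_one] at h1
          have h2 : ‖ht 0‖ ≤ 2 * H := by
            calc ‖ht 0‖
                ≤ ‖h 1‖ + ‖(x:ℂ) * h 0‖ :=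
                  norm_sub_le _ _
              _ ≤ H + 1 * H := by
                  rw [norm_mul, Complex.norm_real, Real.norm_eq_abs, abs_of_nonneg (le_of_lt hx0)]
                  have h3 : ‖h 1‖ ≤ H := abs_le_Hm (by omega)
                  have h4 : ‖h 0‖ ≤ H := abs_le_Hm (by omega)
                  nlinarith
              _ = 2 * H := by ring
          calc ‖γt‖ ≤ ‖ht 0 - γt‖ + ‖ht 0‖ := by
                have := norm_sub_le (ht 0) γt
                have h5 : γt = ht 0 - (ht 0 - γt) := by ring
                calc ‖γt‖ = ‖ht 0 - (ht 0 - γt)‖ := by rw [← h5]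
                  _ ≤ ‖ht 0‖ + ‖ht 0 - γt‖ :=
                    norm_sub_le _ _
                  _ = _ := by ring
            _ ≤ K * 1 + 2 * H := by
                have := hγt 0
                simp only [pow_zero, mul_one] at this
                linarith
            _ = 2 * H + K := by ring
        have hu0 : ‖h 0 - γ‖ ≤ 5 * H + 2 * K := by
          calc ‖h 0 - γ‖ ≤ ‖h 0‖ + ‖γ‖ :=
              norm_sub_le _ _
            _ ≤ H + 2 * (2 * H + K) := by
                have : ‖h 0‖ ≤ H := abs_le_Hm (by omega)
                linarith [habsγ, habsγt,
                  mul_le_mul_of_nonneg_left habsγt (by norm_num : (0:ℝ) ≤ 2)]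
            _ = 5 * H + 2 * K := by ring
        calc ‖h w - γ‖ ≤ (‖h 0 - γ‖ + 4 * K) * (3/4:ℝ)^w := hbound
          _ ≤ ((5 * H + 2 * K) + 4 * K) * (3/4:ℝ)^w := by
              have hp : (0:ℝ) ≤ (3/4:ℝ)^w := by positivity
              nlinarith
          _ ≤ ((12*m' + 5 : ℕ) : ℝ) * H * (3/4:ℝ)^w := by
              have hp : (0:ℝ) ≤ (3/4:ℝ)^w := by positivity
              have : 5 * H + 6 * K ≤ (12*m' + 5 : ℕ) * H := by
                push_cast
                nlinarith [hKH]
              nlinarith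
      · -- b = 0 : x = 1
        subst hb
        set ht : ℕ → ℂ := fun w => h (w+1) - h w with htdef
        have hrepH : RepL q (((0:ℤ), d) :: L') ht := by
          apply repL_congr (h := fun w => 1 * h (w+1) - 1 * h w)
          · intro w; simp [htdef]
          · exact repL_head hq0 1 1 (by simp) hrep
        have htbd : ∀ w, ‖ht w‖ ≤ C + C := by
          intro w
          calc ‖ht w‖ ≤ ‖h (w+1)‖ + ‖h w‖ :=
              norm_sub_le _ _
            _ ≤ C + C := add_le_add (hC (w+1)) (hC w)
        obtain ⟨γt, hγt⟩ := hforall q hq ht hrepH ⟨C + C, htbd⟩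
        set K : ℝ := m' * Hm ht ℓ' with hKdef
        have hK0 : 0 ≤ K := mul_nonneg (Nat.cast_nonneg _) (Hm_nonneg _ _)
        have hKH : K ≤ 2 * m' * H := by
          have : Hm ht ℓ' ≤ 2 * H := by
            apply Finset.sup'_le
            intro w hw
            have hwl : w ≤ ℓ' := Nat.lt_succ_iff.mp (Finset.mem_range.mp hw)
            calc ‖ht w‖ ≤ ‖h (w+1)‖ + ‖h w‖ :=
                norm_sub_le _ _
              _ ≤ 2 * H := by
                  have h1 : ‖h (w+1)‖ ≤ H := abs_le_Hm (by omega)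
                  have h2 : ‖h w‖ ≤ H := abs_le_Hm (by omega)
                  linarith
          calc K ≤ m' * (2 * H) := mul_le_mul_of_nonneg_left this (Nat.cast_nonneg _)
            _ = 2 * m' * H := by ring
        obtain ⟨γ, hγ⟩ := sum_bound_one hK0 hC (fun w => rfl) hγt
        refine ⟨γ, fun w => ?_⟩
        calc ‖h w - γ‖ ≤ 4 * K * (3/4:ℝ)^w := hγ w
          _ ≤ ((12*m' + 5 : ℕ) : ℝ) * H * (3/4:ℝ)^w := by
              have hp : (0:ℝ) ≤ (3/4:ℝ)^w := by positivity
              have : 4 * K ≤ (12*m' + 5 : ℕ) * H := by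
                push_cast
                nlinarith [hKH, hH0, Nat.cast_nonneg (α := ℝ) m']
              nlinarith
      · -- big root: x ≥ 2
        have hxge : 2 ≤ x := two_le_zpow hq hb
        have hxne : (x : ℂ) ≠ 0 := by
          simp only [ne_eq, Complex.ofReal_eq_zero]
          linarith
        set ht : ℕ → ℂ := fun w => ((x⁻¹ : ℝ) : ℂ) * h (w+1) - h w with htdef
        have hrepH : RepL q ((b, d) :: L') ht := by
          apply repL_congr (h := fun w => ((x⁻¹:ℝ):ℂ) * h (w+1) - 1 * h w)
          · intro w; simp [htdef]
          · refine repL_head hq0 _ 1 ?_ hrep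
            have hx' : x⁻¹ * q ^ b = 1 := by
              rw [← hxdef]
              exact inv_mul_cancel₀ (ne_of_gt hx0)
            rw [← Complex.ofReal_mul, hx', Complex.ofReal_one]
        have hxinv0 : (0:ℝ) ≤ x⁻¹ := by positivity
        have hxinvle : x⁻¹ ≤ 1/2 := by
          rw [inv_le_comm₀ (by linarith) (by norm_num)]
          linarith
        have htbd : ∀ w, ‖ht w‖ ≤ C + C := by
          intro w
          calc ‖ht w‖
              ≤ ‖((x⁻¹:ℝ):ℂ) * h (w+1)‖ + ‖h w‖ :=
              norm_sub_le _ _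
            _ ≤ C + C := by
                rw [norm_mul, Complex.norm_real, Real.norm_eq_abs, abs_of_nonneg hxinv0]
                have h1 := mul_le_mul_of_nonneg_left (hC (w+1)) hxinv0
                nlinarith [hC w, hC (w+1), norm_nonneg (h (w+1))]
        obtain ⟨γt, hγt⟩ := hforall q hq ht hrepH ⟨C + C, htbd⟩
        set K : ℝ := m' * Hm ht ℓ' with hKdef
        have hK0 : 0 ≤ K := mul_nonneg (Nat.cast_nonneg _) (Hm_nonneg _ _)
        have hKH : K ≤ 2 * m' * H := by
          have : Hm ht ℓ' ≤ 2 * H := by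
            apply Finset.sup'_le
            intro w hw
            have hwl : w ≤ ℓ' := Nat.lt_succ_iff.mp (Finset.mem_range.mp hw)
            calc ‖ht w‖
                ≤ ‖((x⁻¹:ℝ):ℂ) * h (w+1)‖ + ‖h w‖ :=
                norm_sub_le _ _
              _ ≤ 2 * H := by
                  rw [norm_mul, Complex.norm_real, Real.norm_eq_abs, abs_of_nonneg hxinv0]
                  have h1 : ‖h (w+1)‖ ≤ H := abs_le_Hm (by omega)
                  have h2 : ‖h w‖ ≤ H := abs_le_Hm (by omega)
                  nlinarith [norm_nonneg (h (w+1))]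
          calc K ≤ m' * (2 * H) := mul_le_mul_of_nonneg_left this (Nat.cast_nonneg _)
            _ = 2 * m' * H := by ring
        have h1xne : (1 : ℂ) - (x:ℂ) ≠ 0 := by
          have : ((1 - x : ℝ) : ℂ) ≠ 0 := by
            simp only [ne_eq, Complex.ofReal_eq_zero]
            intro hh; rw [sub_eq_zero] at hh; linarith
          push_cast at this
          convert this using 1
        set γ : ℂ := (x:ℂ) * γt / (1 - (x:ℂ)) with hγdef
        have hγrec : γ = (x:ℂ) * (γ + γt) := by
          have e1 : γ * (1 - (x:ℂ)) = (x:ℂ) * γt := by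
            rw [hγdef]
            exact div_mul_cancel₀ _ h1xne
          linear_combination e1
        have hurec : ∀ w, (h (w+1) - γ) = (x:ℂ) * ((h w - γ) + (ht w - γt)) := by
          intro w
          have hht : h (w+1) = (x:ℂ) * (h w + ht w) := by
            have hxinvmul : (x:ℂ) * ((x⁻¹:ℝ):ℂ) = 1 := by
              rw [← Complex.ofReal_mul, mul_inv_cancel₀ (ne_of_gt hx0), Complex.ofReal_one]
            show h (w+1) = (x:ℂ) * (h w + (((x⁻¹:ℝ):ℂ) * h (w+1) - h w))
            linear_combination (-(h (w+1))) * hxinvmul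
          rw [hht]
          calc (x:ℂ) * (h w + ht w) - γ
              = (x:ℂ) * (h w + ht w) - (x:ℂ) * (γ + γt) := by rw [← hγrec]
            _ = (x:ℂ) * ((h w - γ) + (ht w - γt)) := by ring
        have hubd : ∀ w, ‖h w - γ‖ ≤ C + ‖γ‖ := by
          intro w
          calc ‖h w - γ‖ ≤ ‖h w‖ + ‖γ‖ :=
              norm_sub_le _ _
            _ ≤ C + ‖γ‖ := by linarith [hC w]
        refine ⟨γ, fun w' => ?_⟩
        have hbound' := rec_bound_big (u := fun w => h w - γ) (e := fun w => ht w - γt)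
          hxge hK0 hubd hurec (fun w => hγt w) w'
        calc ‖h w' - γ‖ ≤ 2 * K * (3/4:ℝ)^w' := hbound'
          _ ≤ ((12*m' + 5 : ℕ) : ℝ) * H * (3/4:ℝ)^w' := by
              have hp : (0:ℝ) ≤ (3/4:ℝ)^w' := by positivity
              have : 2 * K ≤ (12*m' + 5 : ℕ) * H := by
                push_cast
                nlinarith [hKH, hH0, Nat.cast_nonneg (α := ℝ) m']
              nlinarith

lemma rep_ofFn (q : ℝ) : ∀ (k : ℕ) (a : Fin k → ℕ) (b : Fin k → ℤ) (c : Fin k → ℂ),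
    RepL q (List.ofFn (fun i => (b i, a i + 1)))
      (fun w : ℕ => ∑ i, c i * (w:ℂ)^(a i) * ((q ^ (b i * (w:ℤ)) : ℝ) : ℂ)) := by
  intro k
  induction k with
  | zero =>
    intro a b c
    simp only [List.ofFn_zero]
    intro w
    simp
  | succ k ih =>
    intro a b c
    rw [List.ofFn_succ]
    refine ⟨Polynomial.C (c 0) * Polynomial.X ^ (a 0), ?_,
      fun w : ℕ => ∑ i : Fin k, c i.succ * (w:ℂ)^(a i.succ) * ((q ^ (b i.succ * (w:ℤ)) : ℝ) : ℂ),
      ih _ _ _, ?_⟩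
    · refine lt_of_le_of_lt (Polynomial.degree_C_mul_X_pow_le _ _) ?_
      exact Nat.cast_lt.mpr (Nat.lt_succ_self (a 0))
    · intro w
      simp only [Fin.sum_univ_succ, Polynomial.eval_mul, Polynomial.eval_pow,
        Polynomial.eval_C, Polynomial.eval_X]

/-- Given exponent data `a i ∈ ℕ`, `b i ∈ ℤ`, there exist positive integers
`m` and `ℓ` (depending only on the exponent data) such that for every coefficient tuple
`c : Fin k → ℂ` and every real `q ≥ 2`, if `h w = ∑ i, c i * w ^ (a i) * q ^ (b i * w)` is
bounded on `ℕ`, then `sup_{w ∈ ℕ} |h w| ≤ m * max_{0 ≤ w ≤ ℓ} |h w|`. -/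
theorem stmt_0 (k : ℕ) (a : Fin k → ℕ) (b : Fin k → ℤ) :
    ∃ m ℓ : ℕ, 0 < m ∧ 0 < ℓ ∧
      ∀ (c : Fin k → ℂ) (q : ℝ), 2 ≤ q →
        (∃ C : ℝ, ∀ w : ℕ,
            ‖∑ i, c i * (w : ℂ) ^ (a i) * ((q ^ (b i * (w : ℤ)) : ℝ) : ℂ)‖ ≤ C) →
        ∀ w : ℕ,
          ‖∑ i, c i * (w : ℂ) ^ (a i) * ((q ^ (b i * (w : ℤ)) : ℝ) : ℂ)‖ ≤
            (m : ℝ) * (Finset.range (ℓ + 1)).sup' (by simp)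
              (fun w' : ℕ =>
                ‖∑ i, c i * (w' : ℂ) ^ (a i) * ((q ^ (b i * (w' : ℤ)) : ℝ) : ℂ)‖) := by
  obtain ⟨m, ℓ, hm, hℓ, hmain⟩ := mainL
    (((List.ofFn (fun i => (b i, a i + 1))).map Prod.snd).sum
      + (List.ofFn (fun i : Fin k => (b i, a i + 1))).length)
    (List.ofFn (fun i => (b i, a i + 1))) le_rfl
  refine ⟨2*m+1, ℓ, by omega, hℓ, ?_⟩
  intro c q hq hbd w
  set h : ℕ → ℂ := fun w : ℕ => ∑ i, c i * (w:ℂ)^(a i) * ((q ^ (b i * (w:ℤ)) : ℝ) : ℂ) with hdef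
  obtain ⟨γ, hγ⟩ := hmain q hq h (rep_ofFn q k a b c) hbd
  show ‖h w‖ ≤ ((2*m+1 : ℕ) : ℝ) * Hm h ℓ
  have hH0 := Hm_nonneg h ℓ
  have hpw : (3/4:ℝ)^w ≤ 1 := pow_le_one₀ (by norm_num) (by norm_num)
  have hm0 : (0:ℝ) ≤ (m:ℝ) := Nat.cast_nonneg _
  have h3 : ‖h w - γ‖ ≤ (m:ℝ) * Hm h ℓ := by
    calc ‖h w - γ‖ ≤ (m:ℝ) * Hm h ℓ * (3/4:ℝ)^w := hγ w
      _ ≤ (m:ℝ) * Hm h ℓ * 1 := by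
          apply mul_le_mul_of_nonneg_left hpw (by positivity)
      _ = (m:ℝ) * Hm h ℓ := by ring
  have h2 : ‖γ‖ ≤ (m:ℝ) * Hm h ℓ + Hm h ℓ := by
    have h0γ : ‖h 0 - γ‖ ≤ (m:ℝ) * Hm h ℓ := by
      have := hγ 0
      simpa using this
    calc ‖γ‖ = ‖h 0 - (h 0 - γ)‖ := by ring_nf
      _ ≤ ‖h 0‖ + ‖h 0 - γ‖ := norm_sub_le _ _
      _ ≤ Hm h ℓ + (m:ℝ) * Hm h ℓ := add_le_add (abs_le_Hm (Nat.zero_le _)) h0γ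
      _ = (m:ℝ) * Hm h ℓ + Hm h ℓ := by ring
  calc ‖h w‖ = ‖(h w - γ) + γ‖ := by ring_nf
    _ ≤ ‖h w - γ‖ + ‖γ‖ := norm_add_le _ _
    _ ≤ (m:ℝ) * Hm h ℓ + ((m:ℝ) * Hm h ℓ + Hm h ℓ) := add_le_add h3 h2
    _ = ((2*m+1 : ℕ) : ℝ) * Hm h ℓ := by push_cast; ring
end

section
/- Suppose that for i = 1, …, k we have a_i ∈ ℕ and b_i ∈ ℤ. Then there exist positive integers m and ℓ, and functions w_1, …, w_ℓ : ℕ → ℕ with w_i(t) ≤ t for all i and all t, such that the following holds for every tuple c = (c_1, …, c_k) ∈ ℂ^k, every t ∈ ℕ and every real number q ≥ 2: for the function h : ℕ → ℂ, h(w) = ∑_{i=1}^k c_i · w^{a_i} · q^{b_i·w}, one has max_{0 ≤ w ≤ t} |h(w)| ≤ m · max_{1 ≤ i ≤ ℓ} |h(w_i(t))|. -/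
open Polynomial Finset


private lemma nat_div_lb (a d : ℕ) (hd : 0 < d) : (a:ℝ) < ((a/d : ℕ) : ℝ) * d + d := by
  have h1 := Nat.div_add_mod a d
  have h2 := Nat.mod_lt a hd
  have : a < d * (a/d) + d := by omega
  calc (a:ℝ) < ((d * (a/d) + d : ℕ) : ℝ) := by exact_mod_cast this
  _ = ((a/d : ℕ) : ℝ) * d + d := by push_cast; ring

private lemma nodes_gap (d t : ℕ) (hd : 1 ≤ d) (ht : 2*d ≤ t) {i j : ℕ} (hij : i < j) :
    (t:ℝ)/(2*d) ≤ ((j*t/d : ℕ) : ℝ) - ((i*t/d : ℕ) : ℝ) := by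
  have h1 : ((i*t/d : ℕ) : ℝ) * d ≤ (i:ℝ) * t := by
    have := Nat.div_mul_le_self (i*t) d
    exact_mod_cast Nat.cast_le.mpr this
  have h2 : (j:ℝ) * t < ((j*t/d : ℕ) : ℝ) * d + d := by
    have := nat_div_lb (j*t) d hd
    push_cast at this ⊢; linarith
  have hij' : (i:ℝ) + 1 ≤ j := by exact_mod_cast hij
  have hd' : (1:ℝ) ≤ d := by exact_mod_cast hd
  have ht' : 2*(d:ℝ) ≤ t := by exact_mod_cast ht
  rw [div_le_iff₀ (by positivity)]
  nlinarith [mul_le_mul_of_nonneg_right hij' (le_trans (by linarith) ht')]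

private lemma poly_case_big (e : ℕ) :
    ∃ m ℓ : ℕ, 0 < m ∧ 0 < ℓ ∧ ∃ w : Fin ℓ → ℕ → ℕ, (∀ i t, w i t ≤ t) ∧
      ∀ P : Polynomial ℂ, P.degree < ((e+2 : ℕ) : WithBot ℕ) → ∀ t : ℕ, ∃ i,
        ∀ w' ≤ t, ‖(P.eval (w' : ℂ))‖ ≤ (m:ℝ) * ‖(P.eval ((w i t : ℕ) : ℂ))‖ := by
  set d := e + 1 with hd
  have hd1 : 1 ≤ d := Nat.le_add_left 1 e
  refine ⟨(d+1) * (2*d)^d, (2*d+1) + (d+1), by positivity, by omega,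
    fun i t => if (i:ℕ) < 2*d+1 then min i t else (((i:ℕ) - (2*d+1)) * t) / d, ?_, ?_⟩
  · intro i t
    by_cases h : (i:ℕ) < 2*d+1
    · simp [h, min_le_right]
    · simp only [h, if_false]
      calc ((i:ℕ) - (2*d+1)) * t / d ≤ d * t / d :=
        Nat.div_le_div_right (Nat.mul_le_mul_right t (by omega))
      _ = t := Nat.mul_div_cancel_left t hd1
  · intro P hP t
    have hm1 : (1:ℝ) ≤ ((d+1) * (2*d)^d : ℕ) := by
      have : 1 ≤ (d+1) * (2*d)^d := Nat.one_le_iff_ne_zero.mpr (by positivity)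
      exact_mod_cast this
    by_cases ht : t < 2*d
    · -- small t: all points are samples
      obtain ⟨u, hu, hmax⟩ := (range (t+1)).exists_max_image
        (fun u => ‖(P.eval (u:ℂ))‖) ⟨0, by simp⟩
      rw [mem_range] at hu
      refine ⟨⟨u, by omega⟩, fun w' hw' => ?_⟩
      have hval : (if ((⟨u, by omega⟩ : Fin ((2*d+1)+(d+1))) : ℕ) < 2*d+1 then min u t
          else ((u - (2*d+1)) * t) / d) = u := by
        rw [if_pos (by simp; omega)]
        simp; omega
      calc ‖(P.eval (w':ℂ))‖ ≤ ‖(P.eval (u:ℂ))‖ :=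
            hmax w' (mem_range.mpr (by omega))
      _ ≤ _ := by beta_reduce; rw [hval]; nlinarith [norm_nonneg (P.eval (u:ℂ))]
    · -- large t: Lagrange interpolation
      push_neg at ht
      have htpos : (0:ℝ) < t := by exact_mod_cast (by omega : 0 < t)
      have hgap : (0:ℝ) < (t:ℝ)/(2*d) := by positivity
      set ν : Fin (d+1) → ℂ := fun j => (((j:ℕ)*t/d : ℕ) : ℂ) with hν
      have habs : ∀ i j : Fin (d+1), i < j → (t:ℝ)/(2*d) ≤ ‖(ν j - ν i)‖ := by
        intro i j hij
        have := nodes_gap d t hd1 ht (Fin.lt_iff_val_lt_val.mp hij)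
        have heq : ν j - ν i = ((((j:ℕ)*t/d : ℕ) : ℝ) - (((i:ℕ)*t/d : ℕ) : ℝ) : ℝ) := by
          push_cast [hν]; ring
        rw [heq, Complex.norm_real, Real.norm_eq_abs]
        exact le_trans this (le_abs_self _)
      have habs' : ∀ i j : Fin (d+1), i ≠ j → (t:ℝ)/(2*d) ≤ ‖(ν i - ν j)‖ := by
        intro i j hij
        rcases lt_or_gt_of_ne hij with h | h
        · rw [← norm_neg]; simpa using habs i j h
        · exact habs j i h
      have hinj : Set.InjOn ν (univ : Finset (Fin (d+1))) := by
        intro i _ j _ hij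
        by_contra hne
        have := habs' i j hne
        rw [hij, sub_self] at this
        simp at this; linarith
      have hdeg : P.degree < (#(univ : Finset (Fin (d+1))) : WithBot ℕ) := by
        rw [card_univ, Fintype.card_fin]
        exact_mod_cast hP
      have hinterp := Lagrange.eq_interpolate hinj hdeg
      obtain ⟨j₀, _, hj₀⟩ := (univ : Finset (Fin (d+1))).exists_max_image
        (fun j => ‖(P.eval (ν j))‖) univ_nonempty
      set M := ‖(P.eval (ν j₀))‖ with hM
      refine ⟨⟨2*d+1 + (j₀:ℕ), by omega⟩, fun w' hw' => ?_⟩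
      have hval : (((if (((⟨2*d+1 + (j₀:ℕ), by omega⟩ : Fin ((2*d+1)+(d+1))):ℕ)) < 2*d+1 then
          min (2*d+1 + (j₀:ℕ)) t else (((2*d+1 + (j₀:ℕ)) - (2*d+1)) * t) / d : ℕ)) : ℂ) = ν j₀ := by
        rw [if_neg (by simp; omega)]
        simp [hν]
      beta_reduce
      rw [hval, ← hM]
      -- bound the basis polynomials
      have hnodele : ∀ i : Fin (d+1), ((i:ℕ)*t/d : ℕ) ≤ t := by
        intro i
        calc (i:ℕ)*t/d ≤ d * t / d := Nat.div_le_div_right (Nat.mul_le_mul_right t (by omega))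
        _ = t := Nat.mul_div_cancel_left t hd1
      have hbasis : ∀ j : Fin (d+1), ‖((Lagrange.basis univ ν j).eval (w':ℂ))‖ ≤ (2*d:ℝ)^d := by
        intro j
        rw [Lagrange.basis, eval_prod]
        rw [norm_prod]
        calc ∏ i ∈ univ.erase j, ‖((Lagrange.basisDivisor (ν j) (ν i)).eval (w':ℂ))‖
            ≤ ∏ _i ∈ univ.erase j, (2*d:ℝ) := by
              refine prod_le_prod (fun _ _ => norm_nonneg _) ?_
              intro i hi
              have hne : j ≠ i := (mem_erase.mp hi).1.symm
              rw [Lagrange.basisDivisor, eval_mul, eval_C, eval_sub, eval_X, eval_C, norm_mul,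
                norm_inv]
              have h1 : ‖((w':ℂ) - ν i)‖ ≤ t := by
                have : (w':ℂ) - ν i = (((w':ℝ) - (((i:ℕ)*t/d : ℕ):ℝ)) : ℝ) := by
                  push_cast [hν]; ring
                rw [this, Complex.norm_real, Real.norm_eq_abs, abs_le]
                constructor
                · have : ((((i:ℕ)*t/d : ℕ)):ℝ) ≤ t := by exact_mod_cast hnodele i
                  have hw0 : (0:ℝ) ≤ (w':ℝ) := Nat.cast_nonneg w'
                  linarith
                · have : ((w':ℕ):ℝ) ≤ t := by exact_mod_cast hw'
                  have : (0:ℝ) ≤ (((i:ℕ)*t/d : ℕ):ℝ) := Nat.cast_nonneg _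
                  linarith [(by exact_mod_cast hw' : ((w':ℕ):ℝ) ≤ (t:ℝ))]
              have h2 := habs' j i hne
              calc (‖(ν j - ν i)‖)⁻¹ * ‖((w':ℂ) - ν i)‖
                  ≤ ((t:ℝ)/(2*d))⁻¹ * t := by
                    apply mul_le_mul _ h1 (norm_nonneg _)
                      (le_of_lt (by positivity))
                    exact inv_anti₀ hgap h2
              _ = 2*d := by field_simp
        _ = (2*d:ℝ)^d := by
              rw [prod_const, card_erase_of_mem (mem_univ j), card_univ, Fintype.card_fin]
              norm_num
      -- combine
      have heval : P.eval (w':ℂ) = ∑ j : Fin (d+1), P.eval (ν j) * (Lagrange.basis univ ν j).eval (w':ℂ) := by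
        conv_lhs => rw [hinterp]
        rw [Lagrange.interpolate_apply, eval_finset_sum]
        exact Finset.sum_congr rfl (fun j _ => by rw [eval_mul, eval_C])
      rw [heval]
      calc ‖(∑ j : Fin (d+1), P.eval (ν j) * (Lagrange.basis univ ν j).eval (w':ℂ))‖
          ≤ ∑ j : Fin (d+1), ‖(P.eval (ν j) * (Lagrange.basis univ ν j).eval (w':ℂ))‖ :=
            norm_sum_le _ _
      _ ≤ ∑ _j : Fin (d+1), M * (2*d:ℝ)^d := by
            refine sum_le_sum (fun j _ => ?_)
            rw [norm_mul]
            exact mul_le_mul (hj₀ j (mem_univ j)) (hbasis j) (norm_nonneg _)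
              (le_trans (norm_nonneg _) (hj₀ j₀ (mem_univ j₀)))
      _ = ((d+1) * (2*d)^d : ℕ) * M := by
            rw [sum_const, card_univ, Fintype.card_fin]
            push_cast; ring


private lemma poly_case (n : ℕ) :
    ∃ m ℓ : ℕ, 0 < m ∧ 0 < ℓ ∧ ∃ w : Fin ℓ → ℕ → ℕ, (∀ i t, w i t ≤ t) ∧
      ∀ P : Polynomial ℂ, P.degree < (n : WithBot ℕ) → ∀ t : ℕ, ∃ i,
        ∀ w' ≤ t, ‖(P.eval (w' : ℂ))‖ ≤ (m:ℝ) * ‖(P.eval ((w i t : ℕ) : ℂ))‖ := by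
  match n with
  | 0 =>
    refine ⟨1, 1, one_pos, one_pos, fun _ _ => 0, fun _ _ => Nat.zero_le _, ?_⟩
    intro P hP t
    have hP0 : P = 0 := Polynomial.degree_eq_bot.mp (Nat.WithBot.lt_zero_iff.mp (by exact_mod_cast hP))
    exact ⟨0, fun w' _ => by simp [hP0]⟩
  | 1 =>
    refine ⟨1, 1, one_pos, one_pos, fun _ _ => 0, fun _ _ => Nat.zero_le _, ?_⟩
    intro P hP t
    have hP0 : P = C (P.coeff 0) :=
      Polynomial.eq_C_of_degree_le_zero (Nat.WithBot.lt_one_iff_le_zero.mp (by exact_mod_cast hP))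
    refine ⟨0, fun w' _ => ?_⟩
    rw [hP0]; simp
  | (e+2) => exact poly_case_big e


noncomputable def Fz (B : Finset ℤ) (D : ℤ → Polynomial ℂ) (q : ℝ) (w : ℕ) : ℂ :=
  ∑ b ∈ B, (D b).eval (w : ℂ) * ((q ^ (b * (w:ℤ)) : ℝ) : ℂ)

private lemma fwd_identity (B : Finset ℤ) (D : ℤ → Polynomial ℂ) (q : ℝ) (hq : 2 ≤ q) (bh : ℤ) (w : ℕ) :
    Fz B (fun b => D b - C ((q ^ (b - bh) : ℝ) : ℂ) * (D b).comp (X + C 1)) q w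
      = Fz B D q w - ((q ^ (-bh) : ℝ) : ℂ) * Fz B D q (w+1) := by
  unfold Fz
  rw [Finset.mul_sum, ← Finset.sum_sub_distrib]
  refine sum_congr rfl fun b _ => ?_
  have hq0 : (q:ℝ) ≠ 0 := by linarith
  rw [eval_sub, eval_mul, eval_C, eval_comp, eval_add, eval_X, eval_C]
  have hcast : ((w:ℂ) + 1) = ((w+1 : ℕ) : ℂ) := by push_cast; ring
  rw [hcast]
  have hzp : ((q ^ (b - bh) : ℝ) : ℂ) * ((q ^ (b * (w:ℤ)) : ℝ) : ℂ)
      = ((q ^ (-bh) : ℝ):ℂ) * ((q ^ (b * ((w+1:ℕ):ℤ)) : ℝ):ℂ) := by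
    rw [← Complex.ofReal_mul, ← Complex.ofReal_mul, ← zpow_add₀ hq0, ← zpow_add₀ hq0]
    congr 1
    push_cast
    ring
  linear_combination (-(D b).eval ((w+1:ℕ):ℂ)) * hzp

private lemma bwd_identity (B : Finset ℤ) (D : ℤ → Polynomial ℂ) (q : ℝ) (hq : 2 ≤ q) (bh : ℤ) (w : ℕ) :
    Fz B (fun b => C ((q ^ b : ℝ) : ℂ) * (D b).comp (X + C 1) - C ((q ^ bh : ℝ) : ℂ) * D b) q w
      = Fz B D q (w+1) - ((q ^ bh : ℝ) : ℂ) * Fz B D q w := by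
  unfold Fz
  rw [Finset.mul_sum, ← Finset.sum_sub_distrib]
  refine sum_congr rfl fun b _ => ?_
  have hq0 : (q:ℝ) ≠ 0 := by linarith
  rw [eval_sub, eval_mul, eval_mul, eval_C, eval_C, eval_comp, eval_add, eval_X, eval_C]
  have hcast : ((w:ℂ) + 1) = ((w+1 : ℕ) : ℂ) := by push_cast; ring
  rw [hcast]
  have hzp : ((q ^ (b:ℤ) : ℝ) : ℂ) * ((q ^ (b * (w:ℤ)) : ℝ) : ℂ)
      = ((q ^ (b * ((w+1:ℕ):ℤ)) : ℝ):ℂ) := by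
    rw [← Complex.ofReal_mul, ← zpow_add₀ hq0]
    congr 1
    push_cast
    ring
  linear_combination ((D b).eval ((w+1:ℕ):ℂ)) * hzp


lemma iter_fwd (h g : ℕ → ℂ) (t : ℕ) (G : ℝ) (hG : 0 ≤ G)
    (hrec : ∀ w < t, ‖(h w)‖ ≤ (1/2) * ‖(h (w+1))‖ + ‖(g w)‖)
    (hg : ∀ u < t, ‖(g u)‖ ≤ G) :
    ∀ w ≤ t, ‖(h w)‖ ≤ ‖(h t)‖ + 2*G := by
  suffices key : ∀ n w, w + n = t → ‖(h w)‖ ≤ ‖(h t)‖ + 2*G by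
    intro w hw; exact key (t - w) w (by omega)
  intro n
  induction n with
  | zero => intro w hw; rw [← hw]; simp; positivity
  | succ n ih =>
    intro w hw
    have h1 := hrec w (by omega)
    have h2 := ih (w+1) (by omega)
    have h3 := hg w (by omega)
    nlinarith [norm_nonneg (h t)]

lemma iter_bwd (h g : ℕ → ℂ) (t : ℕ) (G : ℝ) (hG : 0 ≤ G)
    (hrec : ∀ w < t, ‖(h (w+1))‖ ≤ (1/2) * ‖(h w)‖ + ‖(g w)‖)
    (hg : ∀ u < t, ‖(g u)‖ ≤ G) :
    ∀ w ≤ t, ‖(h w)‖ ≤ ‖(h 0)‖ + 2*G := by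
  intro w
  induction w with
  | zero => intro _; simp; positivity
  | succ w ih =>
    intro hw
    have h1 := hrec w (by omega)
    have h2 := ih (by omega)
    have h3 := hg w (by omega)
    nlinarith [norm_nonneg (h 0)]

lemma comp1_degree (p : Polynomial ℂ) : (p.comp (X + C 1)).degree = p.degree := by
  by_cases h : p = 0
  · simp [h]
  · have hnd : (X + C (1:ℂ)).natDegree = 1 := natDegree_X_add_C 1
    have hndc : (p.comp (X + C 1)).natDegree = p.natDegree := by
      rw [Polynomial.natDegree_comp, hnd, mul_one]
    have hlc : (p.comp (X + C 1)).leadingCoeff = p.leadingCoeff := by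
      rw [Polynomial.leadingCoeff_comp (by rw [hnd]; norm_num)]
      rw [Polynomial.leadingCoeff_X_add_C, one_pow, mul_one]
    have hc0 : p.comp (X + C 1) ≠ 0 := by
      intro hco
      exact h (leadingCoeff_eq_zero.mp (by rw [← hlc, hco, leadingCoeff_zero]))
    rw [degree_eq_natDegree h, degree_eq_natDegree hc0, hndc]

lemma comp1_sub_degree (p : Polynomial ℂ) {n : ℕ} (hp : p.degree < ((n+1 : ℕ) : WithBot ℕ)) :
    (p.comp (X + C 1) - p).degree < (n : WithBot ℕ) := by
  by_cases h : p = 0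
  · simp [h]
  · have hlc : (p.comp (X + C 1)).leadingCoeff = p.leadingCoeff := by
      rw [Polynomial.leadingCoeff_comp (by rw [natDegree_X_add_C]; norm_num)]
      rw [Polynomial.leadingCoeff_X_add_C, one_pow, mul_one]
    have hlt : (p.comp (X + C 1) - p).degree < p.degree := by
      rw [← comp1_degree p]
      exact Polynomial.degree_sub_lt (comp1_degree p) (fun hco => h (leadingCoeff_eq_zero.mp
        (by rw [← hlc, hco, leadingCoeff_zero]))) hlc
    have hdn : p.degree ≤ (n : WithBot ℕ) := by
      rw [degree_eq_natDegree h] at hp ⊢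
      have : p.natDegree < n + 1 := by exact_mod_cast hp
      exact_mod_cast Nat.lt_succ_iff.mp this
    exact lt_of_lt_of_le hlt hdn



private lemma pick3 (h : ℕ → ℂ) (t p1 p2 ept : ℕ) (m' : ℝ) (hm' : 0 ≤ m')
    (hb : ∀ w ≤ t, ‖(h w)‖ ≤
      ‖(h ept)‖ + 2*m'*‖(h p1)‖ + m' * ‖(h p2)‖) :
    (∀ w ≤ t, ‖(h w)‖ ≤ (1+3*m') * ‖(h ept)‖) ∨
    (∀ w ≤ t, ‖(h w)‖ ≤ (1+3*m') * ‖(h p1)‖) ∨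
    (∀ w ≤ t, ‖(h w)‖ ≤ (1+3*m') * ‖(h p2)‖) := by
  set X := ‖(h ept)‖
  set Y := ‖(h p1)‖
  set Z := ‖(h p2)‖
  rcases le_total Y X with h1 | h1
  · rcases le_total Z X with h2 | h2
    · left; intro w hw; have := hb w hw; nlinarith
    · right; right; intro w hw; have := hb w hw; nlinarith
  · rcases le_total Z Y with h2 | h2
    · right; left; intro w hw; have := hb w hw; nlinarith
    · right; right; intro w hw; have := hb w hw; nlinarith


private lemma base_key (B : Finset ℤ) (S : ℤ → ℕ) (hz : ∀ b ∈ B, b ≠ 0 → S b = 0) :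
    ∃ m ℓ : ℕ, 0 < m ∧ 0 < ℓ ∧ ∃ w : Fin ℓ → ℕ → ℕ, (∀ i t, w i t ≤ t) ∧
      ∀ D : ℤ → Polynomial ℂ, (∀ b ∈ B, (D b).degree < (S b : WithBot ℕ)) →
      ∀ (t : ℕ) (q : ℝ), 2 ≤ q → ∃ i, ∀ w' ≤ t,
        ‖(Fz B D q w')‖ ≤ (m:ℝ) * ‖(Fz B D q (w i t))‖ := by
  obtain ⟨m, ℓ, hm, hℓ, w, hwle, hpoly⟩ := poly_case (S 0)
  refine ⟨m, ℓ, hm, hℓ, w, hwle, ?_⟩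
  intro D hD t q hq
  have hzero : ∀ b ∈ B, b ≠ 0 → D b = 0 := by
    intro b hb hb0
    have h1 := hD b hb
    rw [hz b hb hb0] at h1
    exact degree_eq_bot.mp (Nat.WithBot.lt_zero_iff.mp (by exact_mod_cast h1))
  by_cases h0 : (0:ℤ) ∈ B
  · have hFP : ∀ u : ℕ, Fz B D q u = (D 0).eval (u:ℂ) := by
      intro u
      rw [Fz, Finset.sum_eq_single_of_mem 0 h0 (fun b hb hb0 => by rw [hzero b hb hb0]; simp)]
      norm_num
    have hPdeg : (D 0).degree < ((S 0 : ℕ) : WithBot ℕ) := hD 0 h0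
    obtain ⟨i, hi⟩ := hpoly (D 0) hPdeg t
    exact ⟨i, fun w' hw' => by rw [hFP, hFP]; exact hi w' hw'⟩
  · have hFP : ∀ u : ℕ, Fz B D q u = 0 := by
      intro u
      rw [Fz]
      exact Finset.sum_eq_zero (fun b hb => by
        rw [hzero b hb (fun e => h0 (e ▸ hb))]; simp)
    refine ⟨⟨0, hℓ⟩, fun w' _ => ?_⟩
    rw [hFP, hFP]
    simp


def samp (ℓ' : ℕ) (w' : Fin ℓ' → ℕ → ℕ) (i : Fin (2*ℓ'+2)) (t : ℕ) : ℕ :=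
  if h : (i:ℕ) < ℓ' then w' ⟨i, h⟩ (t-1)
  else if h2 : (i:ℕ) < 2*ℓ' then min (w' ⟨(i:ℕ)-ℓ', by omega⟩ (t-1) + 1) t
  else if (i:ℕ) = 2*ℓ' then t else 0

lemma samp_le (ℓ' : ℕ) (w' : Fin ℓ' → ℕ → ℕ) (hw' : ∀ j t, w' j t ≤ t)
    (i : Fin (2*ℓ'+2)) (t : ℕ) : samp ℓ' w' i t ≤ t := by
  unfold samp
  by_cases h : (i:ℕ) < ℓ'
  · rw [dif_pos h]; exact le_trans (hw' _ _) (Nat.sub_le t 1)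
  · rw [dif_neg h]
    by_cases h2 : (i:ℕ) < 2*ℓ'
    · rw [dif_pos h2]; exact min_le_right _ _
    · rw [dif_neg h2]
      by_cases h3 : (i:ℕ) = 2*ℓ'
      · rw [if_pos h3]
      · rw [if_neg h3]; exact Nat.zero_le t

lemma samp_P (ℓ' : ℕ) (w' : Fin ℓ' → ℕ → ℕ) (t : ℕ) (j : Fin ℓ') (h : (j:ℕ) < 2*ℓ'+2) :
    samp ℓ' w' ⟨j, h⟩ t = w' j (t-1) := by
  unfold samp
  rw [dif_pos j.isLt]

lemma samp_Q (ℓ' : ℕ) (w' : Fin ℓ' → ℕ → ℕ) (t : ℕ) (j : Fin ℓ') (h : ℓ'+(j:ℕ) < 2*ℓ'+2) :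
    samp ℓ' w' ⟨ℓ'+(j:ℕ), h⟩ t = min (w' j (t-1) + 1) t := by
  have hj := j.isLt
  unfold samp
  simp only [Fin.val_mk]
  rw [dif_neg (by omega), dif_pos (by omega : ℓ'+(j:ℕ) < 2*ℓ')]
  have : (⟨ℓ' + (j:ℕ) - ℓ', by omega⟩ : Fin ℓ') = j := by apply Fin.ext; simp
  rw [this]

lemma samp_T (ℓ' : ℕ) (w' : Fin ℓ' → ℕ → ℕ) (t : ℕ) (h : 2*ℓ' < 2*ℓ'+2) :
    samp ℓ' w' ⟨2*ℓ', h⟩ t = t := by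
  unfold samp
  simp only [Fin.val_mk]
  rw [dif_neg (by omega), dif_neg (by omega)]
  simp

lemma samp_Z (ℓ' : ℕ) (w' : Fin ℓ' → ℕ → ℕ) (t : ℕ) (h : 2*ℓ'+1 < 2*ℓ'+2) :
    samp ℓ' w' ⟨2*ℓ'+1, h⟩ t = 0 := by
  unfold samp
  simp only [Fin.val_mk]
  rw [dif_neg (by omega), dif_neg (by omega), if_neg (by omega)]

private lemma key (N : ℕ) : ∀ (B : Finset ℤ) (S : ℤ → ℕ), (∑ b ∈ B.filter (· ≠ 0), S b) ≤ N →
    ∃ m ℓ : ℕ, 0 < m ∧ 0 < ℓ ∧ ∃ w : Fin ℓ → ℕ → ℕ, (∀ i t, w i t ≤ t) ∧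
      ∀ D : ℤ → Polynomial ℂ, (∀ b ∈ B, (D b).degree < (S b : WithBot ℕ)) →
      ∀ (t : ℕ) (q : ℝ), 2 ≤ q → ∃ i, ∀ w' ≤ t,
        ‖(Fz B D q w')‖ ≤ (m:ℝ) * ‖(Fz B D q (w i t))‖ := by
  induction N with
  | zero =>
    intro B S hS
    apply base_key
    intro b hb hb0
    have hmem : b ∈ B.filter (· ≠ 0) := mem_filter.mpr ⟨hb, hb0⟩
    have := Finset.single_le_sum (f := S) (fun i _ => Nat.zero_le _) hmem
    omega
  | succ N ih =>
    intro B S hS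
    by_cases hz : ∀ b ∈ B, b ≠ 0 → S b = 0
    · exact base_key B S hz
    · push_neg at hz
      obtain ⟨bh, hbhB, hbh0, hbhS⟩ := hz
      have hmemf : bh ∈ B.filter (· ≠ 0) := mem_filter.mpr ⟨hbhB, hbh0⟩
      have hS' : ∑ b ∈ B.filter (· ≠ 0), (Function.update S bh (S bh - 1)) b ≤ N := by
        rw [Finset.sum_update_of_mem hmemf]
        have h2 := Finset.sum_eq_sum_sdiff_singleton_add hmemf S
        omega
      obtain ⟨m', ℓ', hm', hℓ', w', hwle', hrec'⟩ := ih B (Function.update S bh (S bh - 1)) hS'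
      have hm'R : (0:ℝ) ≤ (m':ℝ) := Nat.cast_nonneg m'
      have hmcast : ((1 + 3*m' : ℕ) : ℝ) = 1 + 3*(m':ℝ) := by push_cast; ring
      refine ⟨1 + 3*m', 2*ℓ'+2, by omega, by omega, samp ℓ' w', samp_le ℓ' w' hwle', ?_⟩
      intro D hD t q hq
      have hq0 : (0:ℝ) < q := by linarith
      have hq1 : (1:ℝ) ≤ q := by linarith
      have hqz : (q:ℝ) ≠ 0 := by linarith
      -- trivial case t = 0
      by_cases ht0 : t = 0
      · subst ht0
        refine ⟨⟨2*ℓ', by omega⟩, fun w'' hw'' => ?_⟩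
        rw [samp_T, Nat.le_zero.mp hw'', hmcast]
        nlinarith [norm_nonneg (Fz B D q 0)]
      · have ht1 : 1 ≤ t := by omega
        rcases lt_or_gt_of_ne hbh0 with hneg | hpos
        · -- backward case : bh < 0
          set D' : ℤ → Polynomial ℂ :=
            fun b => C ((q ^ b : ℝ) : ℂ) * (D b).comp (X + C 1) - C ((q ^ bh : ℝ) : ℂ) * D b
            with hD'def
          have hD' : ∀ b ∈ B, (D' b).degree < ((Function.update S bh (S bh - 1)) b : WithBot ℕ) := by
            intro b hb
            by_cases hbbh : b = bh
            · subst hbbh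
              rw [Function.update_self]
              have he : D' b = C ((q ^ b : ℝ) : ℂ) * ((D b).comp (X + C 1) - D b) := by
                rw [hD'def]; rw [mul_sub]
              rw [he]
              have hdlt : ((D b).comp (X + C 1) - D b).degree < ((S b - 1 : ℕ) : WithBot ℕ) := by
                apply comp1_sub_degree
                have : (S b - 1) + 1 = S b := by omega
                rw [this]
                exact hD b hb
              calc (C ((q ^ b : ℝ) : ℂ) * ((D b).comp (X + C 1) - D b)).degree
                  ≤ (C ((q ^ b : ℝ) : ℂ)).degree + ((D b).comp (X + C 1) - D b).degree :=
                    degree_mul_le _ _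
                _ ≤ 0 + ((D b).comp (X + C 1) - D b).degree := by
                    exact add_le_add_left degree_C_le _
                _ = ((D b).comp (X + C 1) - D b).degree := zero_add _
                _ < _ := hdlt
            · rw [Function.update_of_ne hbbh]
              refine lt_of_le_of_lt (degree_sub_le _ _) (max_lt ?_ ?_)
              · calc (C ((q ^ b : ℝ) : ℂ) * (D b).comp (X + C 1)).degree
                    ≤ (C ((q ^ b : ℝ) : ℂ)).degree + ((D b).comp (X + C 1)).degree :=
                      degree_mul_le _ _
                  _ ≤ 0 + ((D b).comp (X + C 1)).degree := add_le_add_left degree_C_le _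
                  _ = (D b).degree := by rw [zero_add, comp1_degree]
                  _ < _ := hD b hb
              · calc (C ((q ^ bh : ℝ) : ℂ) * D b).degree
                    ≤ (C ((q ^ bh : ℝ) : ℂ)).degree + (D b).degree := degree_mul_le _ _
                  _ ≤ 0 + (D b).degree := add_le_add_left degree_C_le _
                  _ = (D b).degree := zero_add _
                  _ < _ := hD b hb
          obtain ⟨j, hj⟩ := hrec' D' hD' (t-1) q hq
          set p := w' j (t-1) with hpdef
          have hple : p ≤ t - 1 := hwle' j (t-1)
          have hgid : ∀ u : ℕ, Fz B D' q u = Fz B D q (u+1) - ((q ^ bh : ℝ) : ℂ) * Fz B D q u :=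
            fun u => bwd_identity B D q hq bh u
          have hhalf : ‖(((q ^ bh : ℝ) : ℂ))‖ ≤ 1/2 := by
            rw [Complex.norm_real, Real.norm_eq_abs, abs_of_pos (zpow_pos hq0 _)]
            calc (q:ℝ) ^ bh ≤ q ^ (-1 : ℤ) := zpow_le_zpow_right₀ hq1 (by omega)
            _ = q⁻¹ := zpow_neg_one q
            _ ≤ 2⁻¹ := by
                apply inv_anti₀ (by norm_num) hq
            _ = 1/2 := by norm_num
          have hrect : ∀ u < t, ‖(Fz B D q (u+1))‖ ≤
              (1/2) * ‖(Fz B D q u)‖ + ‖(Fz B D' q u)‖ := by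
            intro u _
            have he : Fz B D q (u+1) = Fz B D' q u + ((q ^ bh : ℝ) : ℂ) * Fz B D q u := by
              rw [hgid u]; ring
            rw [he]
            calc ‖(Fz B D' q u + ((q ^ bh : ℝ) : ℂ) * Fz B D q u)‖
                ≤ ‖(Fz B D' q u)‖ + ‖(((q ^ bh : ℝ) : ℂ) * Fz B D q u)‖ :=
                  norm_add_le _ _
            _ = ‖(Fz B D' q u)‖ +
                  ‖(((q ^ bh : ℝ) : ℂ))‖ * ‖(Fz B D q u)‖ := by rw [norm_mul]
            _ ≤ (1/2) * ‖(Fz B D q u)‖ + ‖(Fz B D' q u)‖ := by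
                  nlinarith [norm_nonneg (Fz B D q u), hhalf]
          have hgb : ∀ u < t, ‖(Fz B D' q u)‖ ≤
              (m':ℝ) * ‖(Fz B D' q p)‖ := fun u hu => hj u (by omega)
          have hiter := iter_bwd (Fz B D q) (Fz B D' q) t
            ((m':ℝ) * ‖(Fz B D' q p)‖) (by positivity) hrect hgb
          have hgp : ‖(Fz B D' q p)‖ ≤
              ‖(Fz B D q (p+1))‖ + (1/2) * ‖(Fz B D q p)‖ := by
            rw [hgid p, sub_eq_add_neg]
            calc ‖(Fz B D q (p+1) + -(((q ^ bh : ℝ) : ℂ) * Fz B D q p))‖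
                ≤ ‖(Fz B D q (p+1))‖ +
                  ‖(-(((q ^ bh : ℝ) : ℂ) * Fz B D q p))‖ := norm_add_le _ _
            _ = ‖(Fz B D q (p+1))‖ +
                  ‖((q ^ bh : ℝ) : ℂ)‖ * ‖(Fz B D q p)‖ := by
                  rw [norm_neg, norm_mul]
            _ ≤ _ := by nlinarith [norm_nonneg (Fz B D q p), hhalf]
          have hcomb : ∀ w'' ≤ t, ‖(Fz B D q w'')‖ ≤
              ‖(Fz B D q 0)‖ + 2*(m':ℝ)*‖(Fz B D q (p+1))‖ +
                (m':ℝ) * ‖(Fz B D q p)‖ := by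
            intro w'' hw''
            have := hiter w'' hw''
            nlinarith
          rcases pick3 (Fz B D q) t (p+1) p 0 (m':ℝ) hm'R hcomb with hc | hc | hc
          · refine ⟨⟨2*ℓ'+1, by omega⟩, fun w'' hw'' => ?_⟩
            rw [samp_Z, hmcast]
            exact hc w'' hw''
          · refine ⟨⟨ℓ'+(j:ℕ), by omega⟩, fun w'' hw'' => ?_⟩
            rw [samp_Q, hmcast]
            have : min (w' j (t-1) + 1) t = p + 1 := by
              rw [← hpdef]; omega
            rw [this]
            exact hc w'' hw''
          · refine ⟨⟨(j:ℕ), by omega⟩, fun w'' hw'' => ?_⟩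
            rw [samp_P, hmcast]
            exact hc w'' hw''
        · -- forward case : bh > 0
          set D' : ℤ → Polynomial ℂ :=
            fun b => D b - C ((q ^ (b - bh) : ℝ) : ℂ) * (D b).comp (X + C 1)
            with hD'def
          have hD' : ∀ b ∈ B, (D' b).degree < ((Function.update S bh (S bh - 1)) b : WithBot ℕ) := by
            intro b hb
            by_cases hbbh : b = bh
            · subst hbbh
              rw [Function.update_self]
              have he : D' b = -((D b).comp (X + C 1) - D b) := by
                rw [hD'def]
                simp only [sub_self, zpow_zero]
                norm_num
              rw [he, degree_neg]
              apply comp1_sub_degree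
              have : (S b - 1) + 1 = S b := by omega
              rw [this]
              exact hD b hb
            · rw [Function.update_of_ne hbbh]
              refine lt_of_le_of_lt (degree_sub_le _ _) (max_lt (hD b hb) ?_)
              calc (C ((q ^ (b - bh) : ℝ) : ℂ) * (D b).comp (X + C 1)).degree
                  ≤ (C ((q ^ (b - bh) : ℝ) : ℂ)).degree + ((D b).comp (X + C 1)).degree :=
                    degree_mul_le _ _
                _ ≤ 0 + ((D b).comp (X + C 1)).degree := add_le_add_left degree_C_le _
                _ = (D b).degree := by rw [zero_add, comp1_degree]
                _ < _ := hD b hb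
          obtain ⟨j, hj⟩ := hrec' D' hD' (t-1) q hq
          set p := w' j (t-1) with hpdef
          have hple : p ≤ t - 1 := hwle' j (t-1)
          have hgid : ∀ u : ℕ, Fz B D' q u = Fz B D q u - ((q ^ (-bh) : ℝ) : ℂ) * Fz B D q (u+1) :=
            fun u => fwd_identity B D q hq bh u
          have hhalf : ‖(((q ^ (-bh) : ℝ) : ℂ))‖ ≤ 1/2 := by
            rw [Complex.norm_real, Real.norm_eq_abs, abs_of_pos (zpow_pos hq0 _)]
            calc (q:ℝ) ^ (-bh) ≤ q ^ (-1 : ℤ) := zpow_le_zpow_right₀ hq1 (by omega)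
            _ = q⁻¹ := zpow_neg_one q
            _ ≤ 2⁻¹ := by apply inv_anti₀ (by norm_num) hq
            _ = 1/2 := by norm_num
          have hrect : ∀ u < t, ‖(Fz B D q u)‖ ≤
              (1/2) * ‖(Fz B D q (u+1))‖ + ‖(Fz B D' q u)‖ := by
            intro u _
            have he : Fz B D q u = Fz B D' q u + ((q ^ (-bh) : ℝ) : ℂ) * Fz B D q (u+1) := by
              rw [hgid u]; ring
            rw [he]
            calc ‖(Fz B D' q u + ((q ^ (-bh) : ℝ) : ℂ) * Fz B D q (u+1))‖
                ≤ ‖(Fz B D' q u)‖ +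
                  ‖(((q ^ (-bh) : ℝ) : ℂ) * Fz B D q (u+1))‖ := norm_add_le _ _
            _ = ‖(Fz B D' q u)‖ +
                  ‖(((q ^ (-bh) : ℝ) : ℂ))‖ * ‖(Fz B D q (u+1))‖ := by
                  rw [norm_mul]
            _ ≤ (1/2) * ‖(Fz B D q (u+1))‖ + ‖(Fz B D' q u)‖ := by
                  nlinarith [norm_nonneg (Fz B D q (u+1)), hhalf]
          have hgb : ∀ u < t, ‖(Fz B D' q u)‖ ≤
              (m':ℝ) * ‖(Fz B D' q p)‖ := fun u hu => hj u (by omega)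
          have hiter := iter_fwd (Fz B D q) (Fz B D' q) t
            ((m':ℝ) * ‖(Fz B D' q p)‖) (by positivity) hrect hgb
          have hgp : ‖(Fz B D' q p)‖ ≤
              ‖(Fz B D q p)‖ + (1/2) * ‖(Fz B D q (p+1))‖ := by
            rw [hgid p, sub_eq_add_neg]
            calc ‖(Fz B D q p + -(((q ^ (-bh) : ℝ) : ℂ) * Fz B D q (p+1)))‖
                ≤ ‖(Fz B D q p)‖ +
                  ‖(-(((q ^ (-bh) : ℝ) : ℂ) * Fz B D q (p+1)))‖ := norm_add_le _ _
            _ = ‖(Fz B D q p)‖ +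
                  ‖((q ^ (-bh) : ℝ) : ℂ)‖ * ‖(Fz B D q (p+1))‖ := by
                  rw [norm_neg, norm_mul]
            _ ≤ _ := by nlinarith [norm_nonneg (Fz B D q (p+1)), hhalf]
          have hcomb : ∀ w'' ≤ t, ‖(Fz B D q w'')‖ ≤
              ‖(Fz B D q t)‖ + 2*(m':ℝ)*‖(Fz B D q p)‖ +
                (m':ℝ) * ‖(Fz B D q (p+1))‖ := by
            intro w'' hw''
            have := hiter w'' hw''
            nlinarith
          rcases pick3 (Fz B D q) t p (p+1) t (m':ℝ) hm'R hcomb with hc | hc | hc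
          · refine ⟨⟨2*ℓ', by omega⟩, fun w'' hw'' => ?_⟩
            rw [samp_T, hmcast]
            exact hc w'' hw''
          · refine ⟨⟨(j:ℕ), by omega⟩, fun w'' hw'' => ?_⟩
            rw [samp_P, hmcast]
            exact hc w'' hw''
          · refine ⟨⟨ℓ'+(j:ℕ), by omega⟩, fun w'' hw'' => ?_⟩
            rw [samp_Q, hmcast]
            have : min (w' j (t-1) + 1) t = p + 1 := by
              rw [← hpdef]; omega
            rw [this]
            exact hc w'' hw''

/-- Given exponent data `a i ∈ ℕ`, `b i ∈ ℤ`, there exist positive integers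
`m`, `ℓ` and functions `w i : ℕ → ℕ` with `w i t ≤ t`, such that for every coefficient tuple
`c`, every `t ∈ ℕ` and every real `q ≥ 2`,
`max_{0 ≤ w' ≤ t} |h w'| ≤ m * max_{1 ≤ i ≤ ℓ} |h (w i t)|`,
where `h w = ∑ i, c i * w ^ (a i) * q ^ (b i * w)`.  (The bound by the maximum over the
finite index set is expressed by the existence of an index `i` realizing it.) -/
theorem stmt_1 (k : ℕ) (a : Fin k → ℕ) (b : Fin k → ℤ) :
    ∃ m ℓ : ℕ, 0 < m ∧ 0 < ℓ ∧
      ∃ w : Fin ℓ → ℕ → ℕ, (∀ i t, w i t ≤ t) ∧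
        ∀ (c : Fin k → ℂ) (t : ℕ) (q : ℝ), 2 ≤ q →
          ∃ i : Fin ℓ, ∀ w' : ℕ, w' ≤ t →
            ‖(∑ j, c j * (w' : ℂ) ^ (a j) * ((q ^ (b j * (w' : ℤ)) : ℝ) : ℂ))‖ ≤
              (m : ℝ) *
                ‖(∑ j, c j * ((w i t : ℕ) : ℂ) ^ (a j) *
                  ((q ^ (b j * ((w i t : ℕ) : ℤ)) : ℝ) : ℂ))‖ := by
  classical
  set A := (univ : Finset (Fin k)).sup a with hA
  set B := (univ : Finset (Fin k)).image b with hB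
  set S : ℤ → ℕ := fun _ => A + 1 with hS
  obtain ⟨m, ℓ, hm, hℓ, w, hwle, hmain⟩ := key (∑ b' ∈ B.filter (· ≠ 0), S b') B S le_rfl
  refine ⟨m, ℓ, hm, hℓ, w, hwle, ?_⟩
  intro c t q hq
  set D : ℤ → Polynomial ℂ :=
    fun b' => ∑ j ∈ univ.filter (fun j => b j = b'), C (c j) * X ^ (a j) with hD
  have hDdeg : ∀ b' ∈ B, (D b').degree < (S b' : WithBot ℕ) := by
    intro b' _
    have h1 : (D b').degree ≤ (A : WithBot ℕ) := by
      refine le_trans (degree_sum_le _ _) (Finset.sup_le ?_)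
      intro j hj
      exact le_trans (degree_C_mul_X_pow_le (a j) (c j))
        (by exact_mod_cast Finset.le_sup (mem_univ j))
    refine lt_of_le_of_lt h1 ?_
    exact_mod_cast Nat.lt_succ_self A
  have hFeq : ∀ u : ℕ,
      (∑ j, c j * (u : ℂ) ^ (a j) * ((q ^ (b j * (u : ℤ)) : ℝ) : ℂ)) = Fz B D q u := by
    intro u
    rw [Fz]
    rw [← Finset.sum_fiberwise_of_maps_to (g := b) (t := B)
      (fun j _ => Finset.mem_image_of_mem b (mem_univ j))
      (fun j => c j * (u : ℂ) ^ (a j) * ((q ^ (b j * (u : ℤ)) : ℝ) : ℂ))]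
    refine Finset.sum_congr rfl ?_
    intro b' _
    rw [hD]
    rw [eval_finset_sum, Finset.sum_mul]
    refine Finset.sum_congr rfl ?_
    intro j hj
    have hbj : b j = b' := (mem_filter.mp hj).2
    rw [eval_mul, eval_C, eval_pow, eval_X, hbj]
  obtain ⟨i, hi⟩ := hmain D hDdeg t q hq
  refine ⟨i, fun w' hw' => ?_⟩
  rw [hFeq, hFeq]
  exact hi w' hw'
end

section
/- For every d ∈ ℕ there exist positive integers ℓ and m and a natural number t_0 such that the following holds for every polynomial h ∈ ℂ[X] of degree at most d and every integer t ≥ t_0: setting s = ⌊t/ℓ⌋, there exists w_0 ∈ {s, 2s, …, (ℓ−1)s} such that |h(w)| ≤ m · |h(w_0)| for every integer w with 0 ≤ w ≤ t. -/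
/-!
Interpolate `h` at the `d + 1` nodes `s, 2s, …, (d+1)s`, where `s = ⌊t/ℓ⌋` with `ℓ = d + 2`.
Every point `w ∈ [0, t]` lies within `2ℓs` of each node while distinct nodes are at least `s`
apart, so each Lagrange basis polynomial is bounded by `(2ℓ)^d` on `[0, t]`. Hence `|h(w)|` is
at most `(d+1)(2ℓ)^d` times the largest value of `|h|` at the nodes, which is attained at some
`w₀ = j s` with `1 ≤ j ≤ d + 1 = ℓ - 1`.
-/

open Polynomial Finset

namespace Lagrange

variable {F ι : Type*} [NormedField F] [DecidableEq ι] {s : Finset ι} {v : ι → F}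

theorem norm_eval_basis_le {δ D : ℝ} (hδ : 0 < δ)
    (hsep : ∀ i ∈ s, ∀ j ∈ s, i ≠ j → δ ≤ ‖v i - v j‖) {x : F}
    (hx : ∀ j ∈ s, ‖x - v j‖ ≤ D) {i : ι} (hi : i ∈ s) :
    ‖(Lagrange.basis s v i).eval x‖ ≤ (D / δ) ^ (#s - 1) := by
  have hfactor : ∀ j ∈ s.erase i, ‖(basisDivisor (v i) (v j)).eval x‖ ≤ D / δ := by
    intro j hj
    obtain ⟨hji, hj⟩ := mem_erase.mp hj
    have hsep' := hsep i hi j hj hji.symm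
    rw [basisDivisor, eval_mul, eval_C, eval_sub, eval_X, eval_C, norm_mul, norm_inv,
      inv_mul_eq_div]
    exact div_le_div₀ ((norm_nonneg _).trans (hx j hj)) (hx j hj) hδ hsep'
  calc ‖(Lagrange.basis s v i).eval x‖
      = ∏ j ∈ s.erase i, ‖(basisDivisor (v i) (v j)).eval x‖ := by
        rw [Lagrange.basis, eval_prod, norm_prod]
    _ ≤ ∏ _j ∈ s.erase i, D / δ := prod_le_prod (fun _ _ ↦ norm_nonneg _) hfactor
    _ = (D / δ) ^ (#s - 1) := by rw [prod_const, card_erase_of_mem hi]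

theorem norm_eval_le_of_degree_lt (hvs : Set.InjOn v s) {p : F[X]} (hp : p.degree < #s)
    (x : F) {M C : ℝ} (hM : ∀ i ∈ s, ‖p.eval (v i)‖ ≤ M)
    (hC : ∀ i ∈ s, ‖(Lagrange.basis s v i).eval x‖ ≤ C) :
    ‖p.eval x‖ ≤ #s * C * M := by
  calc ‖p.eval x‖
      = ‖∑ i ∈ s, p.eval (v i) * (Lagrange.basis s v i).eval x‖ := by
        conv_lhs => rw [eq_interpolate hvs hp]
        simp only [interpolate_apply, eval_finsetSum, eval_mul, eval_C]
    _ ≤ ∑ i ∈ s, ‖p.eval (v i) * (Lagrange.basis s v i).eval x‖ := norm_sum_le _ _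
    _ ≤ ∑ _i ∈ s, M * C := sum_le_sum fun i hi ↦ by
        rw [norm_mul]
        exact mul_le_mul (hM i hi) (hC i hi) (norm_nonneg _) ((norm_nonneg _).trans (hM i hi))
    _ = #s * C * M := by rw [sum_const, nsmul_eq_mul]; ring

end Lagrange

theorem norm_natCast_sub_natCast (a b : ℕ) : ‖(a : ℂ) - b‖ = |(a : ℝ) - b| := by
  rw [← Complex.ofReal_natCast, ← Complex.ofReal_natCast, ← Complex.ofReal_sub,
    Complex.norm_real, Real.norm_eq_abs]

theorem norm_eval_le_of_norm_eval_at_multiples_le {h : ℂ[X]} {d s R w : ℕ} {M : ℝ}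
    (hd : h.natDegree ≤ d) (hs : 0 < s) (hR : d + 1 ≤ R) (hw : w ≤ R * s)
    (hM : ∀ k ∈ Icc 1 (d + 1), ‖h.eval ((k * s : ℕ) : ℂ)‖ ≤ M) :
    ‖h.eval (w : ℂ)‖ ≤ (d + 1) * R ^ d * M := by
  set v : ℕ → ℂ := fun k ↦ ((k * s : ℕ) : ℂ)
  have hcard : #(Icc 1 (d + 1)) = d + 1 := by simp
  have hvs : Set.InjOn v (Icc 1 (d + 1)) := fun a _ b _ hab ↦
    Nat.eq_of_mul_eq_mul_right hs (Nat.cast_injective hab)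
  have hdeg : h.degree < #(Icc 1 (d + 1)) := by
    rw [hcard]
    exact (degree_le_natDegree).trans_lt (by exact_mod_cast Nat.lt_succ_of_le hd)
  have hs' : (0 : ℝ) < s := by exact_mod_cast hs
  have hsep : ∀ i ∈ Icc 1 (d + 1), ∀ j ∈ Icc 1 (d + 1), i ≠ j → (s : ℝ) ≤ ‖v i - v j‖ := by
    intro i _ j _ hij
    have hij' : (1 : ℝ) ≤ |(i : ℝ) - j| := by
      have : (1 : ℤ) ≤ |(i : ℤ) - j| := Int.one_le_abs (sub_ne_zero.mpr (by exact_mod_cast hij))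
      exact_mod_cast this
    rw [norm_natCast_sub_natCast]
    push_cast
    rw [← sub_mul, abs_mul, abs_of_pos hs']
    nlinarith
  have hdist : ∀ k ∈ Icc 1 (d + 1), ‖(w : ℂ) - v k‖ ≤ R * s := by
    intro k hk
    have hk : k * s ≤ R * s := Nat.mul_le_mul_right s ((mem_Icc.mp hk).2.trans hR)
    rw [norm_natCast_sub_natCast, ← Nat.cast_mul R s]
    exact abs_sub_le_of_nonneg_of_le (by positivity) (by exact_mod_cast hw)
      (by positivity) (by exact_mod_cast hk)
  have hbasis :
      ∀ i ∈ Icc 1 (d + 1), ‖(Lagrange.basis (Icc 1 (d + 1)) v i).eval (w : ℂ)‖ ≤ R ^ d := by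
    intro i hi
    have := Lagrange.norm_eval_basis_le hs' hsep hdist hi
    rwa [hcard, Nat.add_sub_cancel, mul_div_cancel_right₀ _ hs'.ne'] at this
  have := Lagrange.norm_eval_le_of_degree_lt hvs hdeg (w : ℂ) hM hbasis
  rw [hcard] at this
  exact_mod_cast this

theorem le_two_mul_mul_div {t ℓ : ℕ} (hℓ0 : 0 < ℓ) (hℓ : ℓ ≤ t) : t ≤ 2 * ℓ * (t / ℓ) := by
  have hlt := Nat.lt_mul_div_succ t hℓ0
  have hq : 1 ≤ t / ℓ := (Nat.le_div_iff_mul_le hℓ0).mpr (by omega)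
  nlinarith

/-- For every `d ∈ ℕ` there exist positive integers `ℓ`, `m` and a natural
number `t₀` such that for every complex polynomial `h` of degree at most `d` and every
integer `t ≥ t₀`, setting `s = ⌊t/ℓ⌋`, there exists `w₀ ∈ {s, 2s, …, (ℓ-1)s}` (i.e.
`w₀ = j * s` with `1 ≤ j ≤ ℓ - 1`) such that `|h w| ≤ m * |h w₀|` for every integer
`0 ≤ w ≤ t`. -/
theorem stmt_3 (d : ℕ) :
    ∃ ℓ m t₀ : ℕ, 0 < ℓ ∧ 0 < m ∧
      ∀ h : Polynomial ℂ, h.natDegree ≤ d →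
        ∀ t : ℕ, t₀ ≤ t →
          ∃ j : ℕ, 1 ≤ j ∧ j ≤ ℓ - 1 ∧
            ∀ w : ℕ, w ≤ t →
              ‖h.eval (w : ℂ)‖ ≤
                (m : ℝ) * ‖h.eval ((j * (t / ℓ) : ℕ) : ℂ)‖ := by
  refine ⟨d + 2, (d + 1) * (2 * (d + 2)) ^ d, d + 2, by omega, by positivity, ?_⟩
  intro h hd t ht
  have hs : 0 < t / (d + 2) := Nat.div_pos ht (by omega)
  obtain ⟨j, hj, hjmax⟩ := (Icc 1 (d + 1)).exists_max_image
    (fun k ↦ ‖h.eval ((k * (t / (d + 2)) : ℕ) : ℂ)‖) ⟨1, by simp⟩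
  obtain ⟨hj1, hjd⟩ := mem_Icc.mp hj
  refine ⟨j, hj1, by omega, fun w hw ↦ ?_⟩
  have := norm_eval_le_of_norm_eval_at_multiples_le hd hs (by omega)
    (hw.trans (le_two_mul_mul_div (by omega) ht)) hjmax
  exact_mod_cast this
end

section
/- Suppose that for i = 1, …, k we have a_i ∈ ℕ and b_i ∈ ℤ with b_i > 0 for every i. Then there exists ℓ ∈ ℕ such that for every tuple c = (c_1, …, c_k) ∈ ℂ^k, every t ∈ ℕ and every real number q ≥ 2 there exists an integer w_1 with max(0, t−ℓ+1) ≤ w_1 ≤ t such that |h(w)| ≤ q^{(ℓ−t+w)/2} · |h(w_1)| for every integer w with 0 ≤ w ≤ t, where h(w) = ∑_{i=1}^k c_i · w^{a_i} · q^{b_i·w}. -/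
set_option maxHeartbeats 1000000
open Polynomial Finset
noncomputable def HH (q : ℝ) (B : ℕ) (P : ℕ → Polynomial ℂ) (w : ℕ) : ℂ :=
  ∑ j ∈ Finset.range (B + 1), (P j).eval (w : ℂ) * (q : ℂ) ^ (j * w)

noncomputable def mu (p : Polynomial ℂ) : ℕ := if p = 0 then 0 else p.natDegree + 1

lemma window_mem (t L : ℕ) : t ∈ Finset.Icc (t + 1 - (L + 1)) t := by
  simp [Finset.mem_Icc]

lemma window_ne (t L : ℕ) : (Finset.Icc (t + 1 - (L + 1)) t).Nonempty := ⟨t, window_mem t L⟩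

lemma HH_zero {B : ℕ} {P : ℕ → Polynomial ℂ} (h0 : ∀ j ∈ Finset.range (B + 1), P j = 0)
    (q : ℝ) (w : ℕ) : HH q B P w = 0 :=
  Finset.sum_eq_zero fun j hj => by rw [h0 j hj]; simp

lemma abs_sub_le' (x y : ℂ) : ‖x - y‖ ≤ ‖x‖ + ‖y‖ := by
  simpa using norm_sub_le x y

lemma natDegree_comp_X_add_one_le (p : Polynomial ℂ) : (p.comp (X + 1)).natDegree ≤ p.natDegree := by
  have h0 := Polynomial.natDegree_comp_le (p := p) (q := X + 1)
  have h1 : (X + 1 : Polynomial ℂ).natDegree = 1 := by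
    simpa using Polynomial.natDegree_X_add_C (1 : ℂ)
  rw [h1, mul_one] at h0; exact h0

lemma diff_natDegree_lt {p : Polynomial ℂ} (hp : p ≠ 0) (hd : p.natDegree ≠ 0)
    (hD : p.comp (X + 1) - p ≠ 0) : (p.comp (X + 1) - p).natDegree < p.natDegree := by
  have h1 : (X + 1 : Polynomial ℂ).natDegree = 1 := by
    simpa using Polynomial.natDegree_X_add_C (1 : ℂ)
  have hnd : (p.comp (X + 1)).natDegree = p.natDegree := by
    rw [Polynomial.natDegree_comp, h1, mul_one]
  have hcne : p.comp (X + 1) ≠ 0 := by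
    intro h; rw [h] at hnd; simp at hnd; exact hd hnd.symm
  have hdeg : (p.comp (X + 1)).degree = p.degree := by
    rw [Polynomial.degree_eq_natDegree hcne, Polynomial.degree_eq_natDegree hp, hnd]
  have hlc : (p.comp (X + 1)).leadingCoeff = p.leadingCoeff := by
    have := Polynomial.leadingCoeff_comp (p := p) (q := X + 1) (by rw [h1]; norm_num)
    rw [this]
    have h2 : (X + 1 : Polynomial ℂ).leadingCoeff = 1 := by
      simpa using (Polynomial.monic_X_add_C (1 : ℂ)).leadingCoeff
    simp [h2]
  have := Polynomial.degree_sub_lt hdeg hcne hlc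
  rw [hdeg] at this
  exact Polynomial.natDegree_lt_natDegree hD this

lemma core (B m : ℕ) : ∀ P : ℕ → Polynomial ℂ, P 0 = 0 →
    (∑ j ∈ Finset.range (B + 1), mu (P j)) ≤ m → ∀ q : ℝ, 2 ≤ q → ∀ t w : ℕ, w ≤ t →
    ‖HH q B P w‖ * Real.sqrt q ^ (t - w) ≤
      Real.sqrt q ^ ((2 * B + 6) * m + 1) *
        ((Finset.Icc (t + 1 - ((2 * B + 6) * m + 1)) t).sup' (window_ne t _)
          fun u => ‖HH q B P u‖) := by
  induction m with
  | zero =>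
    intro P hP0 hmu q hq t w hwt
    have h0 : ∀ j ∈ Finset.range (B + 1), P j = 0 := by
      intro j hj
      have h1 : mu (P j) = 0 := Finset.sum_eq_zero_iff.mp (Nat.le_zero.mp hmu) j hj
      by_contra hp; simp [mu, hp] at h1
    rw [HH_zero h0, norm_zero, zero_mul]
    exact mul_nonneg (pow_nonneg (Real.sqrt_nonneg q) _)
      (le_trans (norm_nonneg (HH q B P t))
        (Finset.le_sup' (fun u => ‖HH q B P u‖) (window_mem t ((2 * B + 6) * 0))))
  | succ m IH =>
    intro P hP0 hmu q hq t w hwt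
    have hq0 : (0:ℝ) < q := by linarith
    have hq1 : (1:ℝ) ≤ q := by linarith
    set s := Real.sqrt q with hs_def
    have hs0 : 0 < s := Real.sqrt_pos.mpr hq0
    have hsq : s ^ 2 = q := Real.sq_sqrt (le_of_lt hq0)
    have hs1 : 1 ≤ s := by nlinarith [hs0.le]
    have hs43 : 4 ≤ 3 * s := by nlinarith [hs0.le]
    by_cases hzero : ∀ j ∈ Finset.range (B + 1), P j = 0
    · rw [HH_zero hzero, norm_zero, zero_mul]
      exact mul_nonneg (pow_nonneg hs0.le _)
        (le_trans (norm_nonneg (HH q B P t))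
          (Finset.le_sup' (fun u => ‖HH q B P u‖) (window_mem t ((2 * B + 6) * (m+1)))))
    · push_neg at hzero
      obtain ⟨js, hjsmem, hjsne⟩ := hzero
      have hjsB : js ≤ B := Nat.lt_succ_iff.mp (Finset.mem_range.mp hjsmem)
      have hjs1 : 1 ≤ js := by
        rcases Nat.eq_zero_or_pos js with h | h
        · subst h; exact absurd hP0 hjsne
        · exact h
      set z : ℂ := (q : ℂ) with hz_def
      set Q : ℕ → Polynomial ℂ := fun j => z ^ j • (P j).comp (X + 1) - z ^ js • P j with hQ_def
      have hQ0 : Q 0 = 0 := by simp [hQ_def, hP0]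
      have hmuQle : ∀ j, mu (Q j) ≤ mu (P j) := by
        intro j
        by_cases hPj : P j = 0
        · simp [hQ_def, hPj, mu]
        · have hd : (Q j).natDegree ≤ (P j).natDegree := by
            refine le_trans (Polynomial.natDegree_sub_le _ _) ?_
            exact max_le (le_trans (Polynomial.natDegree_smul_le _ _) (natDegree_comp_X_add_one_le _))
              (Polynomial.natDegree_smul_le _ _)
          by_cases hQj : Q j = 0
          · simp [mu, hQj, hPj]
          · simp only [mu, if_neg hQj, if_neg hPj]; omega
      have hmuQlt : mu (Q js) < mu (P js) := by
        have hQjs : Q js = z ^ js • ((P js).comp (X + 1) - P js) := by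
          simp only [hQ_def, smul_sub]
        have hmuP : mu (P js) = (P js).natDegree + 1 := by simp [mu, hjsne]
        by_cases hdeg : (P js).natDegree = 0
        · obtain ⟨cc, hc⟩ := Polynomial.natDegree_eq_zero.mp hdeg
          have hQ0' : Q js = 0 := by rw [hQjs, ← hc]; simp
          have hmuQ0 : mu (Q js) = 0 := by simp [mu, hQ0']
          omega
        · have hle : mu (Q js) ≤ (P js).natDegree := by
            by_cases hQj : Q js = 0
            · simp [mu, hQj]
            · have hD : (P js).comp (X + 1) - P js ≠ 0 := by
                intro h; rw [hQjs, h, smul_zero] at hQj; exact hQj rfl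
              have h2 := diff_natDegree_lt hjsne hdeg hD
              have h3 : (Q js).natDegree ≤ ((P js).comp (X + 1) - P js).natDegree := by
                rw [hQjs]; exact Polynomial.natDegree_smul_le _ _
              simp only [mu, if_neg hQj]; omega
          omega
      have hmuQ : ∑ j ∈ Finset.range (B + 1), mu (Q j) ≤ m := by
        have hlt := Finset.sum_lt_sum (fun j _ => hmuQle j) ⟨js, hjsmem, hmuQlt⟩
        omega
      have hHQ : ∀ u : ℕ, HH q B Q u = HH q B P (u + 1) - z ^ js * HH q B P u := by
        intro u
        rw [HH, HH, HH, Finset.mul_sum, ← Finset.sum_sub_distrib]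
        refine Finset.sum_congr rfl fun j hj => ?_
        have he : (Q j).eval (u : ℂ) = z ^ j * (P j).eval ((u : ℂ) + 1) - z ^ js * (P j).eval (u : ℂ) := by
          simp [hQ_def, Polynomial.eval_comp, smul_eq_mul]
        rw [he]
        have hcast : ((u + 1 : ℕ) : ℂ) = (u : ℂ) + 1 := by push_cast; ring
        rw [hcast, show j * (u + 1) = j * u + j by ring, pow_add]
        ring
      set L' : ℕ := (2 * B + 6) * m + 1 with hL'def
      set L : ℕ := (2 * B + 6) * (m + 1) + 1 with hLdef
      have hLL' : L = L' + (2 * B + 6) := by rw [hLdef, hL'def]; ring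
      set M := (Finset.Icc (t + 1 - L) t).sup' (window_ne t ((2 * B + 6) * (m + 1)))
        (fun u => ‖HH q B P u‖) with hMdef
      have hPM : ∀ u, t + 1 - L ≤ u → u ≤ t → ‖HH q B P u‖ ≤ M := fun u h1 h2 =>
        Finset.le_sup' (fun u => ‖HH q B P u‖) (Finset.mem_Icc.mpr ⟨h1, h2⟩)
      have hMnn : 0 ≤ M := le_trans (norm_nonneg (HH q B P t)) (hPM t (by omega) le_rfl)
      set K := s ^ (L' + 2 * B + 2) * M with hKdef
      have honepow : ∀ n : ℕ, (1:ℝ) ≤ s ^ n := by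
        intro n
        have := pow_le_pow_right₀ hs1 (Nat.zero_le n)
        rwa [pow_zero] at this
      have hKnn : 0 ≤ K := mul_nonneg (pow_nonneg hs0.le _) hMnn
      have hMK : M ≤ K := by
        calc M = 1 * M := (one_mul M).symm
          _ ≤ s ^ (L' + 2 * B + 2) * M := mul_le_mul_of_nonneg_right (honepow _) hMnn
      have habsz : ∀ x : ℂ, ‖z ^ js * x‖ = q ^ js * ‖x‖ := by
        intro x
        rw [norm_mul, norm_pow]
        simp [hz_def, Complex.norm_real, abs_of_pos hq0]
      have hDelta : ∀ v, 1 ≤ t → v ≤ t - 1 → ‖HH q B Q v‖ * s ^ (t - 1 - v) ≤ K := by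
        intro v ht1 hv
        have hIH := IH Q hQ0 hmuQ q hq (t - 1) v hv
        have hsup : ((Finset.Icc (t - 1 + 1 - L') (t - 1)).sup' (window_ne (t-1) ((2 * B + 6) * m))
            fun u => ‖HH q B Q u‖) ≤ s ^ (2 * B + 2) * M := by
          apply Finset.sup'_le
          intro u hu
          obtain ⟨hu1, hu2⟩ := Finset.mem_Icc.mp hu
          have hmem : t + 1 - L ≤ u ∧ u ≤ t ∧ t + 1 - L ≤ u + 1 ∧ u + 1 ≤ t := by omega
          have hb1 := hPM u hmem.1 hmem.2.1
          have hb2 := hPM (u + 1) hmem.2.2.1 hmem.2.2.2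
          have hqB : q ^ js ≤ q ^ B := pow_le_pow_right₀ hq1 hjsB
          have hqB1 : (1:ℝ) ≤ q ^ B := by
            have := pow_le_pow_right₀ hq1 (Nat.zero_le B)
            rwa [pow_zero] at this
          have hsB : s ^ (2 * B + 2) = q ^ B * q := by
            rw [show 2 * B + 2 = 2 * (B + 1) by ring, pow_mul, hsq, pow_succ]
          calc ‖HH q B Q u‖
              = ‖HH q B P (u + 1) - z ^ js * HH q B P u‖ := by rw [hHQ u]
            _ ≤ ‖HH q B P (u + 1)‖ + ‖z ^ js * HH q B P u‖ := abs_sub_le' _ _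
            _ = ‖HH q B P (u + 1)‖ + q ^ js * ‖HH q B P u‖ := by rw [habsz]
            _ ≤ M + q ^ js * M := by
                have := mul_le_mul_of_nonneg_left hb1 (pow_nonneg hq0.le js)
                linarith
            _ ≤ s ^ (2 * B + 2) * M := by
                rw [hsB]
                nlinarith [mul_nonneg (sub_nonneg.mpr hqB) hMnn,
                  mul_nonneg (sub_nonneg.mpr hqB1) hMnn,
                  mul_nonneg (mul_nonneg (by linarith : (0:ℝ) ≤ q - 2)
                    (by positivity : (0:ℝ) ≤ q ^ B)) hMnn]
        calc ‖HH q B Q v‖ * s ^ (t - 1 - v)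
            ≤ s ^ L' * ((Finset.Icc (t - 1 + 1 - L') (t - 1)).sup' (window_ne (t-1) ((2 * B + 6) * m))
              fun u => ‖HH q B Q u‖) := hIH
          _ ≤ s ^ L' * (s ^ (2 * B + 2) * M) := mul_le_mul_of_nonneg_left hsup (pow_nonneg hs0.le _)
          _ = K := by rw [hKdef, ← mul_assoc, ← pow_add, show L' + (2 * B + 2) = L' + 2 * B + 2 by omega]
      have claim : ∀ j, j ≤ t → ‖HH q B P (t - j)‖ * s ^ j ≤ M + 3 * K := by
        intro j
        induction j with
        | zero =>
          intro _
          have := hPM t (by omega) le_rfl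
          simp only [Nat.sub_zero, pow_zero, mul_one]
          linarith
        | succ j IHj =>
          intro hj1
          have hjt : j ≤ t := by omega
          have ht1 : 1 ≤ t := by omega
          have hIHj := IHj hjt
          have hE : z ^ js * HH q B P (t - j - 1) = HH q B P (t - j) - HH q B Q (t - j - 1) := by
            have h := hHQ (t - j - 1)
            rw [show t - j - 1 + 1 = t - j by omega] at h
            rw [h]; ring
          have hA : q ^ js * ‖HH q B P (t - j - 1)‖ ≤
              ‖HH q B P (t - j)‖ + ‖HH q B Q (t - j - 1)‖ := by
            rw [← habsz, hE]; exact abs_sub_le' _ _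
          have hDb : ‖HH q B Q (t - j - 1)‖ * s ^ j ≤ K := by
            have h := hDelta (t - j - 1) ht1 (by omega)
            rwa [show t - 1 - (t - j - 1) = j by omega] at h
          have hsj : (0:ℝ) ≤ s ^ j := pow_nonneg hs0.le j
          have hXnn : (0:ℝ) ≤ ‖HH q B P (t - j - 1)‖ := norm_nonneg _
          have hqjs : s ^ 2 ≤ q ^ js := by
            rw [hsq]
            calc q = q ^ 1 := (pow_one q).symm
              _ ≤ q ^ js := pow_le_pow_right₀ hq1 hjs1
          have hcalc : s ^ 2 * (‖HH q B P (t - j - 1)‖ * s ^ j) ≤ M + 4 * K := by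
            calc s ^ 2 * (‖HH q B P (t - j - 1)‖ * s ^ j)
                = (s ^ 2 * ‖HH q B P (t - j - 1)‖) * s ^ j := by ring
              _ ≤ (q ^ js * ‖HH q B P (t - j - 1)‖) * s ^ j :=
                  mul_le_mul_of_nonneg_right (mul_le_mul_of_nonneg_right hqjs hXnn) hsj
              _ ≤ (‖HH q B P (t - j)‖ + ‖HH q B Q (t - j - 1)‖) * s ^ j :=
                  mul_le_mul_of_nonneg_right hA hsj
              _ = ‖HH q B P (t - j)‖ * s ^ j
                  + ‖HH q B Q (t - j - 1)‖ * s ^ j := by ring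
              _ ≤ (M + 3 * K) + K := add_le_add hIHj hDb
              _ = M + 4 * K := by ring
          have h4 : M + 4 * K ≤ s * (M + 3 * K) := by
            nlinarith [mul_nonneg (by linarith : (0:ℝ) ≤ s - 1) hMnn,
              mul_nonneg (by linarith : (0:ℝ) ≤ 3 * s - 4) hKnn]
          have hfin : s * (‖HH q B P (t - j - 1)‖ * s ^ (j + 1)) ≤ s * (M + 3 * K) := by
            calc s * (‖HH q B P (t - j - 1)‖ * s ^ (j + 1))
                = s ^ 2 * (‖HH q B P (t - j - 1)‖ * s ^ j) := by ring
              _ ≤ M + 4 * K := hcalc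
              _ ≤ s * (M + 3 * K) := h4
          have h5 := le_of_mul_le_mul_left hfin hs0
          rw [show t - (j + 1) = t - j - 1 by omega]
          exact h5
      have h1 := claim (t - w) (Nat.sub_le t w)
      rw [Nat.sub_sub_self hwt] at h1
      have h4s : (4:ℝ) ≤ s ^ 4 := by nlinarith [hsq]
      have h2 : M + 3 * K ≤ s ^ L * M := by
        have hSL : s ^ L * M = s ^ 4 * K := by
          rw [hKdef, ← mul_assoc, ← pow_add, show 4 + (L' + 2 * B + 2) = L by omega]
        nlinarith [hMK, hKnn, h4s, honepow 4]
      show ‖HH q B P w‖ * s ^ (t - w) ≤ s ^ L * M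
      linarith

/-- If all `b i > 0`, there exists `ℓ ∈ ℕ` such that for every coefficient
tuple `c`, every `t ∈ ℕ` and every real `q ≥ 2`, there is an integer `w₁` with
`max(0, t - ℓ + 1) ≤ w₁ ≤ t` (nat truncated subtraction `t + 1 - ℓ` equals that max) such
that `|h w| ≤ q ^ ((ℓ - t + w)/2) * |h w₁|` for every integer `0 ≤ w ≤ t`, where
`h w = ∑ i, c i * w ^ (a i) * q ^ (b i * w)`. -/
theorem stmt_4 (k : ℕ) (a : Fin k → ℕ) (b : Fin k → ℤ) (hb : ∀ i, 0 < b i) :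
    ∃ ℓ : ℕ, ∀ (c : Fin k → ℂ) (t : ℕ) (q : ℝ), 2 ≤ q →
      ∃ w₁ : ℕ, t + 1 - ℓ ≤ w₁ ∧ w₁ ≤ t ∧
        ∀ w : ℕ, w ≤ t →
          ‖∑ i, c i * (w : ℂ) ^ (a i) * ((q ^ (b i * (w : ℤ)) : ℝ) : ℂ)‖ ≤
            q ^ (((ℓ : ℝ) - (t : ℝ) + (w : ℝ)) / 2) *
              ‖∑ i, c i * (w₁ : ℂ) ^ (a i) *
                ((q ^ (b i * (w₁ : ℤ)) : ℝ) : ℂ)‖ := by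
  classical
  set A := Finset.univ.sup a with hA
  set B := Finset.univ.sup (fun i => (b i).toNat) with hB
  refine ⟨(2 * B + 6) * ((B + 1) * (A + 1)) + 1, ?_⟩
  intro c t q hq
  set L : ℕ := (2 * B + 6) * ((B + 1) * (A + 1)) + 1 with hL
  have hq0 : (0:ℝ) < q := by linarith
  set P : ℕ → Polynomial ℂ := fun j =>
    ∑ i ∈ Finset.univ.filter (fun i => (b i).toNat = j),
      Polynomial.C (c i) * Polynomial.X ^ (a i) with hP
  have hP0 : P 0 = 0 := by
    rw [hP]
    simp only []
    have : Finset.univ.filter (fun i : Fin k => (b i).toNat = 0) = ∅ := by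
      apply Finset.filter_eq_empty_iff.mpr
      intro i _
      have := hb i
      simp only [Int.toNat_eq_zero]
      omega
    rw [this, Finset.sum_empty]
  have hmu : (∑ j ∈ Finset.range (B + 1), mu (P j)) ≤ (B + 1) * (A + 1) := by
    have hmuj : ∀ j, mu (P j) ≤ A + 1 := by
      intro j
      by_cases hPj : P j = 0
      · simp [mu, hPj]
      · have hdeg : (P j).natDegree ≤ A := by
          rw [hP]
          apply Polynomial.natDegree_sum_le_of_forall_le
          intro i _
          refine le_trans (Polynomial.natDegree_C_mul_le _ _) ?_
          rw [Polynomial.natDegree_X_pow]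
          exact Finset.le_sup (f := a) (Finset.mem_univ i)
        simp only [mu, if_neg hPj]
        omega
    calc (∑ j ∈ Finset.range (B + 1), mu (P j)) ≤ ∑ _j ∈ Finset.range (B + 1), (A + 1) :=
          Finset.sum_le_sum fun j _ => hmuj j
      _ = (B + 1) * (A + 1) := by
          rw [Finset.sum_const, Finset.card_range, smul_eq_mul]
  have hHeq : ∀ w : ℕ,
      HH q B P w = ∑ i, c i * (w : ℂ) ^ (a i) * ((q ^ (b i * (w : ℤ)) : ℝ) : ℂ) := by
    intro w
    have hmaps : ∀ i : Fin k, i ∈ Finset.univ → (b i).toNat ∈ Finset.range (B + 1) := by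
      intro i _
      simp only [Finset.mem_range, Nat.lt_succ_iff]
      exact Finset.le_sup (f := fun i => (b i).toNat) (Finset.mem_univ i)
    have hfib := Finset.sum_fiberwise_of_maps_to hmaps
      (fun i => c i * (w : ℂ) ^ (a i) * (q : ℂ) ^ ((b i).toNat * w))
    calc HH q B P w
        = ∑ j ∈ Finset.range (B + 1), ∑ i ∈ Finset.univ.filter (fun i => (b i).toNat = j),
            c i * (w : ℂ) ^ (a i) * (q : ℂ) ^ ((b i).toNat * w) := by
          rw [HH]
          refine Finset.sum_congr rfl fun j hj => ?_
          rw [hP]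
          simp only []
          rw [Polynomial.eval_finset_sum, Finset.sum_mul]
          refine Finset.sum_congr rfl fun i hi => ?_
          have hij : (b i).toNat = j := by
            simpa using (Finset.mem_filter.mp hi).2
          simp [hij]
      _ = ∑ i, c i * (w : ℂ) ^ (a i) * (q : ℂ) ^ ((b i).toNat * w) := hfib
      _ = ∑ i, c i * (w : ℂ) ^ (a i) * ((q ^ (b i * (w : ℤ)) : ℝ) : ℂ) := by
          refine Finset.sum_congr rfl fun i _ => ?_
          have hzp : ((q ^ (b i * (w : ℤ)) : ℝ) : ℂ) = (q : ℂ) ^ ((b i).toNat * w) := by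
            have h1 : (b i) * (w : ℤ) = (((b i).toNat * w : ℕ) : ℤ) := by
              push_cast [Int.toNat_of_nonneg (le_of_lt (hb i))]
              ring
            rw [h1, zpow_natCast]
            push_cast
            ring
          rw [hzp]
  have hcore := core B ((B + 1) * (A + 1)) P hP0 hmu q hq t
  obtain ⟨w₁, hw₁mem, hw₁eq⟩ := Finset.exists_mem_eq_sup'
    (window_ne t ((2 * B + 6) * ((B + 1) * (A + 1))))
    (fun u => ‖HH q B P u‖)
  obtain ⟨hw₁l, hw₁r⟩ := Finset.mem_Icc.mp hw₁mem
  refine ⟨w₁, hw₁l, hw₁r, ?_⟩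
  intro w hwt
  have h1 := hcore w hwt
  rw [hw₁eq] at h1
  rw [← hHeq w, ← hHeq w₁]
  set s := Real.sqrt q with hs_def
  have hs0 : 0 < s := Real.sqrt_pos.mpr hq0
  have hsn : ∀ n : ℕ, s ^ n = q ^ ((n : ℝ) / 2) := by
    intro n
    rw [hs_def, Real.sqrt_eq_rpow, ← Real.rpow_natCast (q ^ ((1:ℝ)/2)) n, ← Real.rpow_mul hq0.le]
    congr 1
    ring
  have hkey : q ^ (((L : ℝ) - t + w) / 2) * s ^ (t - w) = s ^ L := by
    rw [hsn, hsn, ← Real.rpow_add hq0]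
    congr 1
    rw [Nat.cast_sub hwt]
    ring
  have hs_pos : (0:ℝ) < s ^ (t - w) := pow_pos hs0 _
  refine le_of_mul_le_mul_right ?_ hs_pos
  calc ‖HH q B P w‖ * s ^ (t - w) ≤ s ^ L * ‖HH q B P w₁‖ := h1
    _ = q ^ (((L : ℝ) - t + w) / 2) * ‖HH q B P w₁‖ * s ^ (t - w) := by
        rw [← hkey]; ring
end

section
/- Fix integers A ≥ 0 and B ≥ 1, let I = {0, 1, …, A} × {−B, …, −2, −1} and ℓ = (A+1)·B. Then there exists N ∈ ℕ and a real q_0 ≥ 2 such that for every real q ≥ q_0 and every family of complex numbers c = (c_{a,b})_{(a,b) ∈ I}, setting h(w) = ∑_{(a,b) ∈ I} c_{a,b} · w^{a} · q^{b·w}, one has ∑_{(a,b) ∈ I} |c_{a,b}| ≤ q^{N} · max_{0 ≤ w ≤ ℓ−1} |h(w)|. -/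
open Polynomial Finset

noncomputable def stepP (x : ℝ) (j : ℕ) (P : ℕ → Polynomial ℂ) : ℕ → Polynomial ℂ :=
  fun k => Polynomial.C ((x:ℂ)^k) * (P k).comp (Polynomial.X + 1) - Polynomial.C ((x:ℂ)^j) * P k

noncomputable def ux (B : ℕ) (x : ℝ) (P : ℕ → Polynomial ℂ) (w : ℕ) : ℂ :=
  ∑ k ∈ Finset.Icc 1 B, (P k).eval (w:ℂ) * (x:ℂ)^(k*w)

lemma eq_sum_range_of_coeff (P : Polynomial ℂ) (n : ℕ) (h : ∀ t, n ≤ t → P.coeff t = 0) :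
    P = ∑ t ∈ Finset.range n, Polynomial.C (P.coeff t) * Polynomial.X ^ t := by
  by_cases hP : P = 0
  · subst hP; simp
  · have hn : P.natDegree < n := by
      by_contra hn
      exact hP (leadingCoeff_eq_zero.mp (h _ (not_lt.mp hn)))
    simp only [Polynomial.C_mul_X_pow_eq_monomial]
    exact P.as_sum_range' n hn

lemma comp_coeff (P : Polynomial ℂ) (n : ℕ) (h : ∀ t, n ≤ t → P.coeff t = 0) (i : ℕ) :
    (P.comp (Polynomial.X + 1)).coeff i
      = ∑ t ∈ Finset.range n, P.coeff t * (t.choose i : ℂ) := by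
  conv_lhs => rw [eq_sum_range_of_coeff P n h]
  rw [Polynomial.sum_comp, Polynomial.finset_sum_coeff]
  refine Finset.sum_congr rfl fun t _ => ?_
  rw [Polynomial.mul_comp, Polynomial.C_comp, Polynomial.X_pow_comp, Polynomial.coeff_C_mul,
    Polynomial.coeff_X_add_one_pow]

lemma step_coeff_high (x : ℝ) (j k : ℕ) (P : ℕ → Polynomial ℂ) (D : ℕ)
    (h : ∀ t, D ≤ t → (P k).coeff t = 0) (i : ℕ) (hi : D ≤ i) :
    (stepP x j P k).coeff i = 0 := by
  unfold stepP
  rw [coeff_sub, coeff_C_mul, coeff_C_mul, comp_coeff _ D h, h i hi,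
    Finset.sum_eq_zero (fun t ht => by
      rw [Nat.choose_eq_zero_of_lt (lt_of_lt_of_le (Finset.mem_range.mp ht) hi)]
      simp)]
  ring

lemma step_coeff_top (x : ℝ) (j k m : ℕ) (P : ℕ → Polynomial ℂ)
    (h : ∀ t, m + 1 ≤ t → (P k).coeff t = 0) :
    (stepP x j P k).coeff m = ((x:ℂ)^k - (x:ℂ)^j) * (P k).coeff m := by
  unfold stepP
  rw [coeff_sub, coeff_C_mul, coeff_C_mul, comp_coeff _ (m+1) h, Finset.sum_range_succ,
    Finset.sum_eq_zero (fun t ht => by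
      rw [Nat.choose_eq_zero_of_lt (Finset.mem_range.mp ht)]; simp),
    Nat.choose_self]
  push_cast
  ring

lemma step_coeff_self (x : ℝ) (k m : ℕ) (P : ℕ → Polynomial ℂ)
    (h : ∀ t, m + 2 ≤ t → (P k).coeff t = 0) :
    (stepP x k P k).coeff m = (x:ℂ)^k * (m + 1 : ℂ) * (P k).coeff (m+1) := by
  unfold stepP
  rw [coeff_sub, coeff_C_mul, coeff_C_mul, comp_coeff _ (m+2) h, Finset.sum_range_succ,
    Finset.sum_range_succ,
    Finset.sum_eq_zero (fun t ht => by
      rw [Nat.choose_eq_zero_of_lt (Finset.mem_range.mp ht)]; simp),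
    Nat.choose_self, Nat.choose_succ_self_right]
  push_cast
  ring

lemma stepP_eval (B : ℕ) (x : ℝ) (j : ℕ) (P : ℕ → Polynomial ℂ) (w : ℕ) :
    ux B x (stepP x j P) w = ux B x P (w+1) - (x:ℂ)^j * ux B x P w := by
  unfold ux stepP
  rw [Finset.mul_sum, ← Finset.sum_sub_distrib]
  refine Finset.sum_congr rfl fun k _ => ?_
  have he : ((P k).comp (Polynomial.X + 1)).eval (w:ℂ) = (P k).eval ((w:ℂ) + 1) := by
    simp [Polynomial.eval_comp]
  rw [Polynomial.eval_sub, Polynomial.eval_mul, Polynomial.eval_mul, Polynomial.eval_C,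
    Polynomial.eval_C, he]
  have hp : ((x:ℂ))^(k*(w+1)) = (x:ℂ)^k * (x:ℂ)^(k*w) := by
    rw [Nat.mul_add, mul_one, pow_add]; ring
  push_cast
  rw [hp]
  ring

-- helper: lower bound for |x^k - x^j|
lemma pow_sub_lower (x : ℝ) (hx : 0 < x) (hx2 : x ≤ 1/2) {k j B : ℕ}
    (hk : k ∈ Finset.Icc 1 B) (hj : j ∈ Finset.Icc 1 B) (hkj : k ≠ j) :
    x ^ B ≤ 2 * |x ^ k - x ^ j| := by
  simp only [Finset.mem_Icc] at hk hj
  have hx1 : x ≤ 1 := by linarith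
  have main : ∀ a b : ℕ, 1 ≤ a → a < b → b ≤ B → x ^ B ≤ 2 * (x ^ a - x ^ b) := by
    intro a b ha hab hbB
    have h1 : x ^ b ≤ x ^ (a+1) := pow_le_pow_of_le_one hx.le hx1 hab
    have h2 : x ^ (a+1) = x ^ a * x := pow_succ x a
    have h3 : x ^ a * x ≤ x ^ a * (1/2) := by
      have := pow_nonneg hx.le a
      nlinarith
    have h4 : x ^ B ≤ x ^ a := pow_le_pow_of_le_one hx.le hx1 (by omega)
    nlinarith
  rcases lt_or_gt_of_ne hkj with h | h
  · have := main k j hk.1 h hj.2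
    rw [abs_of_nonneg (by nlinarith [pow_nonneg hx.le B])]
    exact this
  · have := main j k hj.1 h hk.2
    rw [abs_of_nonpos (by nlinarith [pow_nonneg hx.le B])]
    linarith

lemma key_s6 (B : ℕ) : ∀ n : ℕ, ∃ C : ℝ, ∃ N : ℕ, 0 < C ∧
    ∀ d : ℕ → ℕ, (∑ j ∈ Finset.Icc 1 B, d j) = n →
    ∀ x : ℝ, 0 < x → x ≤ 1/2 →
    ∀ P : ℕ → Polynomial ℂ, (∀ j ∈ Finset.Icc 1 B, ∀ i, d j ≤ i → (P j).coeff i = 0) →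
    ∀ M : ℝ, 0 ≤ M → (∀ w, w < n → ‖ux B x P w‖ ≤ M) →
    ∀ k ∈ Finset.Icc 1 B, 1 ≤ d k →
    x ^ N * ‖(P k).coeff (d k - 1)‖ ≤ C * M := by
  intro n
  induction n with
  | zero =>
    refine ⟨1, 0, one_pos, ?_⟩
    intro d hd x _ _ P _ M _ _ k hk hdk
    rw [Finset.sum_eq_zero_iff] at hd
    have := hd k hk
    omega
  | succ n IH =>
    obtain ⟨C', N', hC', IH⟩ := IH
    refine ⟨4 * C' + 1, N' + B, by positivity, ?_⟩
    intro d hd x hx hx2 P hP M hM0 hM k hk hdk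
    have hxB : x ^ B ≤ 1 := pow_le_one₀ hx.le (by linarith)
    have hxN' : x ^ N' ≤ 1 := pow_le_one₀ hx.le (by linarith)
    have habs0 : (0:ℝ) ≤ ‖(P k).coeff (d k - 1)‖ := norm_nonneg _
    by_cases hbase : ∀ j ∈ Finset.Icc 1 B, j ≠ k → d j = 0
    · -- only k is active
      have hsum : d k = n + 1 := by
        rw [← hd, Finset.sum_eq_single_of_mem k hk (fun j hj hjk => hbase j hj hjk)]
      by_cases hdk1 : d k = 1
      · -- base: u(0) = coeff 0
        have hn0 : n = 0 := by omega
        have h0 := hM 0 (by omega)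
        have hu0 : ux B x P 0 = (P k).coeff 0 := by
          unfold ux
          rw [Finset.sum_eq_single_of_mem k hk (fun j hj hjk => by
            have h1 : (P j).coeff 0 = 0 := hP j hj 0 (by rw [hbase j hj hjk])
            rw [Nat.cast_zero, ← Polynomial.coeff_zero_eq_eval_zero, h1, zero_mul])]
          rw [Nat.cast_zero, ← Polynomial.coeff_zero_eq_eval_zero, Nat.mul_zero, pow_zero,
            mul_one]
        rw [hu0] at h0
        have hxN : x ^ (N' + B) ≤ 1 := pow_le_one₀ hx.le (by linarith)
        have hthis : d k - 1 = 0 := by omega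
        rw [hthis]
        rw [hthis] at habs0
        nlinarith [mul_le_mul_of_nonneg_right hxN habs0, mul_nonneg hC'.le hM0]
      · -- self step: d k ≥ 2
        obtain ⟨m, hm⟩ : ∃ m, d k = m + 2 := ⟨d k - 2, by omega⟩
        set d' := Function.update d k (d k - 1) with hd'def
        set P' := stepP x k P with hP'def
        have hd'sum : (∑ j ∈ Finset.Icc 1 B, d' j) = n := by
          rw [hd'def, Finset.sum_update_of_mem hk]
          have := Finset.sum_eq_single_of_mem k hk (fun j hj hjk => hbase j hj hjk)
          rw [this] at hd
          have hz : ∑ j ∈ Finset.Icc 1 B \ {k}, d j = 0 := by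
            apply Finset.sum_eq_zero
            intro j hj
            rw [Finset.mem_sdiff, Finset.mem_singleton] at hj
            exact hbase j hj.1 hj.2
          rw [hz]
          omega
        have hP'coeff : ∀ j ∈ Finset.Icc 1 B, ∀ i, d' j ≤ i → (P' j).coeff i = 0 := by
          intro j hj i hi
          by_cases hjk : j = k
          · subst hjk
            rw [hP'def, step_coeff_self x j i P (fun t ht => hP j hj t (by
              rw [hd'def] at hi
              rw [Function.update_self] at hi
              omega)), hP j hj (i+1) (by
                rw [hd'def, Function.update_self] at hi; omega)]
            ring
          · rw [hP'def]
            exact step_coeff_high x k j P (d j) (hP j hj) i (by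
              rw [hd'def, Function.update_of_ne hjk] at hi; exact hi)
        have hM' : ∀ w, w < n → ‖ux B x P' w‖ ≤ 2 * M := by
          intro w hw
          rw [hP'def, stepP_eval]
          calc ‖ux B x P (w+1) - (x:ℂ)^k * ux B x P w‖
              ≤ ‖ux B x P (w+1)‖ + ‖(x:ℂ)^k * ux B x P w‖ := by
                exact norm_sub_le _ _
            _ ≤ M + 1 * M := by
                have h1 := hM (w+1) (by omega)
                have h2 := hM w (by omega)
                have h3 : ‖(x:ℂ)^k‖ ≤ 1 := by
                  rw [norm_pow, Complex.norm_real, Real.norm_eq_abs, abs_of_pos hx]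
                  exact pow_le_one₀ hx.le (by linarith)
                have := norm_nonneg (ux B x P w)
                rw [norm_mul]
                nlinarith
            _ = 2 * M := by ring
        have hIH := IH d' hd'sum x hx hx2 P' hP'coeff (2*M) (by linarith) hM' k hk
          (by rw [hd'def, Function.update_self]; omega)
        have hd'k : d' k - 1 = m := by rw [hd'def, Function.update_self]; omega
        rw [hd'k] at hIH
        have hrel : (P' k).coeff m = (x:ℂ)^k * (m + 1 : ℂ) * (P k).coeff (m+1) := by
          rw [hP'def]
          exact step_coeff_self x k m P (fun t ht => hP k hk t (by omega))
        have habs : ‖(P' k).coeff m‖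
            = x^k * (m+1) * ‖(P k).coeff (m+1)‖ := by
          rw [hrel, norm_mul, norm_mul, norm_pow, Complex.norm_real, Real.norm_eq_abs, abs_of_pos hx]
          congr 1
          · congr 1
            have : ((m:ℂ) + 1) = ((m+1 : ℕ) : ℂ) := by push_cast; ring
            rw [this, Complex.norm_natCast]
            push_cast; ring
        rw [habs] at hIH
        have hdk1' : d k - 1 = m + 1 := by omega
        rw [hdk1']
        -- x^(N'+B) * |c| ≤ x^N' * x^k * (m+1) * |c| ≤ 2C'M
        have hxk : x ^ B ≤ x ^ k := by
          simp only [Finset.mem_Icc] at hk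
          exact pow_le_pow_of_le_one hx.le (by linarith) hk.2
        have hm1 : (1:ℝ) ≤ (m:ℝ) + 1 := by linarith [Nat.cast_nonneg (α := ℝ) m]
        have hcnn : (0:ℝ) ≤ ‖(P k).coeff (m+1)‖ := norm_nonneg _
        have hxN'p : (0:ℝ) < x ^ N' := pow_pos hx _
        have hxkp : (0:ℝ) < x ^ k := pow_pos hx _
        calc x ^ (N' + B) * ‖(P k).coeff (m+1)‖
            = x ^ N' * x ^ B * ‖(P k).coeff (m+1)‖ := by rw [pow_add]
          _ ≤ x ^ N' * (x ^ k * ((m:ℝ)+1)) * ‖(P k).coeff (m+1)‖ := by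
              apply mul_le_mul_of_nonneg_right _ hcnn
              apply mul_le_mul_of_nonneg_left _ hxN'p.le
              nlinarith
          _ = x ^ N' * (x ^ k * ((m:ℝ)+1) * ‖(P k).coeff (m+1)‖) := by ring
          _ ≤ C' * (2 * M) := hIH
          _ ≤ (4 * C' + 1) * M := by nlinarith
    · -- there is another active index j₀ ≠ k
      push_neg at hbase
      obtain ⟨j₀, hj₀, hj₀k, hdj₀⟩ := hbase
      set d' := Function.update d j₀ (d j₀ - 1) with hd'def
      set P' := stepP x j₀ P with hP'def
      have hd'sum : (∑ j ∈ Finset.Icc 1 B, d' j) = n := by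
        rw [hd'def, Finset.sum_update_of_mem hj₀]
        rw [Finset.sum_eq_sum_sdiff_singleton_add hj₀] at hd
        omega
      have hP'coeff : ∀ j ∈ Finset.Icc 1 B, ∀ i, d' j ≤ i → (P' j).coeff i = 0 := by
        intro j hj i hi
        by_cases hjj : j = j₀
        · subst hjj
          rw [hP'def, step_coeff_self x j i P (fun t ht => hP j hj t (by
            rw [hd'def, Function.update_self] at hi; omega)), hP j hj (i+1) (by
              rw [hd'def, Function.update_self] at hi; omega)]
          ring
        · rw [hP'def]
          exact step_coeff_high x j₀ j P (d j) (hP j hj) i (by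
            rw [hd'def, Function.update_of_ne hjj] at hi; exact hi)
      have hM' : ∀ w, w < n → ‖ux B x P' w‖ ≤ 2 * M := by
        intro w hw
        rw [hP'def, stepP_eval]
        calc ‖ux B x P (w+1) - (x:ℂ)^j₀ * ux B x P w‖
            ≤ ‖ux B x P (w+1)‖ + ‖(x:ℂ)^j₀ * ux B x P w‖ :=
              norm_sub_le _ _
          _ ≤ M + 1 * M := by
              have h1 := hM (w+1) (by omega)
              have h2 := hM w (by omega)
              have h3 : ‖(x:ℂ)^j₀‖ ≤ 1 := by
                rw [norm_pow, Complex.norm_real, Real.norm_eq_abs, abs_of_pos hx]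
                exact pow_le_one₀ hx.le (by linarith)
              have := norm_nonneg (ux B x P w)
              rw [norm_mul]
              nlinarith
          _ = 2 * M := by ring
      have hd'k : d' k = d k := by rw [hd'def, Function.update_of_ne (Ne.symm hj₀k)]
      have hIH := IH d' hd'sum x hx hx2 P' hP'coeff (2*M) (by linarith) hM' k hk
        (by rw [hd'k]; exact hdk)
      rw [hd'k] at hIH
      obtain ⟨m, hm⟩ : ∃ m, d k = m + 1 := ⟨d k - 1, by omega⟩
      have hmm : d k - 1 = m := by omega
      rw [hmm] at hIH ⊢
      have hrel : (P' k).coeff m = ((x:ℂ)^k - (x:ℂ)^j₀) * (P k).coeff m := by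
        rw [hP'def]
        exact step_coeff_top x j₀ k m P (fun t ht => hP k hk t (by omega))
      have habs : ‖(P' k).coeff m‖
          = |x^k - x^j₀| * ‖(P k).coeff m‖ := by
        rw [hrel, norm_mul]
        congr 1
        have : ((x:ℂ)^k - (x:ℂ)^j₀) = ((x^k - x^j₀ : ℝ) : ℂ) := by push_cast; ring
        rw [this, Complex.norm_real, Real.norm_eq_abs]
      rw [habs] at hIH
      have hlow := pow_sub_lower x hx hx2 hk hj₀ (Ne.symm hj₀k)
      have hcnn : (0:ℝ) ≤ ‖(P k).coeff m‖ := norm_nonneg _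
      have hxN'p : (0:ℝ) < x ^ N' := pow_pos hx _
      calc x ^ (N' + B) * ‖(P k).coeff m‖
          = x ^ N' * x ^ B * ‖(P k).coeff m‖ := by rw [pow_add]
        _ ≤ x ^ N' * (2 * |x^k - x^j₀|) * ‖(P k).coeff m‖ := by
            apply mul_le_mul_of_nonneg_right _ hcnn
            exact mul_le_mul_of_nonneg_left hlow hxN'p.le
        _ = 2 * (x ^ N' * (|x^k - x^j₀| * ‖(P k).coeff m‖)) := by ring
        _ ≤ 2 * (C' * (2 * M)) := by
            apply mul_le_mul_of_nonneg_left hIH (by norm_num)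
        _ ≤ (4 * C' + 1) * M := by nlinarith

lemma outer (A B : ℕ) : ∀ n : ℕ, ∃ C : ℝ, ∃ N : ℕ, 0 < C ∧
    ∀ d : ℕ → ℕ, (∑ j ∈ Finset.Icc 1 B, d j) = n → (∀ j, d j ≤ A + 1) →
    ∀ x : ℝ, 0 < x → x ≤ 1/2 →
    ∀ P : ℕ → Polynomial ℂ, (∀ j ∈ Finset.Icc 1 B, ∀ i, d j ≤ i → (P j).coeff i = 0) →
    ∀ M : ℝ, 0 ≤ M → (∀ w, w < n → ‖ux B x P w‖ ≤ M) →
    x ^ N * (∑ j ∈ Finset.Icc 1 B, ∑ i ∈ Finset.range (d j), ‖(P j).coeff i‖)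
      ≤ C * M := by
  intro n
  induction n with
  | zero =>
    refine ⟨1, 0, one_pos, ?_⟩
    intro d hd _ x _ _ P _ M hM0 _
    rw [Finset.sum_eq_zero_iff] at hd
    have : (∑ j ∈ Finset.Icc 1 B, ∑ i ∈ Finset.range (d j), ‖(P j).coeff i‖) = 0 := by
      apply Finset.sum_eq_zero
      intro j hj
      rw [hd j hj]
      simp
    rw [this]
    simpa using hM0
  | succ n IH =>
    obtain ⟨C', N', hC', IH⟩ := IH
    obtain ⟨Ck, Nk, hCk, HK⟩ := key_s6 B (n+1)
    set K : ℝ := ((n:ℝ) + 1) ^ A with hKdef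
    have hK1 : (1:ℝ) ≤ K := one_le_pow₀ (by linarith [Nat.cast_nonneg (α := ℝ) n])
    refine ⟨C' + C' * K * Ck + Ck, N' + Nk, by positivity, ?_⟩
    intro d hd hdA x hx hx2 P hP M hM0 hM
    obtain ⟨k, hk, hdk⟩ : ∃ k ∈ Finset.Icc 1 B, 1 ≤ d k := by
      by_contra hcon
      push_neg at hcon
      have : (∑ j ∈ Finset.Icc 1 B, d j) = 0 :=
        Finset.sum_eq_zero fun j hj => by have := hcon j hj; omega
      omega
    obtain ⟨m, hm⟩ : ∃ m, d k = m + 1 := ⟨d k - 1, by omega⟩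
    set cs : ℂ := (P k).coeff m with hcs
    have hkey : x ^ Nk * ‖cs‖ ≤ Ck * M := by
      have := HK d hd x hx hx2 P hP M hM0 hM k hk hdk
      rwa [show d k - 1 = m by omega] at this
    set P₁ : ℕ → Polynomial ℂ :=
      Function.update P k (P k - Polynomial.C cs * Polynomial.X ^ m) with hP₁
    set d₁ : ℕ → ℕ := Function.update d k m with hd₁
    have hd₁sum : (∑ j ∈ Finset.Icc 1 B, d₁ j) = n := by
      rw [hd₁, Finset.sum_update_of_mem hk]
      rw [Finset.sum_eq_sum_sdiff_singleton_add hk] at hd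
      omega
    have hd₁A : ∀ j, d₁ j ≤ A + 1 := by
      intro j
      rw [hd₁]
      by_cases hjk : j = k
      · subst hjk; rw [Function.update_self]; have := hdA j; omega
      · rw [Function.update_of_ne hjk]; exact hdA j
    have hP₁coeff : ∀ j ∈ Finset.Icc 1 B, ∀ i, d₁ j ≤ i → (P₁ j).coeff i = 0 := by
      intro j hj i hi
      by_cases hjk : j = k
      · subst hjk
        rw [hd₁, Function.update_self] at hi
        rw [hP₁, Function.update_self, Polynomial.coeff_sub, Polynomial.coeff_C_mul,
          Polynomial.coeff_X_pow]
        rcases eq_or_lt_of_le hi with h | h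
        · rw [← h, if_pos rfl, mul_one, hcs, sub_self]
        · rw [if_neg (by omega), mul_zero, hP j hj i (by omega), sub_zero]
      · rw [hP₁, Function.update_of_ne hjk]
        rw [hd₁, Function.update_of_ne hjk] at hi
        exact hP j hj i hi
    have hux₁ : ∀ w : ℕ, ux B x P₁ w = ux B x P w - cs * (w:ℂ)^m * (x:ℂ)^(k*w) := by
      intro w
      unfold ux
      have hsplit : ∀ j ∈ Finset.Icc 1 B,
          (P₁ j).eval (w:ℂ) * (x:ℂ)^(j*w)
            = (P j).eval (w:ℂ) * (x:ℂ)^(j*w)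
              - (if j = k then cs * (w:ℂ)^m * (x:ℂ)^(k*w) else 0) := by
        intro j _
        by_cases hjk : j = k
        · subst hjk
          rw [hP₁, Function.update_self, if_pos rfl, Polynomial.eval_sub,
            Polynomial.eval_mul, Polynomial.eval_C, Polynomial.eval_pow, Polynomial.eval_X]
          ring
        · rw [hP₁, Function.update_of_ne hjk, if_neg hjk, sub_zero]
      rw [Finset.sum_congr rfl hsplit, Finset.sum_sub_distrib,
        Finset.sum_ite_eq' (Finset.Icc 1 B) k (fun _ => cs * (w:ℂ)^m * (x:ℂ)^(k*w)),
        if_pos hk]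
    set M₁ : ℝ := M + ‖cs‖ * K with hM₁def
    have hM₁0 : 0 ≤ M₁ := by
      have := norm_nonneg cs
      nlinarith
    have hM₁ : ∀ w, w < n → ‖ux B x P₁ w‖ ≤ M₁ := by
      intro w hw
      rw [hux₁ w]
      calc ‖ux B x P w - cs * (w:ℂ)^m * (x:ℂ)^(k*w)‖
          ≤ ‖ux B x P w‖ + ‖cs * (w:ℂ)^m * (x:ℂ)^(k*w)‖ :=
            norm_sub_le _ _
        _ ≤ M + ‖cs‖ * K := by
            have h1 := hM w (by omega)
            have h2 : ‖cs * (w:ℂ)^m * (x:ℂ)^(k*w)‖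
                ≤ ‖cs‖ * K := by
              rw [norm_mul, norm_mul, norm_pow, norm_pow, Complex.norm_natCast,
                Complex.norm_real, Real.norm_eq_abs, abs_of_pos hx]
              have hw1 : ((w:ℝ))^m ≤ K := by
                rw [hKdef]
                calc ((w:ℝ))^m ≤ ((n:ℝ)+1)^m := by
                      apply pow_le_pow_left₀ (Nat.cast_nonneg w)
                      have : (w:ℝ) ≤ (n:ℝ) := by exact_mod_cast hw.le
                      linarith
                  _ ≤ ((n:ℝ)+1)^A := by
                      apply pow_le_pow_right₀ (by linarith [Nat.cast_nonneg (α := ℝ) n])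
                      have := hdA k; omega
              have hx1 : x^(k*w) ≤ 1 := pow_le_one₀ hx.le (by linarith)
              have hcnn := norm_nonneg cs
              have hwnn : (0:ℝ) ≤ ((w:ℝ))^m := by positivity
              have hxnn : (0:ℝ) ≤ x^(k*w) := by positivity
              nlinarith [mul_le_mul_of_nonneg_left hw1 hcnn,
                mul_le_mul_of_nonneg_left hx1 (mul_nonneg hcnn hwnn)]
            linarith
    have hIH := IH d₁ hd₁sum hd₁A x hx hx2 P₁ hP₁coeff M₁ hM₁0 hM₁
    -- sum splitting
    have hSsplit : (∑ j ∈ Finset.Icc 1 B, ∑ i ∈ Finset.range (d j), ‖(P j).coeff i‖)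
        = (∑ j ∈ Finset.Icc 1 B, ∑ i ∈ Finset.range (d₁ j), ‖(P₁ j).coeff i‖)
          + ‖cs‖ := by
      have hterm : ∀ j ∈ Finset.Icc 1 B,
          (∑ i ∈ Finset.range (d j), ‖(P j).coeff i‖)
            = (∑ i ∈ Finset.range (d₁ j), ‖(P₁ j).coeff i‖)
              + (if j = k then ‖cs‖ else 0) := by
        intro j _
        by_cases hjk : j = k
        · subst hjk
          rw [if_pos rfl, hd₁, Function.update_self, hm, Finset.sum_range_succ]
          congr 1
          · apply Finset.sum_congr rfl
            intro i hi
            rw [hP₁, Function.update_self, Polynomial.coeff_sub, Polynomial.coeff_C_mul,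
              Polynomial.coeff_X_pow, if_neg (by simpa using (Finset.mem_range.mp hi).ne),
              mul_zero, sub_zero]
        · rw [if_neg hjk, hP₁, hd₁, Function.update_of_ne hjk, Function.update_of_ne hjk,
            add_zero]
      rw [Finset.sum_congr rfl hterm, Finset.sum_add_distrib,
        Finset.sum_ite_eq' (Finset.Icc 1 B) k (fun _ => ‖cs‖), if_pos hk]
    rw [hSsplit]
    -- final assembly
    set S₁ : ℝ := ∑ j ∈ Finset.Icc 1 B, ∑ i ∈ Finset.range (d₁ j), ‖(P₁ j).coeff i‖
      with hS₁
    have hS₁nn : 0 ≤ S₁ := Finset.sum_nonneg fun j _ =>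
      Finset.sum_nonneg fun i _ => norm_nonneg _
    have hxN' : (0:ℝ) < x ^ N' := pow_pos hx _
    have hxNk : (0:ℝ) < x ^ Nk := pow_pos hx _
    have hxN'le : x ^ N' ≤ 1 := pow_le_one₀ hx.le (by linarith)
    have hxNkle : x ^ Nk ≤ 1 := pow_le_one₀ hx.le (by linarith)
    have hcnn := norm_nonneg cs
    have h1 : x ^ (N' + Nk) * (S₁ + ‖cs‖)
        = x ^ Nk * (x ^ N' * S₁) + x ^ N' * (x ^ Nk * ‖cs‖) := by
      rw [pow_add]; ring
    rw [h1]
    have h2 : x ^ Nk * (x ^ N' * S₁) ≤ x ^ Nk * (C' * M₁) :=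
      mul_le_mul_of_nonneg_left hIH hxNk.le
    have h3 : x ^ Nk * (C' * M₁) = x ^ Nk * C' * M + C' * K * (x ^ Nk * ‖cs‖) := by
      rw [hM₁def]; ring
    have h4 : x ^ Nk * C' * M ≤ C' * M := by
      nlinarith [mul_le_mul_of_nonneg_right (mul_le_mul_of_nonneg_right hxNkle hC'.le) hM0]
    have h5 : C' * K * (x ^ Nk * ‖cs‖) ≤ C' * K * (Ck * M) := by
      apply mul_le_mul_of_nonneg_left hkey
      positivity
    have h6 : x ^ N' * (x ^ Nk * ‖cs‖) ≤ x ^ Nk * ‖cs‖ := by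
      nlinarith [mul_le_mul_of_nonneg_right hxN'le (mul_nonneg hxNk.le hcnn)]
    nlinarith [hkey]

/-- Fix `A ≥ 0`, `B ≥ 1`, let `I = {0,…,A} × {-B,…,-1}` and `ℓ = (A+1)·B`.
There exist `N ∈ ℕ` and a real `q₀ ≥ 2` such that for every real `q ≥ q₀` and every family
of coefficients `c : ℕ × ℤ → ℂ`, with `h w = ∑_{(a,b) ∈ I} c (a,b) * w^a * q^(b·w)`, one has
`∑_{(a,b) ∈ I} |c (a,b)| ≤ q^N * max_{0 ≤ w ≤ ℓ-1} |h w|`. -/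
theorem stmt_6 (A B : ℕ) (hB : 1 ≤ B) :
    ∃ (N : ℕ) (q₀ : ℝ), 2 ≤ q₀ ∧
      ∀ q : ℝ, q₀ ≤ q →
        ∀ c : ℕ × ℤ → ℂ,
          (∑ p ∈ Finset.range (A + 1) ×ˢ Finset.Icc (-(B : ℤ)) (-1), ‖c p‖) ≤
            q ^ N *
              (Finset.range ((A + 1) * B)).sup'
                (Finset.nonempty_range_iff.mpr (Nat.mul_ne_zero (Nat.succ_ne_zero A) (by omega)))
                (fun w : ℕ =>
                  ‖∑ p ∈ Finset.range (A + 1) ×ˢ Finset.Icc (-(B : ℤ)) (-1),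
                    c p * (w : ℂ) ^ p.1 * ((q ^ (p.2 * (w : ℤ)) : ℝ) : ℂ)‖) := by
  obtain ⟨C, N, hC, H⟩ := outer A B ((A+1)*B)
  refine ⟨N+1, max 2 C, le_max_left _ _, ?_⟩
  intro q hq c
  have hq2 : (2:ℝ) ≤ q := le_trans (le_max_left _ _) hq
  have hqC : C ≤ q := le_trans (le_max_right _ _) hq
  have hqpos : (0:ℝ) < q := by linarith
  set x : ℝ := q⁻¹ with hxdef
  have hx : 0 < x := inv_pos.mpr hqpos
  have hx2 : x ≤ 1/2 := by
    rw [hxdef]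
    rw [show (1:ℝ)/2 = 2⁻¹ by norm_num]
    exact inv_anti₀ (by norm_num) hq2
  set d : ℕ → ℕ := fun j => if j ∈ Finset.Icc 1 B then A+1 else 0 with hddef
  have hd : (∑ j ∈ Finset.Icc 1 B, d j) = (A+1)*B := by
    rw [Finset.sum_congr rfl (fun j hj => by rw [hddef]; simp [hj] : ∀ j ∈ Finset.Icc 1 B, d j = A+1)]
    rw [Finset.sum_const, Nat.card_Icc]
    simp [Nat.mul_comm]
  have hdA : ∀ j, d j ≤ A + 1 := by
    intro j; rw [hddef]; dsimp only; split <;> omega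
  set P : ℕ → Polynomial ℂ := fun k =>
    ∑ a ∈ Finset.range (A+1), Polynomial.C (c (a, -(k:ℤ))) * Polynomial.X ^ a with hPdef
  have hcoeff : ∀ k i, (P k).coeff i = if i < A+1 then c (i, -(k:ℤ)) else 0 := by
    intro k i
    rw [hPdef]
    rw [Polynomial.finset_sum_coeff]
    simp only [Polynomial.coeff_C_mul, Polynomial.coeff_X_pow, mul_ite, mul_one, mul_zero]
    rw [Finset.sum_ite_eq (Finset.range (A+1)) i (fun a => c (a, -(k:ℤ)))]
    simp [Finset.mem_range]
  have hPvanish : ∀ j ∈ Finset.Icc 1 B, ∀ i, d j ≤ i → (P j).coeff i = 0 := by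
    intro j hj i hi
    rw [hddef] at hi
    simp only [hj, if_true] at hi
    rw [hcoeff, if_neg (by omega)]
  -- the pointwise identity
  have hpoint : ∀ w : ℕ, (∑ p ∈ Finset.range (A + 1) ×ˢ Finset.Icc (-(B : ℤ)) (-1),
      c p * (w : ℂ) ^ p.1 * ((q ^ (p.2 * (w : ℤ)) : ℝ) : ℂ)) = ux B x P w := by
    intro w
    rw [Finset.sum_product, Finset.sum_comm]
    unfold ux
    refine Finset.sum_nbij' (fun b => (-b).toNat) (fun k => -(k:ℤ)) ?_ ?_ ?_ ?_ ?_
    · intro b hb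
      simp only [Finset.mem_Icc] at hb ⊢
      omega
    · intro k hk
      simp only [Finset.mem_Icc] at hk ⊢
      omega
    · intro b hb
      simp only [Finset.mem_Icc] at hb
      omega
    · intro k hk
      simp only [Finset.mem_Icc] at hk
      omega
    · intro b hb
      simp only [Finset.mem_Icc] at hb
      have hbt : -((((-b).toNat : ℕ)):ℤ) = b := by omega
      have hq' : ∀ a : ℕ, ((q ^ (b * (w : ℤ)) : ℝ) : ℂ) = ((x:ℂ)) ^ ((-b).toNat * w) := by
        intro a
        have hb' : (((-b).toNat : ℕ) : ℤ) = -b := Int.toNat_of_nonneg (by omega)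
        have h1 : b * (w:ℤ) = -(((-b).toNat * w : ℕ) : ℤ) := by
          rw [Nat.cast_mul, hb']; ring
        rw [h1, zpow_neg, zpow_natCast, ← inv_pow, ← hxdef, Complex.ofReal_pow]
      rw [hPdef]
      simp only []
      rw [Polynomial.eval_finset_sum]
      rw [Finset.sum_mul]
      refine Finset.sum_congr rfl fun a ha => ?_
      rw [Polynomial.eval_mul, Polynomial.eval_C, Polynomial.eval_pow, Polynomial.eval_X,
        hbt, hq' a]
  -- the coefficient-sum identity
  have hcsum : (∑ p ∈ Finset.range (A + 1) ×ˢ Finset.Icc (-(B : ℤ)) (-1), ‖c p‖)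
      = ∑ j ∈ Finset.Icc 1 B, ∑ i ∈ Finset.range (d j), ‖(P j).coeff i‖ := by
    rw [Finset.sum_product, Finset.sum_comm]
    refine Finset.sum_nbij' (fun b => (-b).toNat) (fun k => -(k:ℤ)) ?_ ?_ ?_ ?_ ?_
    · intro b hb; simp only [Finset.mem_Icc] at hb ⊢; omega
    · intro k hk; simp only [Finset.mem_Icc] at hk ⊢; omega
    · intro b hb; simp only [Finset.mem_Icc] at hb; omega
    · intro k hk; simp only [Finset.mem_Icc] at hk; omega
    · intro b hb
      simp only [Finset.mem_Icc] at hb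
      have hbmem : (-b).toNat ∈ Finset.Icc 1 B := by simp only [Finset.mem_Icc]; omega
      have hdb : d ((-b).toNat) = A + 1 := by rw [hddef]; simp [hbmem]
      rw [hdb]
      refine Finset.sum_congr rfl fun a ha => ?_
      rw [hcoeff, if_pos (Finset.mem_range.mp ha)]
      have hbt : -((((-b).toNat : ℕ)):ℤ) = b := by omega
      rw [hbt]
  set M : ℝ := (Finset.range ((A + 1) * B)).sup'
      (Finset.nonempty_range_iff.mpr (Nat.mul_ne_zero (Nat.succ_ne_zero A) (by omega)))
      (fun w : ℕ =>
        ‖∑ p ∈ Finset.range (A + 1) ×ˢ Finset.Icc (-(B : ℤ)) (-1),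
          c p * (w : ℂ) ^ p.1 * ((q ^ (p.2 * (w : ℤ)) : ℝ) : ℂ)‖) with hMdef
  have hMw : ∀ w, w < (A+1)*B → ‖ux B x P w‖ ≤ M := by
    intro w hw
    rw [← hpoint w, hMdef]
    exact Finset.le_sup' (fun w : ℕ =>
      ‖∑ p ∈ Finset.range (A + 1) ×ˢ Finset.Icc (-(B : ℤ)) (-1),
        c p * (w : ℂ) ^ p.1 * ((q ^ (p.2 * (w : ℤ)) : ℝ) : ℂ)‖) (Finset.mem_range.mpr hw)
  have hM0 : 0 ≤ M := by
    have h0 : (0:ℕ) < (A+1)*B := by positivity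
    rw [hMdef]
    exact le_trans (norm_nonneg _)
      (Finset.le_sup' (fun w : ℕ =>
        ‖∑ p ∈ Finset.range (A + 1) ×ˢ Finset.Icc (-(B : ℤ)) (-1),
          c p * (w : ℂ) ^ p.1 * ((q ^ (p.2 * (w : ℤ)) : ℝ) : ℂ)‖) (Finset.mem_range.mpr h0))
  have Hx := H d hd hdA x hx hx2 P hPvanish M hM0 hMw
  rw [hcsum]
  set S : ℝ := ∑ j ∈ Finset.Icc 1 B, ∑ i ∈ Finset.range (d j), ‖(P j).coeff i‖
    with hSdef
  have hqN : (0:ℝ) < q ^ N := pow_pos hqpos _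
  have hxq : q ^ N * (x ^ N * S) = S := by
    rw [hxdef, inv_pow, ← mul_assoc, mul_inv_cancel₀ (pow_ne_zero _ hqpos.ne'), one_mul]
  calc S = q ^ N * (x ^ N * S) := hxq.symm
    _ ≤ q ^ N * (C * M) := mul_le_mul_of_nonneg_left Hx hqN.le
    _ ≤ q ^ N * (q * M) := by
        apply mul_le_mul_of_nonneg_left _ hqN.le
        exact mul_le_mul_of_nonneg_right hqC hM0
    _ = q ^ (N+1) * M := by rw [pow_succ]; ring
end

section
/- Fix integers A ≥ 0 and B ≥ 1, let I = {0, 1, …, A} × {−B, …, −2, −1} and ℓ = (A+1)·B. Consider the ℓ × ℓ matrix Z over the Laurent polynomial ring ℤ[q, q^{−1}], with rows indexed by w ∈ {0, 1, …, ℓ−1} and columns indexed by (a,b) ∈ I, whose (w,(a,b)) entry is w^{a} · q^{b·w}. Then det Z is a nonzero element of ℤ[q, q^{−1}]. -/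
open Polynomial

section core
variable {K : Type*} [Field K]

noncomputable def PhiOp (c d : K) (Q : K[X]) : K[X] := c • (Polynomial.taylor 1 Q) - d • Q

lemma taylor1_ne_zero {Q : K[X]} (h : Q ≠ 0) : Polynomial.taylor (1:K) Q ≠ 0 :=
  fun hh => h (Polynomial.taylor_injective 1 (by simpa using hh))

lemma degree_taylor1 (Q : K[X]) : (Polynomial.taylor (1:K) Q).degree = Q.degree := by
  rcases eq_or_ne Q 0 with h | h
  · simp [h]
  · rw [degree_eq_natDegree h, degree_eq_natDegree (taylor1_ne_zero h), natDegree_taylor]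

lemma lc_taylor1 (Q : K[X]) : (Polynomial.taylor (1:K) Q).leadingCoeff = Q.leadingCoeff := by
  rcases eq_or_ne Q 0 with h | h
  · simp [h]
  · rw [taylor_apply, leadingCoeff_comp (by rw [natDegree_X_add_C]; exact one_ne_zero),
      leadingCoeff_X_add_C, one_pow, mul_one]

lemma PhiOp_degree_le (c d : K) {Q : K[X]} {n : ℕ} (h : Q.degree ≤ n) :
    (PhiOp c d Q).degree ≤ n :=
  le_trans (degree_sub_le _ _) (max_le
    (le_trans (degree_smul_le _ _) (by rw [degree_taylor1]; exact h))
    (le_trans (degree_smul_le _ _) h))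

lemma PhiOp_eval (c d : K) (Q : K[X]) (w : K) :
    (PhiOp c d Q).eval w = c * Q.eval (w + 1) - d * Q.eval w := by
  simp [PhiOp, taylor_eval]

lemma PhiOp_self_iter (d : K) : ∀ (j : ℕ) (Q : K[X]), Q.degree < (j : ℕ) → (PhiOp d d)^[j] Q = 0 := by
  intro j
  induction j with
  | zero =>
    intro Q hQ
    rw [Function.iterate_zero_apply]
    by_contra h
    rw [degree_eq_natDegree h] at hQ
    exact absurd (WithBot.coe_lt_coe.mp hQ) (by omega)
  | succ j ih =>
    intro Q hQ
    rw [Function.iterate_succ_apply]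
    apply ih
    rcases eq_or_ne Q 0 with h | h
    · have hz : PhiOp d d Q = 0 := by simp [PhiOp, h]
      rw [hz, degree_zero]
      exact bot_lt_iff_ne_bot.mpr (by simp)
    · have hsub : (Polynomial.taylor (1:K) Q - Q).degree < Q.degree := by
        have := degree_sub_lt (p := Polynomial.taylor (1:K) Q) (q := Q)
          (degree_taylor1 Q) (taylor1_ne_zero h) (lc_taylor1 Q)
        rwa [degree_taylor1] at this
      have h1 : PhiOp d d Q = d • (Polynomial.taylor (1:K) Q - Q) := by
        rw [PhiOp, smul_sub]
      have h2 : Q.degree ≤ (j : ℕ) := by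
        rw [degree_eq_natDegree h] at hQ ⊢
        exact_mod_cast Nat.lt_succ_iff.mp (by exact_mod_cast hQ)
      calc (PhiOp d d Q).degree ≤ (Polynomial.taylor (1:K) Q - Q).degree := by
            rw [h1]; exact degree_smul_le _ _
        _ < (j : ℕ) := lt_of_lt_of_le hsub h2

lemma PhiOp_inj {c d : K} (hcd : c ≠ d) {Q : K[X]} (h : PhiOp c d Q = 0) : Q = 0 := by
  by_contra hQ
  have h1 : c • Polynomial.taylor (1:K) Q = d • Q := by rwa [PhiOp, sub_eq_zero] at h
  have h2 := congrArg (fun p => Polynomial.coeff p Q.natDegree) h1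
  simp only [coeff_smul, smul_eq_mul] at h2
  have h3 : (Polynomial.taylor (1:K) Q).coeff Q.natDegree = Q.leadingCoeff := by
    conv_lhs => rw [show Q.natDegree = (Polynomial.taylor (1:K) Q).natDegree from
      (natDegree_taylor Q 1).symm]
    rw [coeff_natDegree, lc_taylor1]
  rw [h3, coeff_natDegree] at h2
  exact hcd (mul_right_cancel₀ (leadingCoeff_ne_zero.mpr hQ) h2)

lemma PhiOp_iter_inj {c d : K} (hcd : c ≠ d) :
    ∀ (j : ℕ) {Q : K[X]}, (PhiOp c d)^[j] Q = 0 → Q = 0 := by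
  intro j
  induction j with
  | zero => intro Q h; simpa using h
  | succ j ih =>
    intro Q h
    rw [Function.iterate_succ_apply] at h
    exact PhiOp_inj hcd (ih h)

variable [CharZero K]

lemma core_lemma (A : ℕ) :
    ∀ (B : ℕ) (x : Fin B → K), (∀ b, x b ≠ 0) → Function.Injective x →
    ∀ (P : Fin B → K[X]), (∀ b, (P b).degree ≤ (A : ℕ)) →
    (∀ w : ℕ, w < (A + 1) * B → ∑ b, (P b).eval ((w : ℕ) : K) * x b ^ w = 0) →
    ∀ b, P b = 0 := by
  intro B
  induction B with
  | zero => exact fun x _ _ P _ _ b => b.elim0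
  | succ B ih =>
    intro x hx0 hinj P hdeg hvan
    set x0 : K := x (Fin.last B) with hx0def
    set Ψ : (Fin (B + 1) → K[X]) → (Fin (B + 1) → K[X]) :=
      fun P b => PhiOp (x b) x0 (P b) with hΨ
    have hiter : ∀ (j : ℕ) (b : Fin (B + 1)), (Ψ^[j] P) b = (PhiOp (x b) x0)^[j] (P b) := by
      intro j
      induction j with
      | zero => intro b; rfl
      | succ j ihj =>
        intro b
        rw [Function.iterate_succ_apply', Function.iterate_succ_apply']
        show PhiOp (x b) x0 ((Ψ^[j] P) b) = _
        rw [ihj b]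
    have hdegall : ∀ (j : ℕ) (b : Fin (B + 1)), ((Ψ^[j] P) b).degree ≤ (A : ℕ) := by
      intro j
      induction j with
      | zero => exact hdeg
      | succ j ihj =>
        intro b
        rw [Function.iterate_succ_apply']
        exact PhiOp_degree_le _ _ (ihj b)
    have hvanall : ∀ (j : ℕ) (w : ℕ), w + j < (A + 1) * (B + 1) →
        ∑ b, ((Ψ^[j] P) b).eval ((w : ℕ) : K) * x b ^ w = 0 := by
      intro j
      induction j with
      | zero => intro w hw; exact hvan w (by omega)
      | succ j ihj =>
        intro w hw
        have e1 := ihj (w + 1) (by omega)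
        have e2 := ihj w (by omega)
        have key : ∑ b, ((Ψ^[j+1] P) b).eval ((w : ℕ) : K) * x b ^ w
            = (∑ b, ((Ψ^[j] P) b).eval (((w + 1 : ℕ) : ℕ) : K) * x b ^ (w + 1))
              - x0 * ∑ b, ((Ψ^[j] P) b).eval ((w : ℕ) : K) * x b ^ w := by
          rw [Finset.mul_sum, ← Finset.sum_sub_distrib]
          apply Finset.sum_congr rfl
          intro b _
          rw [Function.iterate_succ_apply']
          show (PhiOp (x b) x0 ((Ψ^[j] P) b)).eval _ * x b ^ w = _
          rw [PhiOp_eval]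
          push_cast
          ring
        rw [key, e1, e2, mul_zero, sub_zero]
    -- the last component dies after A+1 steps
    have hlast : (Ψ^[A+1] P) (Fin.last B) = 0 := by
      rw [hiter]
      exact PhiOp_self_iter x0 (A + 1) _ (lt_of_le_of_lt (hdeg _) (by exact_mod_cast WithBot.coe_lt_coe.mpr (Nat.lt_succ_self A)))
    -- apply induction hypothesis
    have hPz : ∀ b : Fin B, (Ψ^[A+1] P) b.castSucc = 0 := by
      apply ih (fun b => x b.castSucc)
        (fun b => hx0 _) (hinj.comp (Fin.castSucc_injective B))
        (fun b => (Ψ^[A+1] P) b.castSucc) (fun b => hdegall _ _)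
      intro w hw
      have h1 := hvanall (A + 1) w (by
        have h2 : (A+1)*(B+1) = (A+1)*B + (A+1) := by ring
        omega)
      rw [Fin.sum_univ_castSucc, hlast] at h1
      simpa using h1
    have hP : ∀ b : Fin B, P b.castSucc = 0 := by
      intro b
      have hne : x b.castSucc ≠ x0 := fun h =>
        absurd (hinj h) (by simp [Fin.ext_iff]; omega)
      exact PhiOp_iter_inj hne (A + 1) ((hiter (A+1) b.castSucc) ▸ hPz b)
    have hPlast : P (Fin.last B) = 0 := by
      have hev : ∀ i : Fin (A + 1), (P (Fin.last B)).eval ((i : ℕ) : K) = 0 := by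
        intro i
        have h1 := hvan i (by
          have h2 : (A+1) * (B+1) = (A+1)*B + (A+1) := by ring
          omega)
        rw [Fin.sum_univ_castSucc] at h1
        simp only [hP, eval_zero, zero_mul, Finset.sum_const_zero, zero_add] at h1
        exact (mul_eq_zero.mp h1).resolve_right (pow_ne_zero _ (hx0 _))
      refine Polynomial.eq_zero_of_natDegree_lt_card_of_eval_eq_zero _
        (f := fun i : Fin (A+1) => ((i : ℕ) : K)) ?_ hev ?_
      · intro i j h
        exact Fin.ext (Nat.cast_injective h)
      · rw [Fintype.card_fin]
        exact Nat.lt_succ_of_le (natDegree_le_iff_degree_le.mpr (hdeg _))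
    intro b
    refine Fin.lastCases ?_ ?_ b
    · exact hPlast
    · exact hP
end core

/-- Fix `A ≥ 0`, `B ≥ 1`, `ℓ = (A+1)·B`. The `ℓ × ℓ` matrix over the Laurent
polynomial ring `ℤ[q, q⁻¹]` whose rows are indexed by `w ∈ {0,…,ℓ-1}` and whose columns
enumerate `I = {0,…,A} × {-B,…,-1}` via `k ↦ (a,b) = (k % (A+1), -(k / (A+1)) - 1)`, with
`(w,(a,b))` entry `w^a · T^(b·w)`, has nonzero determinant. -/
theorem stmt_7 (A B : ℕ) (hB : 1 ≤ B) :
    Matrix.det (Matrix.of fun w k : Fin ((A + 1) * B) =>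
      LaurentPolynomial.C (((w : ℕ) : ℤ) ^ ((k : ℕ) % (A + 1))) *
        LaurentPolynomial.T ((-(((k : ℕ) / (A + 1) : ℕ) : ℤ) - 1) * ((w : ℕ) : ℤ))) ≠ 0 := by
  intro hdet
  haveI : IsDomain (LaurentPolynomial ℤ) := NoZeroDivisors.to_isDomain _
  haveI hRchar : CharZero (LaurentPolynomial ℤ) := by
    constructor
    intro a b h
    have h2 : (LaurentPolynomial.C (a : ℤ) : LaurentPolynomial ℤ) = LaurentPolynomial.C (b : ℤ) := by
      rw [map_natCast, map_natCast]; exact h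
    rw [← LaurentPolynomial.single_eq_C, ← LaurentPolynomial.single_eq_C] at h2
    exact_mod_cast AddMonoidAlgebra.single_right_injective h2
  set K := FractionRing (LaurentPolynomial ℤ) with hKdef
  set φ : LaurentPolynomial ℤ →+* K := algebraMap (LaurentPolynomial ℤ) K with hφdef
  have hφinj : Function.Injective φ := IsFractionRing.injective (LaurentPolynomial ℤ) K
  haveI : CharZero K := by
    constructor
    intro a b hab
    have h3 : φ a = φ b := by rw [map_natCast, map_natCast]; exact hab
    exact_mod_cast hφinj h3
  have hdet2 : (φ.mapMatrix (Matrix.of fun w k : Fin ((A + 1) * B) =>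
      LaurentPolynomial.C (((w : ℕ) : ℤ) ^ ((k : ℕ) % (A + 1))) *
        LaurentPolynomial.T ((-(((k : ℕ) / (A + 1) : ℕ) : ℤ) - 1) * ((w : ℕ) : ℤ)))).det = 0 := by
    rw [← RingHom.map_det, hdet, map_zero]
  obtain ⟨v, hv, hvz⟩ := Matrix.exists_mulVec_eq_zero_iff.mpr hdet2
  set e : Fin B × Fin (A + 1) ≃ Fin ((A + 1) * B) :=
    finProdFinEquiv.trans (finCongr (mul_comm B (A + 1))) with hedef
  have heval : ∀ p : Fin B × Fin (A + 1), ((e p : Fin ((A+1)*B)) : ℕ)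
      = (p.2 : ℕ) + (A + 1) * (p.1 : ℕ) := fun p => rfl
  have hmod : ∀ p : Fin B × Fin (A + 1), ((e p : Fin ((A+1)*B)) : ℕ) % (A + 1) = (p.2 : ℕ) := by
    intro p
    rw [heval, Nat.add_mul_mod_self_left, Nat.mod_eq_of_lt p.2.isLt]
  have hdiv : ∀ p : Fin B × Fin (A + 1), ((e p : Fin ((A+1)*B)) : ℕ) / (A + 1) = (p.1 : ℕ) := by
    intro p
    rw [heval, Nat.add_mul_div_left _ _ (Nat.succ_pos A), Nat.div_eq_of_lt p.2.isLt, zero_add]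
  set t : Fin B → K := fun b => φ (LaurentPolynomial.T (-((b : ℕ) : ℤ) - 1)) with htdef
  set P : Fin B → Polynomial K :=
    fun b => ∑ a : Fin (A + 1), Polynomial.C (v (e (b, a))) * Polynomial.X ^ (a : ℕ) with hPdef
  have hT0 : ∀ n : ℤ, (LaurentPolynomial.T n : LaurentPolynomial ℤ) ≠ 0 := by
    intro n h
    have h2 := LaurentPolynomial.isUnit_T (R := ℤ) n
    rw [h] at h2
    exact not_isUnit_zero h2
  have ht0 : ∀ b, t b ≠ 0 := by
    intro b h
    exact hT0 _ (hφinj (by simpa using h))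
  have htinj : Function.Injective t := by
    intro b b' h
    have h2 := hφinj h
    have h3 := AddMonoidAlgebra.single_left_injective (one_ne_zero (α := ℤ)) h2
    have h4 : ((b : ℕ) : ℤ) = ((b' : ℕ) : ℤ) := by omega
    exact Fin.ext (by exact_mod_cast h4)
  have hC : ∀ z : ℤ, φ (LaurentPolynomial.C z) = (z : K) :=
    fun z => eq_intCast (φ.comp LaurentPolynomial.C) z
  have hdeg : ∀ b, (P b).degree ≤ (A : ℕ) := by
    intro b
    refine le_trans (Polynomial.degree_sum_le _ _) (Finset.sup_le fun a _ => ?_)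
    refine le_trans (Polynomial.degree_C_mul_X_pow_le _ _) ?_
    exact_mod_cast Nat.lt_succ_iff.mp a.isLt
  have hvan : ∀ w : ℕ, w < (A + 1) * B → ∑ b, (P b).eval ((w : ℕ) : K) * t b ^ w = 0 := by
    intro w hw
    have h0 := congrFun hvz ⟨w, hw⟩
    simp only [Matrix.mulVec, dotProduct, Pi.zero_apply] at h0
    have h1 : ∑ k, (φ.mapMatrix (Matrix.of fun w k : Fin ((A + 1) * B) =>
        LaurentPolynomial.C (((w : ℕ) : ℤ) ^ ((k : ℕ) % (A + 1))) *
          LaurentPolynomial.T ((-(((k : ℕ) / (A + 1) : ℕ) : ℤ) - 1) * ((w : ℕ) : ℤ))))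
          ⟨w, hw⟩ k * v k = 0 := h0
    rw [← Fintype.sum_equiv e
      (fun p => (φ.mapMatrix (Matrix.of fun w k : Fin ((A + 1) * B) =>
        LaurentPolynomial.C (((w : ℕ) : ℤ) ^ ((k : ℕ) % (A + 1))) *
          LaurentPolynomial.T ((-(((k : ℕ) / (A + 1) : ℕ) : ℤ) - 1) * ((w : ℕ) : ℤ))))
          ⟨w, hw⟩ (e p) * v (e p))
      _ (fun p => rfl)] at h1
    rw [← h1, Fintype.sum_prod_type]
    apply Finset.sum_congr rfl
    intro b _
    have hPb : (P b).eval ((w : ℕ) : K) = ∑ a : Fin (A + 1), v (e (b, a)) * ((w : ℕ) : K) ^ (a : ℕ) := by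
      rw [hPdef]
      rw [Polynomial.eval_finset_sum]
      apply Finset.sum_congr rfl
      intro a _
      simp
    rw [hPb, Finset.sum_mul]
    apply Finset.sum_congr rfl
    intro a _
    have hTe : φ (LaurentPolynomial.T ((-(((b : ℕ) : ℤ)) - 1) * ((w : ℕ) : ℤ))) = t b ^ w := by
      rw [show ((-((b : ℕ) : ℤ)) - 1) * ((w : ℕ) : ℤ) = ((w : ℕ) : ℤ) * (-((b : ℕ) : ℤ) - 1) by ring,
        ← LaurentPolynomial.T_pow, map_pow]
    simp only [RingHom.mapMatrix_apply, Matrix.map_apply, Matrix.of_apply,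
      hmod (b, a), hdiv (b, a), map_mul, hC]
    rw [hTe]
    push_cast
    ring
  have hall := core_lemma A B t ht0 htinj P hdeg hvan
  apply hv
  funext k
  obtain ⟨⟨b, a⟩, rfl⟩ := e.surjective k
  have hc := congrArg (fun p => Polynomial.coeff p (a : ℕ)) (hall b)
  simp only [hPdef, Polynomial.finset_sum_coeff, Polynomial.coeff_C_mul,
    Polynomial.coeff_X_pow, Polynomial.coeff_zero, mul_ite, mul_one, mul_zero] at hc
  rw [Finset.sum_eq_single a] at hc
  · simpa using hc
  · intro a' _ hne
    rw [if_neg (fun hh => hne (Fin.ext hh.symm))]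
  · intro hmem
    exact absurd (Finset.mem_univ a) hmem
end

section
/- Fix integers A ≥ 0 and B ≥ 1, let I = {0, 1, …, A} × {−B, …, −2, −1} and ℓ = (A+1)·B. For a real number q > 1 let Z(q) be the real ℓ × ℓ matrix with rows indexed by w ∈ {0, 1, …, ℓ−1} and columns indexed by (a,b) ∈ I and with (w,(a,b)) entry w^{a} · q^{b·w}. Then there exist N ∈ ℕ, a real α > 0 and a real q_0 > 1 such that |det Z(q)| > α · q^{−N} for every real q ≥ q_0; in particular Z(q) is invertible for all sufficiently large real q. -/
open Finset Equiv Matrix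

namespace Stmt8Aux

lemma zpow_finset_sum {q : ℝ} (hq : q ≠ 0) {ι : Type*} (s : Finset ι) (f : ι → ℤ) :
    q ^ (∑ i ∈ s, f i) = ∏ i ∈ s, q ^ f i := by
  classical
  induction s using Finset.induction with
  | empty => simp
  | insert _ _ h ih => rw [Finset.sum_insert h, Finset.prod_insert h, zpow_add₀ hq, ih]

lemma abs_sign {n : Type*} [DecidableEq n] [Fintype n] (σ : Equiv.Perm n) :
    |((Equiv.Perm.sign σ : ℤ) : ℝ)| = 1 := by
  rcases Int.units_eq_one_or (Equiv.Perm.sign σ) with h | h <;> rw [h] <;> norm_num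

variable (A B : ℕ)

/-- the (shifted) column exponent coefficient -/
def fcol (k : Fin ((A+1)*B)) : ℤ := (((k : ℕ)/(A+1) : ℕ) : ℤ) + 1

def Esum (σ : Equiv.Perm (Fin ((A+1)*B))) : ℤ :=
  ∑ k, fcol A B k * ((σ k : ℕ) : ℤ)

def mmin : ℤ := ∑ k, fcol A B k * ((Fin.rev k : ℕ) : ℤ)

def blockOK (σ : Equiv.Perm (Fin ((A+1)*B))) : Prop :=
  ∀ k, ((σ k : ℕ))/(A+1) = B - 1 - (k : ℕ)/(A+1)

lemma fcol_pos (k : Fin ((A+1)*B)) : 0 < fcol A B k := by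
  unfold fcol; positivity

lemma mmin_nonneg : 0 ≤ mmin A B := by
  unfold mmin
  exact Finset.sum_nonneg fun k _ => mul_nonneg (fcol_pos A B k).le (by positivity)

lemma antivary_fg :
    Antivary (fcol A B) (fun k : Fin ((A+1)*B) => ((Fin.rev k : ℕ) : ℤ)) := by
  intro i j h
  have h0 : ((Fin.rev i : ℕ) : ℤ) < ((Fin.rev j : ℕ) : ℤ) := h
  have h' : Fin.rev i < Fin.rev j := by
    have hn : ((Fin.rev i : ℕ)) < ((Fin.rev j : ℕ)) := by exact_mod_cast h0
    exact hn
  have hji : j < i := Fin.rev_lt_rev.mp h'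
  have hd : (j : ℕ)/(A+1) ≤ (i : ℕ)/(A+1) := Nat.div_le_div_right hji.le
  unfold fcol
  have := hd
  omega

lemma mmin_le_Esum (σ : Equiv.Perm (Fin ((A+1)*B))) : mmin A B ≤ Esum A B σ := by
  have key : ∀ k, (((σ.trans Fin.revPerm) k).rev) = σ k := fun k => by
    simp only [Equiv.trans_apply, Fin.revPerm_apply, Fin.rev_rev]
  have h := (antivary_fg A B).sum_mul_le_sum_mul_comp_perm (σ := σ.trans Fin.revPerm)
  unfold mmin Esum
  have e1 : ∑ k, fcol A B k * ((σ k : ℕ) : ℤ)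
      = ∑ i, fcol A B i * ((((σ.trans Fin.revPerm) i).rev : ℕ) : ℤ) :=
    Finset.sum_congr rfl fun k _ => by rw [key]
  rw [e1]; exact h

lemma Esum_eq_iff (σ : Equiv.Perm (Fin ((A+1)*B))) :
    Esum A B σ = mmin A B ↔
      Antivary (fcol A B) (fun k : Fin ((A+1)*B) => ((σ k : ℕ) : ℤ)) := by
  have key : ∀ k, (((σ.trans Fin.revPerm) k).rev) = σ k := fun k => by
    simp only [Equiv.trans_apply, Fin.revPerm_apply, Fin.rev_rev]
  have h := (antivary_fg A B).sum_mul_eq_sum_mul_comp_perm_iff (σ := σ.trans Fin.revPerm)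
  have h1 : (fun k : Fin ((A+1)*B) => ((Fin.rev k : ℕ) : ℤ)) ∘ (σ.trans Fin.revPerm)
      = fun k => ((σ k : ℕ) : ℤ) := by
    funext k; simp only [Function.comp_apply]; rw [key]
  rw [h1] at h
  unfold Esum mmin
  have e1 : ∑ k, fcol A B k * ((σ k : ℕ) : ℤ)
      = ∑ i, fcol A B i * ((((σ.trans Fin.revPerm) i).rev : ℕ) : ℤ) :=
    Finset.sum_congr rfl fun k _ => by rw [key]
  rw [e1, h]

lemma antivary_iff (σ : Equiv.Perm (Fin ((A+1)*B))) :
    Antivary (fcol A B) (fun k : Fin ((A+1)*B) => ((σ k : ℕ) : ℤ)) ↔ blockOK A B σ := by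
  constructor
  · intro hA k
    set t := (k : ℕ)/(A+1) with ht
    have hc : (A+1)*B = B*(A+1) := Nat.mul_comm _ _
    have htB : t < B := by
      refine (Nat.div_lt_iff_lt_mul (by omega : 0 < A+1)).mpr ?_
      have := k.isLt; omega
    have hub : (σ k : ℕ) + t*(A+1) < (A+1)*B := by
      rcases Nat.eq_zero_or_pos t with h0 | hpos
      · have hz : t*(A+1) = 0 := by rw [h0, Nat.zero_mul]
        have := (σ k).isLt; omega
      · have hlt : t*(A+1) < (A+1)*B := by
          calc t*(A+1) < B*(A+1) := by
                exact mul_lt_mul_of_pos_right htB (Nat.succ_pos A)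
            _ = (A+1)*B := mul_comm _ _
        set a : Fin ((A+1)*B) := ⟨t*(A+1), hlt⟩ with ha
        have hmap : ∀ k' ∈ Finset.Iio a, σ k' ∈ Finset.Ioi (σ k) := by
          intro k' hk'
          have hk'lt : (k' : ℕ) < t*(A+1) := by
            simpa [Finset.mem_Iio, Fin.lt_def, ha] using hk'
          have hdiv : (k' : ℕ)/(A+1) < t :=
            (Nat.div_lt_iff_lt_mul (by omega : 0 < A+1)).mpr hk'lt
          have hne : k' ≠ k := by
            intro he; rw [he] at hdiv; omega
          have : σ k < σ k' := by
            by_contra hcon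
            push_neg at hcon
            have hne' : σ k' ≠ σ k := fun he => hne (σ.injective he)
            have hlt2 : σ k' < σ k := lt_of_le_of_ne hcon hne'
            have : ((σ k' : ℕ) : ℤ) < ((σ k : ℕ) : ℤ) := by
              exact_mod_cast hlt2
            have h5 := hA this
            unfold fcol at h5
            omega
          simpa [Finset.mem_Ioi] using this
        have hcard := Finset.card_le_card_of_injOn σ hmap (σ.injective.injOn)
        rw [Fin.card_Iio, Fin.card_Ioi] at hcard
        have := (σ k).isLt
        simp only [ha] at hcard
        omega
    have hlb : (A+1)*B ≤ (σ k : ℕ) + (t+1)*(A+1) := by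
      rcases lt_or_ge ((t+1)*(A+1)) ((A+1)*B) with hlt | hge
      · set a : Fin ((A+1)*B) := ⟨(t+1)*(A+1), hlt⟩ with ha
        have hmap : ∀ k' ∈ Finset.Ici a, σ k' ∈ Finset.Iio (σ k) := by
          intro k' hk'
          have hk'ge : (t+1)*(A+1) ≤ (k' : ℕ) := by
            simpa [Finset.mem_Ici, Fin.le_def, ha] using hk'
          have hdiv : t + 1 ≤ (k' : ℕ)/(A+1) :=
            (Nat.le_div_iff_mul_le (by omega : 0 < A+1)).mpr hk'ge
          have hne : k' ≠ k := by
            intro he; rw [he] at hdiv; omega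
          have : σ k' < σ k := by
            by_contra hcon
            push_neg at hcon
            have hne' : σ k ≠ σ k' := fun he => hne (σ.injective he.symm)
            have hlt2 : σ k < σ k' := lt_of_le_of_ne hcon hne'
            have : ((σ k : ℕ) : ℤ) < ((σ k' : ℕ) : ℤ) := by
              exact_mod_cast hlt2
            have h5 := hA this
            unfold fcol at h5
            omega
          simpa [Finset.mem_Iio] using this
        have hcard := Finset.card_le_card_of_injOn σ hmap (σ.injective.injOn)
        rw [Fin.card_Ici, Fin.card_Iio] at hcard
        simp only [ha] at hcard
        omega
      · have := (σ k).isLt; omega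
    have e1 : (B - 1 - t) * (A+1) = B*(A+1) - (t+1)*(A+1) := by
      have h1 : B - 1 - t = B - (t+1) := by omega
      rw [h1, Nat.sub_mul]
    have e2 : (B - t) * (A+1) = B*(A+1) - t*(A+1) := Nat.sub_mul _ _ _
    apply Nat.div_eq_of_lt_le
    · omega
    · have hs : B - 1 - t + 1 = B - t := by omega
      rw [hs]
      omega
  · intro hb i j hlt
    simp only at hlt ⊢
    have hltn : (σ i : ℕ) < (σ j : ℕ) := by exact_mod_cast hlt
    have hd : (σ i : ℕ)/(A+1) ≤ (σ j : ℕ)/(A+1) := Nat.div_le_div_right hltn.le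
    rw [hb i, hb j] at hd
    have hc : (A+1)*B = B*(A+1) := Nat.mul_comm _ _
    have hti : (i : ℕ)/(A+1) < B := (Nat.div_lt_iff_lt_mul (by omega : 0 < A+1)).mpr
      (by have := i.isLt; omega)
    have htj : (j : ℕ)/(A+1) < B := (Nat.div_lt_iff_lt_mul (by omega : 0 < A+1)).mpr
      (by have := j.isLt; omega)
    have : (j : ℕ)/(A+1) ≤ (i : ℕ)/(A+1) := by omega
    unfold fcol
    omega

/-! ### The block matrix -/

def Mblk : Matrix (Fin ((A+1)*B)) (Fin ((A+1)*B)) ℝ :=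
  Matrix.of fun r k =>
    if (r : ℕ)/(A+1) = B - 1 - (k : ℕ)/(A+1) then ((r : ℕ) : ℝ) ^ ((k : ℕ) % (A+1)) else 0

def E : Fin (A+1) × Fin B ≃ Fin ((A+1)*B) :=
  (Equiv.prodComm _ _).trans (finProdFinEquiv.trans (finCongr (Nat.mul_comm B (A+1))))

lemma E_val (r : Fin (A+1)) (i : Fin B) : ((E A B (r, i)) : ℕ) = (r : ℕ) + (A+1)*(i : ℕ) := by
  simp [E, finProdFinEquiv]

lemma E_div (r : Fin (A+1)) (i : Fin B) : ((E A B (r, i)) : ℕ)/(A+1) = (i : ℕ) := by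
  rw [E_val, Nat.add_mul_div_left _ _ (by omega : 0 < A+1), Nat.div_eq_of_lt r.isLt]
  omega

lemma E_mod (r : Fin (A+1)) (i : Fin B) : ((E A B (r, i)) : ℕ) % (A+1) = (r : ℕ) := by
  rw [E_val, Nat.add_mul_mod_self_left, Nat.mod_eq_of_lt r.isLt]

lemma det_Mblk_ne_zero : (Mblk A B).det ≠ 0 := by
  classical
  set τ : Equiv.Perm (Fin (A+1) × Fin B) :=
    (Equiv.refl (Fin (A+1))).prodCongr Fin.revPerm with hτ
  have key : (Mblk A B).submatrix (E A B) ((E A B) ∘ τ) =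
      Matrix.blockDiagonal
        (fun i : Fin B => Matrix.vandermonde
          (fun r : Fin (A+1) => (((r : ℕ) + (A+1)*(i : ℕ) : ℕ) : ℝ))) := by
    ext ⟨r, i⟩ ⟨s, i'⟩
    have hrev : ((Fin.rev i' : ℕ)) = B - 1 - (i' : ℕ) := by
      rw [Fin.val_rev]; omega
    have hcond : ((E A B (r, i)) : ℕ)/(A+1) = B - 1 - ((E A B (τ (s, i'))) : ℕ)/(A+1)
        ↔ i = i' := by
      have hτa : τ (s, i') = (s, Fin.rev i') := rfl
      rw [hτa, E_div, E_div, hrev]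
      constructor
      · intro h
        have hi := i.isLt; have hi' := i'.isLt
        exact Fin.ext (by omega)
      · intro h
        rw [h]
        have hi' := i'.isLt
        omega
    simp only [Matrix.submatrix_apply, Function.comp_apply, Matrix.blockDiagonal_apply,
      Mblk, Matrix.of_apply]
    by_cases h : i = i'
    · rw [if_pos (hcond.mpr h), if_pos h]
      have hτa : τ (s, i') = (s, Fin.rev i') := rfl
      rw [hτa, E_mod, E_val, Matrix.vandermonde]
      subst h
      rfl
    · rw [if_neg (fun hc => h (hcond.mp hc)), if_neg h]
  have hbd : (Matrix.blockDiagonal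
      (fun i : Fin B => Matrix.vandermonde
        (fun r : Fin (A+1) => (((r : ℕ) + (A+1)*(i : ℕ) : ℕ) : ℝ)))).det ≠ 0 := by
    rw [Matrix.det_blockDiagonal]
    apply Finset.prod_ne_zero_iff.mpr
    intro i _
    rw [Matrix.det_vandermonde]
    apply Finset.prod_ne_zero_iff.mpr
    intro a _
    apply Finset.prod_ne_zero_iff.mpr
    intro b hb
    have hab : (a : ℕ) < (b : ℕ) := Fin.lt_def.mp (Finset.mem_Ioi.mp hb)
    have : ((a : ℕ) + (A+1)*(i : ℕ) : ℕ) < ((b : ℕ) + (A+1)*(i : ℕ) : ℕ) := by omega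
    have hlt : (((a : ℕ) + (A+1)*(i : ℕ) : ℕ) : ℝ) < (((b : ℕ) + (A+1)*(i : ℕ) : ℕ) : ℝ) := by
      exact_mod_cast this
    exact sub_ne_zero_of_ne (ne_of_gt hlt)
  have h1 : (Mblk A B).submatrix (E A B) ((E A B) ∘ τ)
      = ((Mblk A B).submatrix (E A B) (E A B)).submatrix (Equiv.refl _) τ := by
    rw [Matrix.submatrix_submatrix]
    rfl
  rw [h1] at key
  have h3 : ((Mblk A B).submatrix (E A B) (E A B)).det = (Mblk A B).det :=
    Matrix.det_submatrix_equiv_self _ _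
  intro hzero
  apply hbd
  rw [← key]
  have : (((Mblk A B).submatrix (E A B) (E A B)).submatrix (⇑(Equiv.refl _)) ⇑τ).det
      = (Equiv.Perm.sign τ : ℝ) * (Mblk A B).det := by
    have h2 := Matrix.det_permute' τ ((Mblk A B).submatrix (E A B) (E A B))
    rw [h3] at h2
    simpa using h2
  rw [this, hzero, mul_zero]

/-! ### Leibniz expansion pieces -/

noncomputable def Pprod (σ : Equiv.Perm (Fin ((A+1)*B))) : ℝ :=
  ∏ k, ((σ k : ℕ) : ℝ) ^ ((k : ℕ) % (A+1))

lemma Pprod_nonneg (σ : Equiv.Perm (Fin ((A+1)*B))) : 0 ≤ Pprod A B σ :=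
  Finset.prod_nonneg fun k _ => by positivity

noncomputable def Kbound : ℝ := ∑ σ : Equiv.Perm (Fin ((A+1)*B)), Pprod A B σ

lemma prod_entries {q : ℝ} (hq : 0 < q) (σ : Equiv.Perm (Fin ((A+1)*B))) :
    (∏ k : Fin ((A+1)*B), (((σ k : ℕ) : ℝ) ^ ((k : ℕ) % (A + 1)) *
        q ^ ((-(((k : ℕ) / (A + 1) : ℕ) : ℤ) - 1) * ((σ k : ℕ) : ℤ))))
      = Pprod A B σ * q ^ (-(Esum A B σ)) := by
  rw [Finset.prod_mul_distrib]
  unfold Pprod Esum fcol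
  congr 1
  rw [← zpow_finset_sum hq.ne' Finset.univ]
  congr 1
  rw [← Finset.sum_neg_distrib]
  apply Finset.sum_congr rfl
  intro k _
  ring

lemma blockOK_prod {σ : Equiv.Perm (Fin ((A+1)*B))} (hb : blockOK A B σ) :
    (∏ k, Mblk A B (σ k) k) = Pprod A B σ := by
  unfold Pprod
  apply Finset.prod_congr rfl
  intro k _
  unfold Mblk
  rw [Matrix.of_apply, if_pos (hb k)]

lemma not_blockOK_prod {σ : Equiv.Perm (Fin ((A+1)*B))} (hb : ¬ blockOK A B σ) :
    (∏ k, Mblk A B (σ k) k) = 0 := by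
  unfold blockOK at hb
  push_neg at hb
  obtain ⟨k, hk⟩ := hb
  apply Finset.prod_eq_zero (Finset.mem_univ k)
  unfold Mblk
  rw [Matrix.of_apply, if_neg hk]

/-! ### The main estimate -/

lemma main_est {q : ℝ} (hq1 : 1 ≤ q) :
    |Matrix.det (Matrix.of fun w k : Fin ((A + 1) * B) =>
        ((w : ℕ) : ℝ) ^ ((k : ℕ) % (A + 1)) *
          q ^ ((-(((k : ℕ) / (A + 1) : ℕ) : ℤ) - 1) * ((w : ℕ) : ℤ)))
      - (Mblk A B).det * q ^ (-(mmin A B))|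
      ≤ Kbound A B * q ^ (-(mmin A B) - 1) := by
  classical
  have hq0 : (0:ℝ) < q := lt_of_lt_of_le one_pos hq1
  rw [Matrix.det_apply', Matrix.det_apply', Finset.sum_mul, ← Finset.sum_sub_distrib]
  have hterm : ∀ σ : Equiv.Perm (Fin ((A+1)*B)),
      |((Equiv.Perm.sign σ : ℤ) : ℝ) * (∏ k, (Matrix.of fun w k : Fin ((A + 1) * B) =>
          ((w : ℕ) : ℝ) ^ ((k : ℕ) % (A + 1)) *
            q ^ ((-(((k : ℕ) / (A + 1) : ℕ) : ℤ) - 1) * ((w : ℕ) : ℤ))) (σ k) k)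
        - ((Equiv.Perm.sign σ : ℤ) : ℝ) * (∏ k, Mblk A B (σ k) k) * q ^ (-(mmin A B))|
        ≤ Pprod A B σ * q ^ (-(mmin A B) - 1) := by
    intro σ
    have hentry : (∏ k, (Matrix.of fun w k : Fin ((A + 1) * B) =>
          ((w : ℕ) : ℝ) ^ ((k : ℕ) % (A + 1)) *
            q ^ ((-(((k : ℕ) / (A + 1) : ℕ) : ℤ) - 1) * ((w : ℕ) : ℤ))) (σ k) k)
        = Pprod A B σ * q ^ (-(Esum A B σ)) := by
      rw [← prod_entries A B hq0 σ]
      apply Finset.prod_congr rfl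
      intro k _
      rw [Matrix.of_apply]
    rw [hentry]
    by_cases hb : blockOK A B σ
    · rw [blockOK_prod A B hb]
      have hE : Esum A B σ = mmin A B := (Esum_eq_iff A B σ).mpr ((antivary_iff A B σ).mpr hb)
      rw [hE]
      have : ((Equiv.Perm.sign σ : ℤ) : ℝ) * (Pprod A B σ * q ^ (-(mmin A B)))
          - ((Equiv.Perm.sign σ : ℤ) : ℝ) * Pprod A B σ * q ^ (-(mmin A B)) = 0 := by ring
      rw [this, abs_zero]
      have := Pprod_nonneg A B σ
      positivity
    · rw [not_blockOK_prod A B hb]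
      have hE : mmin A B + 1 ≤ Esum A B σ := by
        have h1 := mmin_le_Esum A B σ
        have h2 : Esum A B σ ≠ mmin A B := fun he =>
          hb ((antivary_iff A B σ).mp ((Esum_eq_iff A B σ).mp he))
        omega
      have hzle : q ^ (-(Esum A B σ)) ≤ q ^ (-(mmin A B) - 1) :=
        zpow_le_zpow_right₀ hq1 (by omega)
      calc |((Equiv.Perm.sign σ : ℤ) : ℝ) * (Pprod A B σ * q ^ (-(Esum A B σ)))
            - ((Equiv.Perm.sign σ : ℤ) : ℝ) * 0 * q ^ (-(mmin A B))|
          = |((Equiv.Perm.sign σ : ℤ) : ℝ)| * |Pprod A B σ * q ^ (-(Esum A B σ))| := by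
            rw [mul_zero, zero_mul, sub_zero, abs_mul]
        _ = Pprod A B σ * q ^ (-(Esum A B σ)) := by
            rw [abs_sign]
            rw [one_mul, abs_of_nonneg (mul_nonneg (Pprod_nonneg A B σ) (zpow_pos hq0 _).le)]
        _ ≤ Pprod A B σ * q ^ (-(mmin A B) - 1) :=
            mul_le_mul_of_nonneg_left hzle (Pprod_nonneg A B σ)
  calc |∑ σ : Equiv.Perm (Fin ((A+1)*B)),
        (((Equiv.Perm.sign σ : ℤ) : ℝ) * (∏ k, (Matrix.of fun w k : Fin ((A + 1) * B) =>
          ((w : ℕ) : ℝ) ^ ((k : ℕ) % (A + 1)) *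
            q ^ ((-(((k : ℕ) / (A + 1) : ℕ) : ℤ) - 1) * ((w : ℕ) : ℤ))) (σ k) k)
        - ((Equiv.Perm.sign σ : ℤ) : ℝ) * (∏ k, Mblk A B (σ k) k) * q ^ (-(mmin A B)))|
      ≤ ∑ σ : Equiv.Perm (Fin ((A+1)*B)),
        |((Equiv.Perm.sign σ : ℤ) : ℝ) * (∏ k, (Matrix.of fun w k : Fin ((A + 1) * B) =>
          ((w : ℕ) : ℝ) ^ ((k : ℕ) % (A + 1)) *
            q ^ ((-(((k : ℕ) / (A + 1) : ℕ) : ℤ) - 1) * ((w : ℕ) : ℤ))) (σ k) k)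
        - ((Equiv.Perm.sign σ : ℤ) : ℝ) * (∏ k, Mblk A B (σ k) k) * q ^ (-(mmin A B))| :=
        Finset.abs_sum_le_sum_abs _ _
    _ ≤ ∑ σ : Equiv.Perm (Fin ((A+1)*B)), Pprod A B σ * q ^ (-(mmin A B) - 1) :=
        Finset.sum_le_sum fun σ _ => hterm σ
    _ = Kbound A B * q ^ (-(mmin A B) - 1) := by
        rw [Kbound, Finset.sum_mul]

end Stmt8Aux

/-- Fix `A ≥ 0`, `B ≥ 1`, `ℓ = (A+1)·B`. For real `q > 1` let `Z q` be the real
`ℓ × ℓ` matrix with rows indexed by `w ∈ {0,…,ℓ-1}`, columns enumerating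
`I = {0,…,A} × {-B,…,-1}` via `k ↦ (a,b) = (k % (A+1), -(k / (A+1)) - 1)` and `(w,(a,b))`
entry `w^a · q^(b·w)`. Then there exist `N ∈ ℕ`, `α > 0` and `q₀ > 1` such that
`|det (Z q)| > α · q^(-N)` for every `q ≥ q₀`; in particular `Z q` is invertible
(its determinant is a unit) for all such `q`. -/
theorem stmt_8 (A B : ℕ) (hB : 1 ≤ B) :
    ∃ (N : ℕ) (α : ℝ), 0 < α ∧ ∃ q₀ : ℝ, 1 < q₀ ∧
      ∀ q : ℝ, q₀ ≤ q →
        α * q ^ (-(N : ℤ)) <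
          |Matrix.det (Matrix.of fun w k : Fin ((A + 1) * B) =>
            ((w : ℕ) : ℝ) ^ ((k : ℕ) % (A + 1)) *
              q ^ ((-(((k : ℕ) / (A + 1) : ℕ) : ℤ) - 1) * ((w : ℕ) : ℤ)))| ∧
        IsUnit (Matrix.det (Matrix.of fun w k : Fin ((A + 1) * B) =>
            ((w : ℕ) : ℝ) ^ ((k : ℕ) % (A + 1)) *
              q ^ ((-(((k : ℕ) / (A + 1) : ℕ) : ℤ) - 1) * ((w : ℕ) : ℤ)))) := by
  classical
  set c₀ : ℝ := (Stmt8Aux.Mblk A B).det with hc₀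
  have hc₀ne : c₀ ≠ 0 := Stmt8Aux.det_Mblk_ne_zero A B
  have habs : 0 < |c₀| := abs_pos.mpr hc₀ne
  set K : ℝ := Stmt8Aux.Kbound A B with hK
  have hKnn : 0 ≤ K := Finset.sum_nonneg fun σ _ => Stmt8Aux.Pprod_nonneg A B σ
  set m : ℤ := Stmt8Aux.mmin A B with hm
  have hm0 : 0 ≤ m := Stmt8Aux.mmin_nonneg A B
  refine ⟨m.toNat, |c₀|/2, by positivity, max 2 (2*K/|c₀| + 2), ?_, ?_⟩
  · have : (2:ℝ) ≤ max 2 (2*K/|c₀| + 2) := le_max_left _ _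
    linarith
  · intro q hq
    have hq2 : (2:ℝ) ≤ q := le_trans (le_max_left _ _) hq
    have hqK : 2*K/|c₀| + 2 ≤ q := le_trans (le_max_right _ _) hq
    have hq1 : (1:ℝ) ≤ q := by linarith
    have hq0 : (0:ℝ) < q := by linarith
    have hNm : ((m.toNat : ℤ)) = m := Int.toNat_of_nonneg hm0
    have est := Stmt8Aux.main_est A B (q := q) hq1
    rw [← hc₀, ← hK, ← hm] at est
    set D : ℝ := Matrix.det (Matrix.of fun w k : Fin ((A + 1) * B) =>
        ((w : ℕ) : ℝ) ^ ((k : ℕ) % (A + 1)) *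
          q ^ ((-(((k : ℕ) / (A + 1) : ℕ) : ℤ) - 1) * ((w : ℕ) : ℤ))) with hD
    -- key numeric inequality
    have hsplit : q ^ (-m - 1) = q ^ (-m) * q⁻¹ := by
      rw [zpow_sub₀ hq0.ne', zpow_one, div_eq_mul_inv]
    have hqinv : K * q⁻¹ < |c₀|/2 := by
      rw [← div_eq_mul_inv, div_lt_div_iff₀ hq0 (by norm_num : (0:ℝ) < 2)]
      have e : |c₀| * (2*K/|c₀| + 2) = 2*K + 2*|c₀| := by
        field_simp
      have h2 : 2*K + 2*|c₀| ≤ |c₀| * q := by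
        rw [← e]
        exact mul_le_mul_of_nonneg_left hqK habs.le
      linarith
    have hzp : (0:ℝ) < q ^ (-m) := zpow_pos hq0 _
    have hKq : K * q ^ (-m - 1) < (|c₀|/2) * q ^ (-m) := by
      rw [hsplit]
      calc K * (q ^ (-m) * q⁻¹) = (K * q⁻¹) * q ^ (-m) := by ring
        _ < (|c₀|/2) * q ^ (-m) := mul_lt_mul_of_pos_right hqinv hzp
    have htri : |c₀ * q ^ (-m)| - |D - c₀ * q ^ (-m)| ≤ |D| := by
      have h := abs_sub_abs_le_abs_sub (c₀ * q ^ (-m)) D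
      have h' : |c₀ * q ^ (-m) - D| = |D - c₀ * q ^ (-m)| := abs_sub_comm _ _
      linarith
    have habs_cq : |c₀ * q ^ (-m)| = |c₀| * q ^ (-m) := by
      rw [abs_mul, abs_of_pos hzp]
    have hmain : (|c₀|/2) * q ^ (-m) < |D| := by
      have : |c₀| * q ^ (-m) - K * q ^ (-m - 1) ≤ |D| := by
        rw [← habs_cq]
        linarith
      linarith
    have hNq : q ^ (-(m.toNat : ℤ)) = q ^ (-m) := by rw [hNm]
    constructor
    · rw [hNq]
      exact hmain
    · rw [isUnit_iff_ne_zero]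
      intro h0
      rw [h0, abs_zero] at hmain
      have : (0:ℝ) < (|c₀|/2) * q ^ (-m) := by positivity
      linarith
end

section
/- Let (a_1, b_1), …, (a_k, b_k) be pairwise distinct pairs with a_i ∈ ℕ and b_i ∈ ℚ, let q ≥ 2 be a real number and let c_1, …, c_k ∈ ℂ. Define h : ℕ → ℂ by h(λ) = ∑_{i=1}^k c_i · λ^{a_i} · q^{b_i·λ}. Then the limit lim_{λ→∞} h(λ) exists in ℂ if and only if c_i = 0 for every index i such that either b_i > 0, or b_i = 0 and a_i > 0; and in that case the limit equals ∑_{i : (a_i,b_i) = (0,0)} c_i (which is 0 if no pair equals (0,0)). -/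
/-!
Write `e_{a,b}(λ) = λ ^ a * q ^ (b * λ)`. Since `q > 1`, `e_{a,b} = o(e_{a',b'})` whenever
`(b, a) < (b', a')` lexicographically, and `e_{0,0} = 1`; so terms with `(b, a) < (0, 0)` tend
to `0` and the terms with `(b, a) = (0, 0)` are constant. Conversely, if a term with
`(b, a) > (0, 0)` has a nonzero coefficient, let `(b₀, a₀)` be the lexicographically largest pair
with a nonzero coefficient. Every other term is `o(e_{a₀,b₀})`, and so is the convergent, hence
bounded, sum since `e_{a₀,b₀} → ∞`; therefore the coefficient of `e_{a₀,b₀}` vanishes.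
-/

open Filter Asymptotics Topology Real

theorem eq_zero_of_sum_isLittleO {α ι 𝕜 : Type*} [Fintype ι] [NormedField 𝕜] {l : Filter α}
    {E : ι → α → 𝕜} {c : ι → 𝕜} {i₀ : ι} (hE : ∃ᶠ x in l, E i₀ x ≠ 0)
    (hother : ∀ i ≠ i₀, (fun x => c i * E i x) =o[l] E i₀)
    (hsum : (fun x => ∑ i, c i * E i x) =o[l] E i₀) : c i₀ = 0 := by
  classical
  have hrest : (fun x => ∑ i ∈ Finset.univ.erase i₀, c i * E i x) =o[l] E i₀ :=
    IsLittleO.fun_sum fun i hi => hother i (Finset.ne_of_mem_erase hi)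
  have hlead : (fun x => c i₀ * E i₀ x) =o[l] E i₀ :=
    (hsum.sub hrest).congr_left fun x => by
      rw [← Finset.add_sum_erase _ _ (Finset.mem_univ i₀), add_sub_cancel_right]
  by_contra hc
  exact isLittleO_irrefl hE ((isLittleO_const_mul_left_iff hc).mp hlead)

theorem one_isBigO_pow_atTop (n : ℕ) : (fun _ : ℝ => (1 : ℝ)) =O[atTop] fun x => x ^ n :=
  (isBigO_const_left_iff_pos_le_norm one_ne_zero).2 ⟨1, one_pos, by
    filter_upwards [eventually_ge_atTop 1] with x hx
    simpa [abs_of_nonneg (zero_le_one.trans hx)] using one_le_pow₀ hx⟩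

theorem isLittleO_pow_mul_exp_of_toLex_lt {m n : ℕ} {β γ : ℝ}
    (h : toLex (β, m) < toLex (γ, n)) :
    (fun x : ℝ => x ^ m * exp (β * x)) =o[atTop] fun x => x ^ n * exp (γ * x) := by
  rcases Prod.Lex.toLex_lt_toLex.mp h with hβγ | ⟨rfl, hmn⟩
  · have hpow := (isLittleO_pow_exp_pos_mul_atTop m (sub_pos.2 hβγ)).mul_isBigO
      ((one_isBigO_pow_atTop n).mul (isBigO_refl (fun x => exp (β * x)) atTop))
    refine hpow.congr (fun x => by ring) fun x => ?_
    dsimp only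
    rw [mul_left_comm, ← exp_add]
    ring_nf
  · exact (isLittleO_pow_pow_atTop_of_lt hmn).mul_isBigO (isBigO_refl _ _)

noncomputable def expMonomial (q : ℝ) (a : ℕ) (b x : ℝ) : ℝ := x ^ a * q ^ (b * x)

section ExpMonomial

variable {q : ℝ} {a a' : ℕ} {b b' : ℝ}

theorem expMonomial_eq_pow_mul_exp (hq : 0 < q) :
    expMonomial q a b = fun x => x ^ a * exp (b * log q * x) := by
  ext x
  rw [expMonomial, rpow_def_of_pos hq]
  ring_nf

theorem expMonomial_zero_zero (q : ℝ) : expMonomial q 0 0 = fun _ => 1 := by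
  ext x
  simp [expMonomial]

theorem expMonomial_isLittleO_of_toLex_lt (hq : 1 < q)
    (h : toLex (b, a) < toLex (b', a')) :
    expMonomial q a b =o[atTop] expMonomial q a' b' := by
  have hlog := log_pos hq
  rw [expMonomial_eq_pow_mul_exp (zero_lt_one.trans hq),
    expMonomial_eq_pow_mul_exp (zero_lt_one.trans hq)]
  refine isLittleO_pow_mul_exp_of_toLex_lt (Prod.Lex.toLex_lt_toLex.mpr ?_)
  rcases Prod.Lex.toLex_lt_toLex.mp h with hb | ⟨hb, ha⟩
  · exact Or.inl (mul_lt_mul_of_pos_right hb hlog)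
  · exact Or.inr ⟨congrArg (· * log q) hb, ha⟩

theorem tendsto_expMonomial_nhds_zero (hq : 1 < q)
    (h : toLex (b, a) < toLex (0, 0)) : Tendsto (expMonomial q a b) atTop (𝓝 0) := by
  have := expMonomial_isLittleO_of_toLex_lt hq h
  rw [expMonomial_zero_zero] at this
  exact (isLittleO_one_iff ℝ).mp this

theorem tendsto_norm_expMonomial_atTop (hq : 1 < q)
    (h : toLex (0, 0) < toLex (b, a)) :
    Tendsto (fun x => ‖expMonomial q a b x‖) atTop atTop := by
  have := expMonomial_isLittleO_of_toLex_lt hq h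
  rw [expMonomial_zero_zero] at this
  exact (isLittleO_one_left_iff ℝ).mp this

theorem expMonomial_natCast_isLittleO (hq : 1 < q)
    (h : toLex (b, a) < toLex (b', a')) :
    (fun l : ℕ => (expMonomial q a b l : ℂ)) =o[atTop] fun l => (expMonomial q a' b' l : ℂ) := by
  rw [Complex.isLittleO_ofReal_left, Complex.isLittleO_ofReal_right]
  exact (expMonomial_isLittleO_of_toLex_lt hq h).comp_tendsto tendsto_natCast_atTop_atTop

end ExpMonomial

section Sum

variable {ι : Type*} [Fintype ι] {q : ℝ} {a : ι → ℕ} {b : ι → ℝ} {c : ι → ℂ}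

theorem tendsto_sum_expMonomial (hq : 1 < q)
    (hc : ∀ i, toLex (0, 0) < toLex (b i, a i) → c i = 0) :
    Tendsto (fun l : ℕ => ∑ i, c i * (expMonomial q (a i) (b i) l : ℂ)) atTop
      (𝓝 (∑ i with a i = 0 ∧ b i = 0, c i)) := by
  rw [Finset.sum_filter]
  refine tendsto_finsetSum _ fun i _ => ?_
  by_cases hci : c i = 0
  · simp [hci]
  rcases (not_lt.mp (mt (hc i) hci)).lt_or_eq with hlt | heq
  · rw [if_neg fun h => hlt.ne (by rw [h.1, h.2])]
    simpa using ((Complex.continuous_ofReal.tendsto 0).comp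
      ((tendsto_expMonomial_nhds_zero hq hlt).comp tendsto_natCast_atTop_atTop)).const_mul (c i)
  · obtain ⟨hb, ha⟩ : b i = 0 ∧ a i = 0 := by simpa using heq
    simp [ha, hb, expMonomial_zero_zero]

theorem eq_zero_of_tendsto_sum_expMonomial (hq : 1 < q)
    (hinj : Function.Injective fun i => toLex (b i, a i)) {L : ℂ}
    (hL : Tendsto (fun l : ℕ => ∑ i, c i * (expMonomial q (a i) (b i) l : ℂ)) atTop (𝓝 L))
    {j : ι} (hj : toLex (0, 0) < toLex (b j, a j)) : c j = 0 := by
  classical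
  by_contra hcj
  obtain ⟨i₀, hci₀, hmax⟩ := Finset.exists_max_image {i | c i ≠ 0}
    (fun i => toLex (b i, a i)) ⟨j, by simpa using hcj⟩
  simp only [Finset.mem_filter, Finset.mem_univ, true_and] at hci₀ hmax
  have hgrow : Tendsto (fun l : ℕ => ‖(expMonomial q (a i₀) (b i₀) l : ℂ)‖) atTop atTop := by
    simpa [Function.comp_def] using (tendsto_norm_expMonomial_atTop hq
      (hj.trans_le (hmax j hcj))).comp tendsto_natCast_atTop_atTop
  refine hci₀ (eq_zero_of_sum_isLittleO (E := fun i (l : ℕ) => (expMonomial q (a i) (b i) l : ℂ))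
    ((hgrow.eventually_gt_atTop 0).frequently.mono fun l hl => norm_pos_iff.mp hl)
    (fun i hi => ?_) ((hL.isBigO_one ℝ).trans_isLittleO ((isLittleO_one_left_iff ℝ).mpr hgrow)))
  by_cases hci : c i = 0
  · simp [hci]
  exact (expMonomial_natCast_isLittleO hq
    ((hmax i hci).lt_of_ne (hinj.ne hi))).const_mul_left (c i)

end Sum

/-- For pairwise distinct pairs `(a i, b i)` with `a i ∈ ℕ`, `b i ∈ ℚ`, a real
`q ≥ 2` and coefficients `c i ∈ ℂ`, with `h λ = ∑ i, c i * λ^(a i) * q^(b i · λ)`: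
the limit `lim_{λ→∞} h λ` exists in `ℂ` iff `c i = 0` for every `i` with `b i > 0`, or
`b i = 0` and `a i > 0`; and in that case the limit equals `∑_{i : (a i, b i) = (0,0)} c i`. -/
theorem stmt_10 (k : ℕ) (a : Fin k → ℕ) (b : Fin k → ℚ)
    (hdist : Function.Injective fun i => (a i, b i))
    (q : ℝ) (hq : 2 ≤ q) (c : Fin k → ℂ) :
    ((∃ L : ℂ, Filter.Tendsto
        (fun l : ℕ => ∑ i, c i * (l : ℂ) ^ (a i) * ((q ^ ((b i : ℝ) * (l : ℝ)) : ℝ) : ℂ))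
        Filter.atTop (nhds L)) ↔
      ∀ i, (0 < b i ∨ (b i = 0 ∧ 0 < a i)) → c i = 0) ∧
    ((∀ i, (0 < b i ∨ (b i = 0 ∧ 0 < a i)) → c i = 0) →
      Filter.Tendsto
        (fun l : ℕ => ∑ i, c i * (l : ℂ) ^ (a i) * ((q ^ ((b i : ℝ) * (l : ℝ)) : ℝ) : ℂ))
        Filter.atTop
        (nhds (∑ i ∈ Finset.univ.filter (fun i => a i = 0 ∧ b i = 0), c i))) := by
  have hq1 : 1 < q := by linarith
  have hsum : (fun l : ℕ => ∑ i, c i * (l : ℂ) ^ (a i) * ((q ^ ((b i : ℝ) * (l : ℝ)) : ℝ) : ℂ)) =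
      fun l : ℕ => ∑ i, c i * (expMonomial q (a i) (b i) l : ℂ) := by
    funext l
    simp [expMonomial, mul_assoc]
  have hgrow (i : Fin k) :
      (0 < b i ∨ (b i = 0 ∧ 0 < a i)) ↔ toLex (0, 0) < toLex ((b i : ℝ), a i) := by
    simp [Prod.Lex.toLex_lt_toLex, eq_comm (a := (0 : ℝ))]
  have hconst : ∑ i with a i = 0 ∧ b i = 0, c i = ∑ i with a i = 0 ∧ (b i : ℝ) = 0, c i := by
    simp
  have hinj : Function.Injective fun i => toLex ((b i : ℝ), a i) := fun i j hij => hdist <| by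
    simp only [toLex_inj, Prod.mk.injEq, Rat.cast_inj] at hij
    exact Prod.ext hij.2 hij.1
  simp only [hsum, hgrow, hconst]
  exact ⟨⟨fun ⟨L, hL⟩ i => eq_zero_of_tendsto_sum_expMonomial hq1 hinj hL,
    fun hc => ⟨_, tendsto_sum_expMonomial hq1 hc⟩⟩, tendsto_sum_expMonomial hq1⟩
end
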